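/- arXiv:2412.02235 — 3 statements merged into one kernel-verified Lean document; each statement's English description precedes it below -/
import Mathlib

section
/- Fix s, q ∈ ℕ and ε ∈ (0,1). Let μ be a distribution on {0,1}^n and let ξ be a detailing of μ with respect to a finite set A, with weight distribution η and type distribution Λ. Suppose η̃ is a distribution on A with dTV(η, η̃) ≤ ε/(3s), and Λ̃ is a finitely supported distribution on [0,1]^A with d_EM^η(Λ, Λ̃) ≤ ε/(3sq). If n ≥ 18q²(s+1)/ε and ξ is (ε/(9(s+1)), q)-good, then dTV(D_sim(η̃, Λ̃), D_test) ≤ ε, where D_test is the canonical (s,q)-distribution for μ. -/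
open scoped BigOperators

namespace HugeObject

noncomputable section

/-- A finitely supported probability distribution on `Ω`, given by its mass function. -/
def IsDist {Ω : Type*} (μ : Ω → ℝ) : Prop :=
  (∀ x, 0 ≤ μ x) ∧ (Function.support μ).Finite ∧ ∑ᶠ x, μ x = 1

/-- Total variation distance between two mass functions. -/
def dTV {Ω : Type*} (μ τ : Ω → ℝ) : ℝ :=
  (1 / 2) * ∑ᶠ x, |μ x - τ x|

/-- `T` is a transfer distribution (coupling) between `μ` and `τ`. -/
def IsCoupling {A B : Type*} (T : A × B → ℝ) (μ : A → ℝ) (τ : B → ℝ) : Prop :=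
  IsDist T ∧ (∀ a, ∑ᶠ b, T (a, b) = μ a) ∧ (∀ b, ∑ᶠ a, T (a, b) = τ b)

/-- Earth Mover distance with respect to a distance function `d`: the infimum, over
all transfer distributions between `μ` and `τ`, of the expected distance. -/
def dEM {Ω : Type*} (d : Ω → Ω → ℝ) (μ τ : Ω → ℝ) : ℝ :=
  sInf {c | ∃ T : Ω × Ω → ℝ, IsCoupling T μ τ ∧ c = ∑ᶠ p : Ω × Ω, T p * d p.1 p.2}

/-- η-weighted ℓ1 distance between vectors. -/
def wl1 {A : Type*} (η : A → ℝ) (x y : A → ℝ) : ℝ := ∑ᶠ a, η a * |x a - y a|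

/-- A distribution on vectors is supported on `[0,1]^A`. -/
def SuppIn01 {A : Type*} (Λ : (A → ℝ) → ℝ) : Prop :=
  ∀ t, Λ t ≠ 0 → ∀ a, t a ∈ Set.Icc (0 : ℝ) 1

/-- Empirical distribution of the tuple `t` (distribution of `t I` for uniform `I`). -/
def empDist {n : ℕ} {α : Type*} (t : Fin n → α) : α → ℝ :=
  fun u => (Nat.card {i : Fin n // t i = u} : ℝ) / n

/-- Normalized Hamming distance on `{0,1}^n`. -/
def normHamming (n : ℕ) (x y : Fin n → Bool) : ℝ :=
  (Nat.card {i : Fin n // x i ≠ y i} : ℝ) / n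

section Detailing

variable {n : ℕ} {A : Type*} [Fintype A]

/-- Weight distribution (second marginal) of a detailing. -/
def weight (ξ : (Fin n → Bool) × A → ℝ) (a : A) : ℝ := ∑ x : Fin n → Bool, ξ (x, a)

/-- `ξ` is a detailing of `μ` with respect to `A`: a distribution on
`{0,1}^n × A` whose first marginal is `μ`. -/
def IsDetailing (ξ : (Fin n → Bool) × A → ℝ) (μ : (Fin n → Bool) → ℝ) : Prop :=
  IsDist ξ ∧ ∀ x, ∑ a : A, ξ (x, a) = μ x

/-- Component distribution `μ_a` of a detailing. -/
def component (ξ : (Fin n → Bool) × A → ℝ) (a : A) : (Fin n → Bool) → ℝ :=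
  fun x => ξ (x, a) / weight ξ a

/-- The type of index `i`: `t_i a = Pr_{x ~ μ_a} [x i = 1]` (0 when the weight vanishes). -/
def typeOf (ξ : (Fin n → Bool) × A → ℝ) (i : Fin n) : A → ℝ :=
  fun a => (∑ x : Fin n → Bool, if x i then ξ (x, a) else 0) / weight ξ a

/-- The type distribution of a detailing: distribution of `typeOf ξ I` for uniform `I`. -/
def typeDist (ξ : (Fin n → Bool) × A → ℝ) : (A → ℝ) → ℝ :=
  empDist (fun i : Fin n => typeOf ξ i)

/-- The index of a detailing. -/
def ind (ξ : (Fin n → Bool) × A → ℝ) : ℝ :=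
  (∑ i : Fin n, ∑ a : A, weight ξ a * typeOf ξ i a ^ 2) / n

end Detailing

section Goodness

variable {n q : ℕ}

/-- Marginal of coordinate `j`. -/
def margAt (ν : (Fin n → Bool) → ℝ) (j : Fin n) : Bool → ℝ :=
  fun b => ∑ x : Fin n → Bool, if x j = b then ν x else 0

/-- Joint distribution of the coordinates listed in `J`. -/
def jointAt (ν : (Fin n → Bool) → ℝ) (J : Fin q → Fin n) : (Fin q → Bool) → ℝ :=
  fun y => ∑ x : Fin n → Bool, if ∀ ℓ, x (J ℓ) = y ℓ then ν x else 0

/-- The tuple `J` is ε-independent with respect to `ν`. -/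
def EpsIndep (ε : ℝ) (ν : (Fin n → Bool) → ℝ) (J : Fin q → Fin n) : Prop :=
  dTV (jointAt ν J) (fun y => ∏ ℓ, margAt ν (J ℓ) (y ℓ)) ≤ ε

/-- A distribution on `{0,1}^n` is (ε,q)-good. -/
def IsGoodDist (ε : ℝ) (q : ℕ) (ν : (Fin n → Bool) → ℝ) : Prop :=
  (1 - ε) * (n : ℝ) ^ q ≤ (Nat.card {J : Fin q → Fin n // EpsIndep ε ν J} : ℝ)

/-- A detailing is (ε,q)-good. -/
def IsGoodDetailing {A : Type*} [Fintype A] (ε : ℝ) (q : ℕ)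
    (ξ : (Fin n → Bool) × A → ℝ) : Prop :=
  ∃ J : Finset A, 1 - ε ≤ ∑ a ∈ J, weight ξ a ∧ ∀ a ∈ J, IsGoodDist ε q (component ξ a)

end Goodness

/-- The simulated distribution `D_sim(η, Λ)` on `{0,1}^{s×q}`. -/
def Dsim {A : Type*} [Fintype A] (s q : ℕ) (η : A → ℝ) (Λ : (A → ℝ) → ℝ) :
    (Fin s → Fin q → Bool) → ℝ :=
  fun M => ∑ᶠ T : Fin q → (A → ℝ),
    (∏ j, Λ (T j)) * ∑ a : Fin s → A, (∏ i, η (a i)) *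
      ∏ i : Fin s, ∏ j : Fin q, if M i j then T j (a i) else 1 - T j (a i)

/-- The canonical (s,q) test distribution `D_test` for `μ`. -/
def Dtest (s q n : ℕ) (μ : (Fin n → Bool) → ℝ) : (Fin s → Fin q → Bool) → ℝ :=
  fun M => (∑ J : Fin q → Fin n, ∑ x : Fin s → Fin n → Bool,
    (∏ i, μ (x i)) * (if ∀ i ℓ, x i (J ℓ) = M i ℓ then (1 : ℝ) else 0)) / (n : ℝ) ^ q

/-- Flat refinement of the detailing `ξ` with respect to `η` on `A × B`. -/
def flatRef {n : ℕ} {A B : Type*} [Fintype A] (ξ : (Fin n → Bool) × A → ℝ)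
    (η : A × B → ℝ) : (Fin n → Bool) × (A × B) → ℝ :=
  fun p => η p.2 * component ξ p.2.1 p.1

/-- One-step transition probability of the Change-types construction:
probability of outputting `yi` at a coordinate with source value `xi`,
source type value `h1` and target type value `h2`. -/
def flipStep (h1 h2 : ℝ) (xi yi : Bool) : ℝ :=
  if xi then (if yi then 1 - max 0 ((h1 - h2) / h1) else max 0 ((h1 - h2) / h1))
  else (if yi then max 0 ((h2 - h1) / (1 - h1)) else 1 - max 0 ((h2 - h1) / (1 - h1)))

/-- The output distribution `Ξ` of the Change-types construction. -/
def changeTypes {n : ℕ} {A B : Type*} [Fintype A] (ξ : (Fin n → Bool) × A → ℝ)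
    (η : A × B → ℝ) (H : Fin n → (A × B → ℝ) × (A × B → ℝ)) :
    (Fin n → Bool) × (Fin n → Bool) × (A × B) → ℝ :=
  fun p => η p.2.2 * component ξ p.2.2.1 p.1 *
    ∏ i, flipStep ((H i).1 p.2.2) ((H i).2 p.2.2) (p.1 i) (p.2.1 i)

/-- Pushforward of a mass function along `f`. -/
def push {α β : Type*} (f : α → β) (μ : α → ℝ) : β → ℝ :=
  fun b => ∑ᶠ a ∈ {a | f a = b}, μ a

/-- Rounding to the nearest integer multiple of `ρ`. -/
def roundMul (ρ x : ℝ) : ℝ := ρ * round (x / ρ)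

/-- Adjustment of `η` to `ν`. -/
def adjust {A B : Type*} [Fintype B] (ν : A → ℝ) (η : A × B → ℝ) : A × B → ℝ :=
  fun p => ν p.1 * (η p / ∑ b : B, η (p.1, b))

end
end HugeObject

open HugeObject

noncomputable section Aux
namespace HOAux
open HugeObject Finset
open scoped Classical

variable {Ω : Type*} [Fintype Ω]

/-- Bernoulli mass function. -/
def bern (p : ℝ) : Bool → ℝ := fun b => if b then p else 1 - p

lemma sum_bern (p : ℝ) : ∑ b : Bool, bern p b = 1 := by
  simp [bern]

lemma bern_nonneg {p : ℝ} (hp : p ∈ Set.Icc (0:ℝ) 1) (b : Bool) : 0 ≤ bern p b := by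
  cases b <;> simp [bern] <;> [linarith [hp.2]; exact hp.1]

lemma dTV_fin (f g : Ω → ℝ) : dTV f g = 2⁻¹ * ∑ x, |f x - g x| := by
  rw [dTV, finsum_eq_sum_of_fintype]; norm_num

lemma dTV_nonneg (f g : Ω → ℝ) : 0 ≤ dTV f g := by
  rw [dTV_fin]
  have : (0:ℝ) ≤ ∑ x, |f x - g x| := Finset.sum_nonneg fun x _ => abs_nonneg _
  linarith

lemma dTV_tri (f g h : Ω → ℝ) : dTV f h ≤ dTV f g + dTV g h := by
  rw [dTV_fin, dTV_fin, dTV_fin, ← mul_add, ← Finset.sum_add_distrib]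
  have : ∑ x, |f x - h x| ≤ ∑ x, (|f x - g x| + |g x - h x|) :=
    Finset.sum_le_sum fun x _ => abs_sub_le _ _ _
  linarith

lemma dTV_le_one {f g : Ω → ℝ} (hf0 : ∀ x, 0 ≤ f x) (hg0 : ∀ x, 0 ≤ g x)
    (hf1 : ∑ x, f x = 1) (hg1 : ∑ x, g x = 1) : dTV f g ≤ 1 := by
  rw [dTV_fin]
  have : ∑ x, |f x - g x| ≤ ∑ x, (f x + g x) :=
    Finset.sum_le_sum fun x _ => by
      have := hf0 x; have := hg0 x
      rw [abs_sub_le_iff]; constructor <;> linarith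
  rw [Finset.sum_add_distrib, hf1, hg1] at this
  linarith

lemma dTV_bern (p p' : ℝ) : dTV (bern p) (bern p') = |p - p'| := by
  rw [dTV_fin]
  simp [bern, Fintype.sum_bool]
  rw [abs_sub_comm p' p]
  ring

/-- TV distance between mixtures is at most the mixture of TV distances. -/
lemma dTV_mixture {ι : Type*} (S : Finset ι) (w : ι → ℝ) (hw : ∀ c ∈ S, 0 ≤ w c)
    (f g : ι → Ω → ℝ) :
    dTV (fun M => ∑ c ∈ S, w c * f c M) (fun M => ∑ c ∈ S, w c * g c M)
      ≤ ∑ c ∈ S, w c * dTV (f c) (g c) := by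
  rw [dTV_fin]
  have h1 : ∀ M, |∑ c ∈ S, w c * f c M - ∑ c ∈ S, w c * g c M|
      ≤ ∑ c ∈ S, w c * |f c M - g c M| := by
    intro M
    rw [← Finset.sum_sub_distrib]
    refine (Finset.abs_sum_le_sum_abs _ _).trans (Finset.sum_le_sum fun c hc => ?_)
    rw [← mul_sub, abs_mul, abs_of_nonneg (hw c hc)]
  calc 2⁻¹ * ∑ M, |∑ c ∈ S, w c * f c M - ∑ c ∈ S, w c * g c M|
      ≤ 2⁻¹ * ∑ M, ∑ c ∈ S, w c * |f c M - g c M| := by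
        have := Finset.sum_le_sum (fun M (_ : M ∈ Finset.univ) => h1 M)
        linarith
    _ = ∑ c ∈ S, w c * (2⁻¹ * ∑ M, |f c M - g c M|) := by
        rw [Finset.sum_comm, Finset.mul_sum]
        refine Finset.sum_congr rfl fun c _ => ?_
        simp only [Finset.mul_sum]
        exact Finset.sum_congr rfl fun x _ => by ring
    _ = ∑ c ∈ S, w c * dTV (f c) (g c) := by
        exact Finset.sum_congr rfl fun c _ => by rw [dTV_fin]

end HOAux
end Aux
noncomputable section Aux2
namespace HOAux
open HugeObject Finset
variable {Ω : Type*} [Fintype Ω]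

lemma sum_prod_eval {ι : Type*} [Fintype ι] [DecidableEq ι] (h : ι → Ω → ℝ) :
    ∑ z : ι → Ω, ∏ i, h i (z i) = ∏ i, ∑ x, h i x := by
  have := Finset.prod_univ_sum (fun _ : ι => (Finset.univ : Finset Ω)) h
  rw [Fintype.piFinset_univ] at this
  exact this.symm

lemma dTV_pi : ∀ {s : ℕ} (f g : Fin s → Ω → ℝ),
    (∀ i x, 0 ≤ f i x) → (∀ i, ∑ x, f i x = 1) →
    (∀ i x, 0 ≤ g i x) → (∀ i, ∑ x, g i x = 1) →
    dTV (fun y : Fin s → Ω => ∏ i, f i (y i)) (fun y : Fin s → Ω => ∏ i, g i (y i))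
      ≤ ∑ i, dTV (f i) (g i) := by
  intro s
  induction s with
  | zero =>
      intro f g _ _ _ _
      rw [dTV_fin]
      simp
  | succ s ih =>
      intro f g hf0 hf1 hg0 hg1
      have e := Fin.consEquiv (fun _ : Fin (s+1) => Ω)
      have hsum : ∑ y : Fin (s+1) → Ω, |(∏ i, f i (y i)) - ∏ i, g i (y i)|
          = ∑ p : Ω × (Fin s → Ω),
              |f 0 p.1 * ∏ i, f i.succ (p.2 i) - g 0 p.1 * ∏ i, g i.succ (p.2 i)| := by
        rw [← Equiv.sum_comp (Fin.consEquiv (fun _ : Fin (s+1) => Ω))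
          (fun y => |(∏ i, f i (y i)) - ∏ i, g i (y i)|)]
        refine Finset.sum_congr rfl fun p _ => ?_
        simp [Fin.prod_univ_succ, Fin.cons_zero, Fin.cons_succ]
      have hPf0 : ∀ z : Fin s → Ω, (0:ℝ) ≤ ∏ i, f i.succ (z i) :=
        fun z => Finset.prod_nonneg fun i _ => hf0 _ _
      have hPf1 : ∑ z : Fin s → Ω, ∏ i, f i.succ (z i) = 1 := by
        rw [sum_prod_eval]
        exact Finset.prod_eq_one fun i _ => hf1 _
      have hbound : ∑ p : Ω × (Fin s → Ω),
            |f 0 p.1 * ∏ i, f i.succ (p.2 i) - g 0 p.1 * ∏ i, g i.succ (p.2 i)|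
          ≤ 2 * dTV (f 0) (g 0)
            + ∑ z : Fin s → Ω, |(∏ i, f i.succ (z i)) - ∏ i, g i.succ (z i)| := by
        rw [Fintype.sum_prod_type]
        have step : ∀ (a : Ω) (z : Fin s → Ω),
            |f 0 a * ∏ i, f i.succ (z i) - g 0 a * ∏ i, g i.succ (z i)|
            ≤ |f 0 a - g 0 a| * ∏ i, f i.succ (z i)
              + g 0 a * |(∏ i, f i.succ (z i)) - ∏ i, g i.succ (z i)| := by
          intro a z
          have h1 : f 0 a * ∏ i, f i.succ (z i) - g 0 a * ∏ i, g i.succ (z i)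
              = (f 0 a - g 0 a) * (∏ i, f i.succ (z i))
                + g 0 a * ((∏ i, f i.succ (z i)) - ∏ i, g i.succ (z i)) := by ring
          rw [h1]
          refine (abs_add_le _ _).trans ?_
          rw [abs_mul, abs_mul, abs_of_nonneg (hPf0 z), abs_of_nonneg (hg0 0 a)]
        calc ∑ a : Ω, ∑ z : Fin s → Ω,
              |f 0 a * ∏ i, f i.succ (z i) - g 0 a * ∏ i, g i.succ (z i)|
            ≤ ∑ a : Ω, ∑ z : Fin s → Ω,
              (|f 0 a - g 0 a| * ∏ i, f i.succ (z i)
                + g 0 a * |(∏ i, f i.succ (z i)) - ∏ i, g i.succ (z i)|) :=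
              Finset.sum_le_sum fun a _ => Finset.sum_le_sum fun z _ => step a z
          _ = (∑ a : Ω, |f 0 a - g 0 a|) * 1
              + 1 * ∑ z : Fin s → Ω, |(∏ i, f i.succ (z i)) - ∏ i, g i.succ (z i)| := by
              simp only [Finset.sum_add_distrib, ← Finset.sum_mul, ← Finset.mul_sum]
              rw [hPf1, hg1 0]
          _ = 2 * dTV (f 0) (g 0)
              + ∑ z : Fin s → Ω, |(∏ i, f i.succ (z i)) - ∏ i, g i.succ (z i)| := by
              rw [dTV_fin]; ring
      have ihtail := ih (fun i => f i.succ) (fun i => g i.succ)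
        (fun i x => hf0 _ _) (fun i => hf1 _) (fun i x => hg0 _ _) (fun i => hg1 _)
      rw [dTV_fin] at ihtail ⊢
      rw [Fin.sum_univ_succ]
      rw [hsum] at *
      calc 2⁻¹ * ∑ p : Ω × (Fin s → Ω),
            |f 0 p.1 * ∏ i, f i.succ (p.2 i) - g 0 p.1 * ∏ i, g i.succ (p.2 i)|
          ≤ 2⁻¹ * (2 * dTV (f 0) (g 0)
            + ∑ z : Fin s → Ω, |(∏ i, f i.succ (z i)) - ∏ i, g i.succ (z i)|) := by
            linarith
        _ ≤ dTV (f 0) (g 0) + ∑ i : Fin s, dTV (f i.succ) (g i.succ) := by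
            linarith
lemma pi_marginal {β γ : Type*} [DecidableEq γ] {q : ℕ} (P : Finset β) (w : β → ℝ)
    (φ : β → γ) (Q : Finset γ) (hQ : ∀ b ∈ P, φ b ∈ Q) (G : (Fin q → γ) → ℝ) :
    ∑ TP ∈ Fintype.piFinset (fun _ : Fin q => P), (∏ j, w (TP j)) * G (φ ∘ TP)
      = ∑ T ∈ Fintype.piFinset (fun _ : Fin q => Q),
          (∏ j, ∑ b ∈ P.filter (fun b => φ b = T j), w b) * G T := by
  classical
  have hmaps : ∀ TP ∈ Fintype.piFinset (fun _ : Fin q => P),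
      (φ ∘ TP) ∈ Fintype.piFinset (fun _ : Fin q => Q) := by
    intro TP hTP
    rw [Fintype.mem_piFinset] at hTP ⊢
    exact fun j => hQ _ (hTP j)
  rw [← Finset.sum_fiberwise_of_maps_to hmaps
    (fun TP => (∏ j, w (TP j)) * G (φ ∘ TP))]
  refine Finset.sum_congr rfl fun T _ => ?_
  have hfib : ∀ TP ∈ (Fintype.piFinset (fun _ : Fin q => P)).filter
      (fun TP => φ ∘ TP = T), G (φ ∘ TP) = G T := by
    intro TP hTP
    rw [Finset.mem_filter] at hTP
    rw [hTP.2]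
  calc ∑ TP ∈ (Fintype.piFinset (fun _ : Fin q => P)).filter (fun TP => φ ∘ TP = T),
        (∏ j, w (TP j)) * G (φ ∘ TP)
      = ∑ TP ∈ (Fintype.piFinset (fun _ : Fin q => P)).filter (fun TP => φ ∘ TP = T),
        (∏ j, w (TP j)) * G T :=
      Finset.sum_congr rfl fun TP hTP => by rw [hfib TP hTP]
    _ = (∑ TP ∈ (Fintype.piFinset (fun _ : Fin q => P)).filter (fun TP => φ ∘ TP = T),
        ∏ j, w (TP j)) * G T := by rw [Finset.sum_mul]
    _ = (∏ j, ∑ b ∈ P.filter (fun b => φ b = T j), w b) * G T := by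
      congr 1
      have hset : (Fintype.piFinset (fun _ : Fin q => P)).filter (fun TP => φ ∘ TP = T)
          = Fintype.piFinset (fun j => P.filter (fun b => φ b = T j)) := by
        ext TP
        simp only [Finset.mem_filter, Fintype.mem_piFinset, funext_iff, Function.comp_apply]
        exact ⟨fun ⟨h1, h2⟩ j => ⟨h1 j, h2 j⟩, fun h => ⟨fun j => (h j).1, fun j => (h j).2⟩⟩
      rw [hset, ← Finset.prod_univ_sum]
open scoped Classical in
lemma isDist_sum_eq_one {Ω : Type*} [Fintype Ω] {f : Ω → ℝ} (hf : IsDist f) :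
    ∑ x, f x = 1 := by rw [← finsum_eq_sum_of_fintype]; exact hf.2.2

lemma dTV_comm {Ω : Type*} (f g : Ω → ℝ) : dTV f g = dTV g f := by
  unfold dTV
  congr 1
  exact finsum_congr fun x => abs_sub_comm _ _

section DetailFacts
variable {n : ℕ} {A : Type*} [Fintype A] {ξ : (Fin n → Bool) × A → ℝ}
  {μ : (Fin n → Bool) → ℝ}

lemma weight_nonneg (hξ : IsDetailing ξ μ) (a : A) : 0 ≤ weight ξ a :=
  Finset.sum_nonneg fun x _ => hξ.1.1 _

lemma sum_weight (hμ : IsDist μ) (hξ : IsDetailing ξ μ) : ∑ a : A, weight ξ a = 1 := by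
  unfold weight
  rw [Finset.sum_comm]
  calc ∑ x : Fin n → Bool, ∑ a : A, ξ (x, a) = ∑ x : Fin n → Bool, μ x :=
        Finset.sum_congr rfl fun x _ => hξ.2 x
    _ = 1 := isDist_sum_eq_one hμ

lemma xi_eq_zero (hξ : IsDetailing ξ μ) {a : A} (ha : weight ξ a = 0)
    (x : Fin n → Bool) : ξ (x, a) = 0 := by
  have := (Finset.sum_eq_zero_iff_of_nonneg (fun y (_ : y ∈ Finset.univ) => hξ.1.1 (y, a))).1 ha
  exact this x (Finset.mem_univ x)

lemma component_nonneg (hξ : IsDetailing ξ μ) (a : A) (x : Fin n → Bool) :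
    0 ≤ component ξ a x :=
  div_nonneg (hξ.1.1 _) (weight_nonneg hξ a)

lemma sum_component (hξ : IsDetailing ξ μ) {a : A} (ha : weight ξ a ≠ 0) :
    ∑ x, component ξ a x = 1 := by
  unfold component
  rw [← Finset.sum_div]
  exact div_self ha

lemma mu_eq_sum (hξ : IsDetailing ξ μ) (x : Fin n → Bool) :
    μ x = ∑ a : A, weight ξ a * component ξ a x := by
  rw [← hξ.2 x]
  refine Finset.sum_congr rfl fun a _ => ?_
  by_cases ha : weight ξ a = 0
  · rw [xi_eq_zero hξ ha, ha, zero_mul]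
  · unfold component
    field_simp

lemma typeOf_mem_Icc (hξ : IsDetailing ξ μ) (i : Fin n) (a : A) :
    typeOf ξ i a ∈ Set.Icc (0:ℝ) 1 := by
  unfold typeOf
  by_cases ha : weight ξ a = 0
  · rw [ha, div_zero]; exact ⟨le_refl _, zero_le_one⟩
  · have hw : 0 < weight ξ a := lt_of_le_of_ne (weight_nonneg hξ a) (Ne.symm ha)
    have h0 : 0 ≤ ∑ x : Fin n → Bool, if x i then ξ (x, a) else 0 :=
      Finset.sum_nonneg fun x _ => by split <;> [exact hξ.1.1 _; exact le_refl _]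
    have h1 : (∑ x : Fin n → Bool, if x i then ξ (x, a) else 0) ≤ weight ξ a :=
      Finset.sum_le_sum fun x _ => by split <;> [exact le_refl _; exact hξ.1.1 _]
    exact ⟨div_nonneg h0 hw.le, (div_le_one hw).2 h1⟩

lemma margAt_comp_true (hξ : IsDetailing ξ μ) (a : A) (i : Fin n) :
    margAt (component ξ a) i true = typeOf ξ i a := by
  unfold margAt typeOf component
  calc ∑ x : Fin n → Bool, (if x i = true then ξ (x, a) / weight ξ a else 0)
      = ∑ x : Fin n → Bool, (if x i = true then ξ (x, a) else 0) / weight ξ a := by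
        refine Finset.sum_congr rfl fun x _ => ?_
        split
        · rfl
        · rw [zero_div]
    _ = (∑ x : Fin n → Bool, if x i = true then ξ (x, a) else 0) / weight ξ a := by
        rw [Finset.sum_div]

lemma margAt_false {ν : (Fin n → Bool) → ℝ} (j : Fin n) :
    margAt ν j false = (∑ x, ν x) - margAt ν j true := by
  unfold margAt
  rw [← Finset.sum_sub_distrib]
  refine Finset.sum_congr rfl fun x _ => ?_
  by_cases h : x j <;> simp [h]

lemma jointAt_nonneg {q : ℕ} {ν : (Fin n → Bool) → ℝ} (hν : ∀ x, 0 ≤ ν x)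
    (J : Fin q → Fin n) (y : Fin q → Bool) : 0 ≤ jointAt ν J y :=
  Finset.sum_nonneg fun x _ => by split <;> [exact hν _; exact le_refl _]

open scoped Classical in
lemma sum_jointAt {q : ℕ} (ν : (Fin n → Bool) → ℝ) (J : Fin q → Fin n) :
    ∑ y : Fin q → Bool, jointAt ν J y = ∑ x, ν x := by
  unfold jointAt
  rw [Finset.sum_comm]
  refine Finset.sum_congr rfl fun x _ => ?_
  have : ∀ y : Fin q → Bool, (∀ ℓ, x (J ℓ) = y ℓ) ↔ (fun ℓ => x (J ℓ)) = y := by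
    intro y; rw [funext_iff]
  calc ∑ y : Fin q → Bool, (if ∀ ℓ, x (J ℓ) = y ℓ then ν x else 0)
      = ∑ y : Fin q → Bool, (if (fun ℓ => x (J ℓ)) = y then ν x else 0) :=
        Finset.sum_congr rfl fun y _ => by rw [if_congr (this y) rfl rfl]
    _ = ν x := by rw [Finset.sum_ite_eq Finset.univ]; simp

lemma jointAt_mix {q : ℕ} (hξ : IsDetailing ξ μ) (J : Fin q → Fin n) (y : Fin q → Bool) :
    jointAt μ J y = ∑ a : A, weight ξ a * jointAt (component ξ a) J y := by
  unfold jointAt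
  have hstep : ∀ a : A, weight ξ a * ∑ x : Fin n → Bool,
      (if ∀ ℓ, x (J ℓ) = y ℓ then component ξ a x else 0)
      = ∑ x : Fin n → Bool, (if ∀ ℓ, x (J ℓ) = y ℓ then weight ξ a * component ξ a x else 0) := by
    intro a
    rw [Finset.mul_sum]
    refine Finset.sum_congr rfl fun x _ => ?_
    split
    · rfl
    · rw [mul_zero]
  simp only [hstep]
  rw [Finset.sum_comm]
  refine Finset.sum_congr rfl fun x _ => ?_
  by_cases h : ∀ ℓ, x (J ℓ) = y ℓ
  · simp only [if_pos h]
    rw [mu_eq_sum hξ x]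
  · simp only [if_neg h, Finset.sum_const_zero]

end DetailFacts
section Rep
open scoped Classical

variable {A : Type*} [Fintype A]

/-- Inner simulated mass for a fixed tuple of type vectors. -/
def gfun (s q : ℕ) (η : A → ℝ) (T : Fin q → (A → ℝ)) (M : Fin s → Fin q → Bool) : ℝ :=
  ∑ a : Fin s → A, (∏ i, η (a i)) * ∏ i, ∏ j, bern (T j (a i)) (M i j)

lemma Dsim_eq_sum (s q : ℕ) (η : A → ℝ) (Λ : (A → ℝ) → ℝ) (R : Finset (A → ℝ))
    (hR : Function.support Λ ⊆ ↑R) (M : Fin s → Fin q → Bool) :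
    Dsim s q η Λ M = ∑ T ∈ Fintype.piFinset (fun _ : Fin q => R),
      (∏ j, Λ (T j)) * gfun s q η T M := by
  refine finsum_eq_finset_sum_of_support_subset _ fun T hT => ?_
  have h1 : (∏ j, Λ (T j)) ≠ 0 := left_ne_zero_of_mul hT
  rw [Finset.mem_coe, Fintype.mem_piFinset]
  intro j
  exact hR (Finset.prod_ne_zero_iff.1 h1 j (Finset.mem_univ j))

/-- Row distribution of the simulated matrix. -/
def rowD (q : ℕ) (η : A → ℝ) (T : Fin q → (A → ℝ)) (r : Fin q → Bool) : ℝ :=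
  ∑ v : A, η v * ∏ j, bern (T j v) (r j)

lemma gfun_eq_prod (s q : ℕ) (η : A → ℝ) (T : Fin q → (A → ℝ)) (M : Fin s → Fin q → Bool) :
    gfun s q η T M = ∏ i, rowD q η T (M i) := by
  unfold gfun rowD
  have := Finset.prod_univ_sum (fun _ : Fin s => (Finset.univ : Finset A))
    (fun i v => η v * ∏ j, bern (T j v) (M i j))
  rw [Fintype.piFinset_univ] at this
  rw [this]
  exact Finset.sum_congr rfl fun a _ => by rw [Finset.prod_mul_distrib]

lemma rowD_nonneg {q : ℕ} {η : A → ℝ} {T : Fin q → (A → ℝ)} (hη : ∀ v, 0 ≤ η v)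
    (hT : ∀ j v, T j v ∈ Set.Icc (0:ℝ) 1) (r : Fin q → Bool) : 0 ≤ rowD q η T r :=
  Finset.sum_nonneg fun v _ => mul_nonneg (hη v)
    (Finset.prod_nonneg fun j _ => bern_nonneg (hT j v) _)

lemma sum_rowD {q : ℕ} {η : A → ℝ} (T : Fin q → (A → ℝ)) (hη1 : ∑ v : A, η v = 1) :
    ∑ r : Fin q → Bool, rowD q η T r = 1 := by
  unfold rowD
  rw [Finset.sum_comm]
  calc ∑ v : A, ∑ r : Fin q → Bool, η v * ∏ j, bern (T j v) (r j)
      = ∑ v : A, η v := by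
        refine Finset.sum_congr rfl fun v _ => ?_
        rw [← Finset.mul_sum, sum_prod_eval (fun j b => bern (T j v) b)]
        rw [Finset.prod_congr rfl fun j _ => sum_bern (T j v), Finset.prod_const_one, mul_one]
    _ = 1 := hη1

lemma dTV_rowD_eta {q : ℕ} {η η₂ : A → ℝ} {T : Fin q → (A → ℝ)}
    (hT : ∀ j v, T j v ∈ Set.Icc (0:ℝ) 1) :
    dTV (rowD q η T) (rowD q η₂ T) ≤ dTV η η₂ := by
  rw [dTV_fin, dTV_fin]
  have key : ∀ r : Fin q → Bool, |rowD q η T r - rowD q η₂ T r|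
      ≤ ∑ v : A, |η v - η₂ v| * ∏ j, bern (T j v) (r j) := by
    intro r
    unfold rowD
    rw [← Finset.sum_sub_distrib]
    refine (Finset.abs_sum_le_sum_abs _ _).trans (Finset.sum_le_sum fun v _ => ?_)
    rw [← sub_mul, abs_mul, abs_of_nonneg (Finset.prod_nonneg fun j _ => bern_nonneg (hT j v) _)]
  have h2 : ∑ r : Fin q → Bool, ∑ v : A, |η v - η₂ v| * ∏ j, bern (T j v) (r j)
      = ∑ v : A, |η v - η₂ v| := by
    rw [Finset.sum_comm]
    refine Finset.sum_congr rfl fun v _ => ?_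
    rw [← Finset.mul_sum, sum_prod_eval (fun j b => bern (T j v) b)]
    rw [Finset.prod_congr rfl fun j _ => sum_bern (T j v), Finset.prod_const_one, mul_one]
  have h3 : ∑ r : Fin q → Bool, |rowD q η T r - rowD q η₂ T r|
      ≤ ∑ v : A, |η v - η₂ v| := by
    rw [← h2]
    exact Finset.sum_le_sum fun r _ => key r
  linarith

lemma dTV_rowD_T {q : ℕ} {η : A → ℝ} {T T' : Fin q → (A → ℝ)} (hη : ∀ v, 0 ≤ η v)
    (hT : ∀ j v, T j v ∈ Set.Icc (0:ℝ) 1) (hT' : ∀ j v, T' j v ∈ Set.Icc (0:ℝ) 1) :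
    dTV (rowD q η T) (rowD q η T') ≤ ∑ j, ∑ v : A, η v * |T j v - T' j v| := by
  have h1 : dTV (rowD q η T) (rowD q η T')
      ≤ ∑ v : A, η v * dTV (fun r : Fin q → Bool => ∏ j, bern (T j v) (r j))
          (fun r : Fin q → Bool => ∏ j, bern (T' j v) (r j)) :=
    dTV_mixture (Finset.univ : Finset A) η (fun v _ => hη v)
      (fun v (r : Fin q → Bool) => ∏ j, bern (T j v) (r j))
      (fun v (r : Fin q → Bool) => ∏ j, bern (T' j v) (r j))
  have h2 : ∀ v : A, dTV (fun r : Fin q → Bool => ∏ j, bern (T j v) (r j))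
      (fun r : Fin q → Bool => ∏ j, bern (T' j v) (r j)) ≤ ∑ j, |T j v - T' j v| := by
    intro v
    have hd := dTV_pi (fun j => bern (T j v)) (fun j => bern (T' j v))
      (fun j x => bern_nonneg (hT j v) x) (fun j => sum_bern _)
      (fun j x => bern_nonneg (hT' j v) x) (fun j => sum_bern _)
    have heq : ∑ j, dTV (bern (T j v)) (bern (T' j v)) = ∑ j, |T j v - T' j v| :=
      Finset.sum_congr rfl fun j _ => dTV_bern _ _
    rw [heq] at hd
    exact hd
  have h3 : ∑ v : A, η v * dTV (fun r : Fin q → Bool => ∏ j, bern (T j v) (r j))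
      (fun r : Fin q → Bool => ∏ j, bern (T' j v) (r j)) ≤ ∑ v : A, η v * ∑ j, |T j v - T' j v| :=
    Finset.sum_le_sum fun v _ => mul_le_mul_of_nonneg_left (h2 v) (hη v)
  have h4 : ∑ v : A, η v * ∑ j, |T j v - T' j v| = ∑ j, ∑ v : A, η v * |T j v - T' j v| := by
    rw [Finset.sum_comm]
    exact Finset.sum_congr rfl fun v _ => by rw [Finset.mul_sum]
  linarith

lemma prod_ite_all {ι : Type*} [Fintype ι] (p : ι → Prop) [DecidablePred p] (f : ι → ℝ) :
    ∏ i, (if p i then f i else 0) = if (∀ i, p i) then ∏ i, f i else 0 := by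
  by_cases h : ∀ i, p i
  · rw [if_pos h]
    exact Finset.prod_congr rfl fun i _ => if_pos (h i)
  · rw [if_neg h]
    push_neg at h
    obtain ⟨i, hi⟩ := h
    exact Finset.prod_eq_zero (Finset.mem_univ i) (if_neg hi)

lemma sum_pi_weight_eval {β : Type*} {q : ℕ} (P : Finset β) (w k : β → ℝ)
    (hw : ∑ p ∈ P, w p = 1) (ℓ : Fin q) :
    ∑ TP ∈ Fintype.piFinset (fun _ : Fin q => P), (∏ j, w (TP j)) * k (TP ℓ)
      = ∑ p ∈ P, w p * k p := by
  classical
  have hrw : ∀ TP : Fin q → β, (∏ j, w (TP j)) * k (TP ℓ)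
      = ∏ j, (if j = ℓ then w (TP j) * k (TP j) else w (TP j)) := by
    intro TP
    have h2 : ∏ j, (if j = ℓ then w (TP j) * k (TP j) else w (TP j))
        = (w (TP ℓ) * k (TP ℓ)) * ∏ j ∈ Finset.univ.erase ℓ, w (TP j) := by
      rw [← Finset.mul_prod_erase Finset.univ _ (Finset.mem_univ ℓ), if_pos rfl,
          Finset.prod_congr rfl fun j hj => if_neg (Finset.ne_of_mem_erase hj)]
    have h3 : ∏ j, w (TP j) = w (TP ℓ) * ∏ j ∈ Finset.univ.erase ℓ, w (TP j) :=
      (Finset.mul_prod_erase Finset.univ _ (Finset.mem_univ ℓ)).symm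
    rw [h2, h3]
    ring
  rw [Finset.sum_congr rfl fun TP _ => hrw TP,
    ← Finset.prod_univ_sum (fun _ : Fin q => P)
      (fun j b => if j = ℓ then w b * k b else w b)]
  rw [Finset.prod_eq_single_of_mem ℓ (Finset.mem_univ ℓ)
    (fun j _ hj => by
      calc ∑ b ∈ P, (if j = ℓ then w b * k b else w b) = ∑ b ∈ P, w b :=
          Finset.sum_congr rfl fun b _ => if_neg hj
        _ = 1 := hw)]
  simp

end Rep
section Rep2
open scoped Classical

variable {A : Type*} [Fintype A]

lemma Dtest_eq (s q n : ℕ) (μ : (Fin n → Bool) → ℝ) (M : Fin s → Fin q → Bool) :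
    Dtest s q n μ M = ∑ J : Fin q → Fin n,
      (∏ _j : Fin q, (1 / (n:ℝ))) * ∏ i, jointAt μ J (M i) := by
  have hinner : ∀ J : Fin q → Fin n,
      (∑ x : Fin s → Fin n → Bool, (∏ i, μ (x i)) *
        (if ∀ i ℓ, x i (J ℓ) = M i ℓ then (1:ℝ) else 0)) = ∏ i, jointAt μ J (M i) := by
    intro J
    unfold jointAt
    have := Finset.prod_univ_sum (fun _ : Fin s => (Finset.univ : Finset (Fin n → Bool)))
      (fun i xi => if ∀ ℓ, xi (J ℓ) = M i ℓ then μ xi else 0)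
    rw [Fintype.piFinset_univ] at this
    rw [this]
    refine Finset.sum_congr rfl fun x _ => ?_
    rw [prod_ite_all (fun i => ∀ ℓ, x i (J ℓ) = M i ℓ) (fun i => μ (x i))]
    by_cases h : ∀ i ℓ, x i (J ℓ) = M i ℓ
    · rw [if_pos h, if_pos h, mul_one]
    · rw [if_neg h, if_neg h, mul_zero]
  unfold Dtest
  rw [Finset.sum_congr rfl fun J _ => hinner J, Finset.sum_div]
  refine Finset.sum_congr rfl fun J _ => ?_
  rw [Finset.prod_const, Finset.card_univ, Fintype.card_fin, div_pow, one_pow,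
    div_eq_mul_inv, div_eq_mul_inv]
  ring

lemma typeDist_eq_card {n : ℕ} (ξ : (Fin n → Bool) × A → ℝ) (t : A → ℝ) :
    typeDist ξ t = ((Finset.univ.filter (fun i : Fin n => typeOf ξ i = t)).card : ℝ) / n := by
  unfold typeDist empDist
  rw [Nat.card_eq_fintype_card]
  congr 2
  convert Fintype.card_subtype (fun i : Fin n => typeOf ξ i = t)

lemma typeDist_support {n : ℕ} (ξ : (Fin n → Bool) × A → ℝ) {t : A → ℝ}
    (h : typeDist ξ t ≠ 0) : ∃ i, typeOf ξ i = t := by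
  rw [typeDist_eq_card] at h
  have : (Finset.univ.filter (fun i : Fin n => typeOf ξ i = t)).card ≠ 0 := by
    intro h0
    rw [h0] at h
    simp at h
  obtain ⟨i, hi⟩ := Finset.card_ne_zero.1 this
  exact ⟨i, (Finset.mem_filter.1 hi).2⟩

lemma support_typeDist_subset {n : ℕ} (ξ : (Fin n → Bool) × A → ℝ) :
    Function.support (typeDist ξ) ⊆ ↑(Finset.image (typeOf ξ) Finset.univ) := by
  intro t ht
  obtain ⟨i, hi⟩ := typeDist_support ξ ht
  rw [Finset.coe_image]
  exact ⟨i, by simp, hi⟩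

lemma sum_typeDist {n : ℕ} (hn : n ≠ 0) (ξ : (Fin n → Bool) × A → ℝ) :
    ∑ t ∈ Finset.image (typeOf ξ) Finset.univ, typeDist ξ t = 1 := by
  rw [Finset.sum_congr rfl fun t _ => typeDist_eq_card ξ t, ← Finset.sum_div]
  rw [div_eq_one_iff_eq (by exact_mod_cast hn)]
  rw [← Nat.cast_sum]
  have := Finset.card_eq_sum_card_image (typeOf ξ) (Finset.univ : Finset (Fin n))
  rw [Finset.card_univ, Fintype.card_fin] at this
  exact_mod_cast this.symm

lemma finsum_typeDist {n : ℕ} (hn : n ≠ 0) (ξ : (Fin n → Bool) × A → ℝ) :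
    ∑ᶠ t, typeDist ξ t = 1 := by
  rw [finsum_eq_finset_sum_of_support_subset _ (support_typeDist_subset ξ)]
  exact sum_typeDist hn ξ

lemma typeDist_nonneg {n : ℕ} (ξ : (Fin n → Bool) × A → ℝ) (t : A → ℝ) :
    0 ≤ typeDist ξ t := by
  rw [typeDist_eq_card]
  positivity

lemma isDist_typeDist {n : ℕ} (hn : n ≠ 0) (ξ : (Fin n → Bool) × A → ℝ) :
    IsDist (typeDist ξ) :=
  ⟨typeDist_nonneg ξ, Set.Finite.subset (Finset.image (typeOf ξ) Finset.univ).finite_toSet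
    (support_typeDist_subset ξ), finsum_typeDist hn ξ⟩

lemma card_indep {n q : ℕ} {ε : ℝ} {ν : (Fin n → Bool) → ℝ} (h : IsGoodDist ε q ν) :
    (1 - ε) * (n:ℝ)^q
      ≤ ((Finset.univ.filter (fun J : Fin q → Fin n => EpsIndep ε ν J)).card : ℝ) := by
  unfold IsGoodDist at h
  rw [Nat.card_eq_fintype_card] at h
  classical
  convert h using 2
  exact (Fintype.card_subtype _).symm

/-- The fiberwise marginal of a finitely supported coupling. -/
lemma coupling_fst {B C : Type*} {T0 : B × C → ℝ} {μ0 : B → ℝ}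
    (hsupp : (Function.support T0).Finite)
    (hmarg : ∀ b, ∑ᶠ c, T0 (b, c) = μ0 b) (b : B) :
    ∑ p ∈ hsupp.toFinset.filter (fun p => p.1 = b), T0 p = μ0 b := by
  classical
  rw [← hmarg b]
  rw [finsum_eq_finset_sum_of_support_subset (fun c => T0 (b, c))
    (s := (hsupp.toFinset.filter (fun p => p.1 = b)).image Prod.snd) ?hs]
  · rw [Finset.sum_image ?hinj]
    · refine Finset.sum_congr rfl fun p hp => ?_
      have := (Finset.mem_filter.1 hp).2
      rw [← this]
    case hinj =>
      intro p hp p' hp' hpp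
      have h1 := (Finset.mem_filter.1 hp).2
      have h2 := (Finset.mem_filter.1 hp').2
      exact Prod.ext (h1.trans h2.symm) hpp
  case hs =>
    intro c hc
    rw [Finset.coe_image]
    refine ⟨(b, c), ?_, rfl⟩
    rw [Finset.mem_coe, Finset.mem_filter, Set.Finite.mem_toFinset]
    exact ⟨hc, rfl⟩

lemma coupling_snd {B C : Type*} {T0 : B × C → ℝ} {τ0 : C → ℝ}
    (hsupp : (Function.support T0).Finite)
    (hmarg : ∀ c, ∑ᶠ b, T0 (b, c) = τ0 c) (c : C) :
    ∑ p ∈ hsupp.toFinset.filter (fun p => p.2 = c), T0 p = τ0 c := by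
  classical
  rw [← hmarg c]
  rw [finsum_eq_finset_sum_of_support_subset (fun b => T0 (b, c))
    (s := (hsupp.toFinset.filter (fun p => p.2 = c)).image Prod.fst) ?hs]
  · rw [Finset.sum_image ?hinj]
    · refine Finset.sum_congr rfl fun p hp => ?_
      have := (Finset.mem_filter.1 hp).2
      rw [← this]
    case hinj =>
      intro p hp p' hp' hpp
      have h1 := (Finset.mem_filter.1 hp).2
      have h2 := (Finset.mem_filter.1 hp').2
      exact Prod.ext hpp (h1.trans h2.symm)
  case hs =>
    intro b hb
    rw [Finset.coe_image]
    refine ⟨(b, c), ?_, rfl⟩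
    rw [Finset.mem_coe, Finset.mem_filter, Set.Finite.mem_toFinset]
    exact ⟨hb, rfl⟩

end Rep2
section Steps
open scoped Classical

variable {A : Type*} [Fintype A]

lemma sum_pi_prod {β : Type*} (q : ℕ) (P : Finset β) (w : β → ℝ) (hw : ∑ p ∈ P, w p = 1) :
    ∑ T ∈ Fintype.piFinset (fun _ : Fin q => P), ∏ j, w (T j) = 1 := by
  rw [← Finset.prod_univ_sum (fun _ : Fin q => P) (fun _ b => w b)]
  rw [Finset.prod_congr rfl fun j _ => hw, Finset.prod_const_one]

lemma isDist_sum_toFinset {β : Type*} {f : β → ℝ} (hf : IsDist f) :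
    ∑ p ∈ hf.2.1.toFinset, f p = 1 := by
  rw [← finsum_eq_finset_sum_of_support_subset f (by simp)]
  exact hf.2.2

lemma wl1_eq (η : A → ℝ) (x y : A → ℝ) : wl1 η x y = ∑ v : A, η v * |x v - y v| :=
  finsum_eq_sum_of_fintype _

lemma step_eta {n s q : ℕ} (ξ : (Fin n → Bool) × A → ℝ) (μ : (Fin n → Bool) → ℝ)
    (hμ : IsDist μ) (hξ : IsDetailing ξ μ) (η' : A → ℝ) (hη' : IsDist η')
    (Λ' : (A → ℝ) → ℝ) (hΛ' : IsDist Λ') (hΛ'01 : SuppIn01 Λ') :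
    dTV (Dsim s q η' Λ') (Dsim s q (weight ξ) Λ')
      ≤ (s : ℝ) * dTV (weight ξ) η' := by
  set R' : Finset (A → ℝ) := hΛ'.2.1.toFinset with hR'
  have hsub : Function.support Λ' ⊆ ↑R' := by simp [hR']
  have e1 : Dsim s q η' Λ' = fun M => ∑ T ∈ Fintype.piFinset (fun _ : Fin q => R'),
      (∏ j, Λ' (T j)) * gfun s q η' T M := funext fun M => Dsim_eq_sum s q η' Λ' R' hsub M
  have e2 : Dsim s q (weight ξ) Λ' = fun M => ∑ T ∈ Fintype.piFinset (fun _ : Fin q => R'),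
      (∏ j, Λ' (T j)) * gfun s q (weight ξ) T M :=
    funext fun M => Dsim_eq_sum s q (weight ξ) Λ' R' hsub M
  rw [e1, e2]
  have hwpos : ∀ T ∈ Fintype.piFinset (fun _ : Fin q => R'), (0:ℝ) ≤ ∏ j, Λ' (T j) :=
    fun T _ => Finset.prod_nonneg fun j _ => hΛ'.1 _
  refine le_trans (dTV_mixture _ _ hwpos _ _) ?_
  have hper : ∀ T ∈ Fintype.piFinset (fun _ : Fin q => R'),
      dTV (gfun s q η' T) (gfun s q (weight ξ) T) ≤ (s:ℝ) * dTV (weight ξ) η' := by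
    intro T hT
    have hTI : ∀ j v, T j v ∈ Set.Icc (0:ℝ) 1 := by
      intro j v
      have : T j ∈ R' := (Fintype.mem_piFinset.1 hT) j
      have hts : Λ' (T j) ≠ 0 := by
        rw [hR', Set.Finite.mem_toFinset] at this
        exact this
      exact hΛ'01 _ hts v
    have efp : gfun s q η' T = fun M => ∏ i, rowD q η' T (M i) :=
      funext fun M => gfun_eq_prod s q η' T M
    have efp2 : gfun s q (weight ξ) T = fun M => ∏ i, rowD q (weight ξ) T (M i) :=
      funext fun M => gfun_eq_prod s q (weight ξ) T M
    rw [efp, efp2]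
    have hpi := dTV_pi (fun _ : Fin s => rowD q η' T) (fun _ : Fin s => rowD q (weight ξ) T)
      (fun _ r => rowD_nonneg (fun v => hη'.1 v) hTI r)
      (fun _ => sum_rowD T (isDist_sum_eq_one hη'))
      (fun _ r => rowD_nonneg (fun v => weight_nonneg hξ v) hTI r)
      (fun _ => sum_rowD T (sum_weight hμ hξ))
    refine hpi.trans ?_
    rw [Finset.sum_const, Finset.card_univ, Fintype.card_fin, nsmul_eq_mul]
    have := dTV_rowD_eta (η := η') (η₂ := weight ξ) hTI
    rw [dTV_comm η' (weight ξ)] at this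
    exact mul_le_mul_of_nonneg_left this (by positivity)
  calc ∑ T ∈ Fintype.piFinset (fun _ : Fin q => R'),
        (∏ j, Λ' (T j)) * dTV (gfun s q η' T) (gfun s q (weight ξ) T)
      ≤ ∑ T ∈ Fintype.piFinset (fun _ : Fin q => R'),
        (∏ j, Λ' (T j)) * ((s:ℝ) * dTV (weight ξ) η') :=
        Finset.sum_le_sum fun T hT =>
          mul_le_mul_of_nonneg_left (hper T hT) (hwpos T hT)
    _ = (s:ℝ) * dTV (weight ξ) η' := by
        rw [← Finset.sum_mul, sum_pi_prod q R' Λ' (isDist_sum_toFinset hΛ'), one_mul]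

end Steps
section StepEM
open scoped Classical

variable {A : Type*} [Fintype A]

lemma step_EM {n s q : ℕ} (ξ : (Fin n → Bool) × A → ℝ) (μ : (Fin n → Bool) → ℝ)
    (hμ : IsDist μ) (hξ : IsDetailing ξ μ)
    (Λ' : (A → ℝ) → ℝ) (hΛ' : IsDist Λ') (hΛ'01 : SuppIn01 Λ')
    (T0 : ((A → ℝ) × (A → ℝ)) → ℝ) (hT0 : IsCoupling T0 (typeDist ξ) Λ') :
    dTV (Dsim s q (weight ξ) (typeDist ξ)) (Dsim s q (weight ξ) Λ')
      ≤ (s : ℝ) * (q : ℝ) * ∑ᶠ p : (A → ℝ) × (A → ℝ), T0 p * wl1 (weight ξ) p.1 p.2 := by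
  obtain ⟨hT0d, hm1, hm2⟩ := hT0
  obtain ⟨hT0pos, hT0fin, hT0sum⟩ := hT0d
  set η := weight ξ with hη
  set P : Finset ((A → ℝ) × (A → ℝ)) := hT0fin.toFinset with hP
  have hPsupp : Function.support T0 ⊆ ↑P := by simp [hP]
  -- cost as finite sum
  have hcost : ∑ᶠ p : (A → ℝ) × (A → ℝ), T0 p * wl1 η p.1 p.2
      = ∑ p ∈ P, T0 p * wl1 η p.1 p.2 := by
    refine finsum_eq_finset_sum_of_support_subset _ fun p hp => ?_
    refine hPsupp fun h0 => hp ?_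
    show T0 p * wl1 η p.1 p.2 = 0
    rw [h0, zero_mul]
  -- total mass of the coupling on P
  have hT0P : ∑ p ∈ P, T0 p = 1 := by
    rw [← finsum_eq_finset_sum_of_support_subset T0 hPsupp]
    exact hT0sum
  -- fiber marginals
  have hfib1 : ∀ t, ∑ p ∈ P.filter (fun p => p.1 = t), T0 p = typeDist ξ t := by
    intro t
    have h := coupling_fst hT0fin hm1 t
    rw [Finset.filter_congr_decidable] at h ⊢
    exact h
  have hfib2 : ∀ t, ∑ p ∈ P.filter (fun p => p.2 = t), T0 p = Λ' t := by
    intro t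
    have h := coupling_snd hT0fin hm2 t
    rw [Finset.filter_congr_decidable] at h ⊢
    exact h
  -- representation of the two distributions as mixtures over pair tuples
  have rep : ∀ (Λ₀ : (A → ℝ) → ℝ) (φ : (A → ℝ) × (A → ℝ) → (A → ℝ))
      (Q : Finset (A → ℝ)), Function.support Λ₀ ⊆ ↑Q → (∀ p ∈ P, φ p ∈ Q) →
      (∀ t, ∑ p ∈ P.filter (fun p => φ p = t), T0 p = Λ₀ t) →
      Dsim s q η Λ₀ = fun M => ∑ TP ∈ Fintype.piFinset (fun _ : Fin q => P),
        (∏ j, T0 (TP j)) * gfun s q η (fun j => φ (TP j)) M := by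
    intro Λ₀ φ Q hQsupp hQim hfib
    funext M
    rw [Dsim_eq_sum s q η Λ₀ Q hQsupp M]
    have hpm := pi_marginal P T0 φ Q hQim (fun T => gfun s q η T M)
    simp only [Function.comp_def] at hpm
    rw [hpm]
    refine (Finset.sum_congr rfl fun T _ => ?_).symm
    congr 1
    exact Finset.prod_congr rfl fun j _ => hfib (T j)
  -- supports of the marginals
  have hQ1 : ∀ p ∈ P, p.1 ∈ Finset.image (typeOf ξ) Finset.univ ∪ P.image Prod.fst :=
    fun p hp => Finset.mem_union_right _ (Finset.mem_image_of_mem _ hp)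
  have hQ2 : ∀ p ∈ P, p.2 ∈ hΛ'.2.1.toFinset ∪ P.image Prod.snd :=
    fun p hp => Finset.mem_union_right _ (Finset.mem_image_of_mem _ hp)
  have hS1 : Function.support (typeDist ξ)
      ⊆ ↑(Finset.image (typeOf ξ) Finset.univ ∪ P.image Prod.fst) := by
    refine (support_typeDist_subset ξ).trans ?_
    intro t ht
    rw [Finset.coe_union]
    exact Or.inl ht
  have hS2 : Function.support Λ' ⊆ ↑(hΛ'.2.1.toFinset ∪ P.image Prod.snd) := by
    intro t ht
    rw [Finset.coe_union]
    left
    simpa using ht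
  have rep1 := rep (typeDist ξ) Prod.fst _ hS1 hQ1 hfib1
  have rep2 := rep Λ' Prod.snd _ hS2 hQ2 hfib2
  rw [rep1, rep2]
  -- weights are nonnegative
  have hw0 : ∀ TP ∈ Fintype.piFinset (fun _ : Fin q => P), (0:ℝ) ≤ ∏ j, T0 (TP j) :=
    fun TP _ => Finset.prod_nonneg fun j _ => hT0pos _
  refine le_trans (dTV_mixture _ _ hw0 _ _) ?_
  -- per-tuple bound
  have hper : ∀ TP ∈ Fintype.piFinset (fun _ : Fin q => P),
      dTV (gfun s q η (fun j => (TP j).1)) (gfun s q η (fun j => (TP j).2))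
        ≤ (s:ℝ) * ∑ j, wl1 η (TP j).1 (TP j).2 := by
    intro TP hTP
    have hmem : ∀ j, T0 (TP j) ≠ 0 := by
      intro j
      have := (Fintype.mem_piFinset.1 hTP) j
      rw [hP, Set.Finite.mem_toFinset] at this
      exact this
    have h1I : ∀ j v, (TP j).1 v ∈ Set.Icc (0:ℝ) 1 := by
      intro j v
      have hpos : 0 < typeDist ξ ((TP j).1) := by
        rw [← hfib1 ((TP j).1)]
        have hmemf : TP j ∈ P.filter (fun p => p.1 = (TP j).1) := by
          rw [Finset.mem_filter]
          exact ⟨by rw [hP, Set.Finite.mem_toFinset]; exact hmem j, rfl⟩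
        refine lt_of_lt_of_le (lt_of_le_of_ne (hT0pos (TP j)) (Ne.symm (hmem j))) ?_
        exact Finset.single_le_sum (fun p _ => hT0pos p) hmemf
      obtain ⟨i, hi⟩ := typeDist_support ξ (ne_of_gt hpos)
      rw [← hi]
      exact typeOf_mem_Icc hξ i v
    have h2I : ∀ j v, (TP j).2 v ∈ Set.Icc (0:ℝ) 1 := by
      intro j v
      have hpos : 0 < Λ' ((TP j).2) := by
        rw [← hfib2 ((TP j).2)]
        have hmemf : TP j ∈ P.filter (fun p => p.2 = (TP j).2) := by
          rw [Finset.mem_filter]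
          exact ⟨by rw [hP, Set.Finite.mem_toFinset]; exact hmem j, rfl⟩
        refine lt_of_lt_of_le (lt_of_le_of_ne (hT0pos (TP j)) (Ne.symm (hmem j))) ?_
        exact Finset.single_le_sum (fun p _ => hT0pos p) hmemf
      exact hΛ'01 _ (ne_of_gt hpos) v
    have efp : gfun s q η (fun j => (TP j).1)
        = fun M => ∏ i, rowD q η (fun j => (TP j).1) (M i) :=
      funext fun M => gfun_eq_prod s q η _ M
    have efp2 : gfun s q η (fun j => (TP j).2)
        = fun M => ∏ i, rowD q η (fun j => (TP j).2) (M i) :=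
      funext fun M => gfun_eq_prod s q η _ M
    rw [efp, efp2]
    have hpi := dTV_pi (fun _ : Fin s => rowD q η (fun j => (TP j).1))
      (fun _ : Fin s => rowD q η (fun j => (TP j).2))
      (fun _ r => rowD_nonneg (fun v => weight_nonneg hξ v) h1I r)
      (fun _ => sum_rowD _ (sum_weight hμ hξ))
      (fun _ r => rowD_nonneg (fun v => weight_nonneg hξ v) h2I r)
      (fun _ => sum_rowD _ (sum_weight hμ hξ))
    refine hpi.trans ?_
    rw [Finset.sum_const, Finset.card_univ, Fintype.card_fin, nsmul_eq_mul]
    refine mul_le_mul_of_nonneg_left ?_ (by positivity)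
    refine (dTV_rowD_T (fun v => weight_nonneg hξ v) h1I h2I).trans ?_
    refine le_of_eq (Finset.sum_congr rfl fun j _ => ?_)
    rw [wl1_eq]
  calc ∑ TP ∈ Fintype.piFinset (fun _ : Fin q => P), (∏ j, T0 (TP j)) *
        dTV (gfun s q η (fun j => (TP j).1)) (gfun s q η (fun j => (TP j).2))
      ≤ ∑ TP ∈ Fintype.piFinset (fun _ : Fin q => P), (∏ j, T0 (TP j)) *
        ((s:ℝ) * ∑ j, wl1 η (TP j).1 (TP j).2) :=
        Finset.sum_le_sum fun TP hTP =>
          mul_le_mul_of_nonneg_left (hper TP hTP) (hw0 TP hTP)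
    _ = ∑ TP ∈ Fintype.piFinset (fun _ : Fin q => P), ∑ j : Fin q,
          (s:ℝ) * ((∏ j', T0 (TP j')) * wl1 η (TP j).1 (TP j).2) := by
        refine Finset.sum_congr rfl fun TP _ => ?_
        rw [Finset.mul_sum, Finset.mul_sum]
        exact Finset.sum_congr rfl fun j _ => by ring
    _ = ∑ j : Fin q, (s:ℝ) * ∑ TP ∈ Fintype.piFinset (fun _ : Fin q => P),
          (∏ j', T0 (TP j')) * wl1 η (TP j).1 (TP j).2 := by
        rw [Finset.sum_comm]
        exact Finset.sum_congr rfl fun j _ => by rw [Finset.mul_sum]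
    _ = (s:ℝ) * ∑ j : Fin q, ∑ p ∈ P, T0 p * wl1 η p.1 p.2 := by
        rw [Finset.mul_sum]
        refine Finset.sum_congr rfl fun j _ => ?_
        congr 1
        exact sum_pi_weight_eval P T0 (fun p => wl1 η p.1 p.2) hT0P j
    _ = (s:ℝ) * (q:ℝ) * ∑ᶠ p : (A → ℝ) × (A → ℝ), T0 p * wl1 η p.1 p.2 := by
        rw [hcost, Finset.sum_const, Finset.card_univ, Fintype.card_fin, nsmul_eq_mul]
        ring

end StepEM
section StepGood
open scoped Classical

variable {A : Type*} [Fintype A]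

lemma step_good {n s q : ℕ} (hn0 : n ≠ 0) (ε' : ℝ) (hε'0 : 0 ≤ ε') (hε'1 : ε' ≤ 1)
    (ξ : (Fin n → Bool) × A → ℝ) (μ : (Fin n → Bool) → ℝ)
    (hμ : IsDist μ) (hξ : IsDetailing ξ μ) (hgood : IsGoodDetailing ε' q ξ) :
    dTV (Dsim s q (weight ξ) (typeDist ξ)) (Dtest s q n μ) ≤ 3 * s * ε' := by
  obtain ⟨Jg, hJg1, hJg2⟩ := hgood
  set η := weight ξ with hη
  have hηpos : ∀ v, 0 ≤ η v := fun v => weight_nonneg hξ v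
  have hη1 : ∑ v : A, η v = 1 := sum_weight hμ hξ
  have hfsum : ∀ (t : Fin q → ℝ), ∑ r : Fin q → Bool, ∏ j, bern (t j) (r j) = 1 := by
    intro t
    rw [sum_prod_eval (fun j x => bern (t j) x)]
    rw [Finset.prod_congr rfl fun j _ => sum_bern (t j), Finset.prod_const_one]
  -- representation of Dsim as a mixture over index tuples
  have repA : Dsim s q η (typeDist ξ) = fun M => ∑ J : Fin q → Fin n,
      (∏ _j : Fin q, (1/(n:ℝ))) * gfun s q η (fun ℓ => typeOf ξ (J ℓ)) M := by
    funext M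
    rw [Dsim_eq_sum s q η (typeDist ξ) (Finset.image (typeOf ξ) Finset.univ)
      (support_typeDist_subset ξ) M]
    have hpm := pi_marginal (Finset.univ : Finset (Fin n)) (fun _ => (1/(n:ℝ))) (typeOf ξ)
      (Finset.image (typeOf ξ) Finset.univ)
      (fun i _ => Finset.mem_image_of_mem _ (Finset.mem_univ i))
      (fun T => gfun s q η T M)
    simp only [Function.comp_def] at hpm
    rw [Fintype.piFinset_univ] at hpm
    rw [hpm]
    refine (Finset.sum_congr rfl fun T _ => ?_)
    congr 1
    refine Finset.prod_congr rfl fun j _ => ?_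
    rw [typeDist_eq_card, Finset.sum_const, nsmul_eq_mul, mul_one_div]
  -- representation of Dtest
  have repB : Dtest s q n μ = fun M => ∑ J : Fin q → Fin n, (∏ _j : Fin q, (1/(n:ℝ))) *
      ∑ a : Fin s → A, (∏ i, η (a i)) * ∏ i, jointAt (component ξ (a i)) J (M i) := by
    funext M
    rw [Dtest_eq]
    refine Finset.sum_congr rfl fun J _ => ?_
    congr 1
    calc ∏ i, jointAt μ J (M i)
        = ∏ i, ∑ v : A, η v * jointAt (component ξ v) J (M i) :=
          Finset.prod_congr rfl fun i _ => by rw [jointAt_mix hξ]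
      _ = ∑ a : Fin s → A, ∏ i, (η (a i) * jointAt (component ξ (a i)) J (M i)) := by
          have := Finset.prod_univ_sum (fun _ : Fin s => (Finset.univ : Finset A))
            (fun i v => η v * jointAt (component ξ v) J (M i))
          rw [Fintype.piFinset_univ] at this
          exact this
      _ = ∑ a : Fin s → A, (∏ i, η (a i)) * ∏ i, jointAt (component ξ (a i)) J (M i) :=
          Finset.sum_congr rfl fun a _ => Finset.prod_mul_distrib
  -- the per-component error bound
  set b : A → (Fin q → Fin n) → ℝ :=
    fun v J => if EpsIndep ε' (component ξ v) J then ε' else 1 with hbdef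
  have hb0 : ∀ v J, 0 ≤ b v J := by
    intro v J
    simp only [hbdef]
    split
    · exact hε'0
    · exact zero_le_one
  have hb1 : ∀ v J, b v J ≤ 1 := by
    intro v J
    simp only [hbdef]
    split
    · exact hε'1
    · exact le_refl 1
  have key : ∀ (J : Fin q → Fin n) (a : Fin s → A), (∏ i, η (a i)) ≠ 0 →
      dTV (fun M : Fin s → Fin q → Bool => ∏ i, ∏ j, bern (typeOf ξ (J j) (a i)) (M i j))
          (fun M : Fin s → Fin q → Bool => ∏ i, jointAt (component ξ (a i)) J (M i))
        ≤ ∑ i, b (a i) J := by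
    intro J a ha
    have hwa : ∀ i, weight ξ (a i) ≠ 0 := by
      intro i h0
      exact ha (Finset.prod_eq_zero (Finset.mem_univ i) h0)
    have hf0 : ∀ (i : Fin s) (r : Fin q → Bool),
        (0:ℝ) ≤ ∏ j, bern (typeOf ξ (J j) (a i)) (r j) :=
      fun i r => Finset.prod_nonneg fun j _ => bern_nonneg (typeOf_mem_Icc hξ _ _) _
    have hg0 : ∀ (i : Fin s) (y : Fin q → Bool), 0 ≤ jointAt (component ξ (a i)) J y :=
      fun i y => jointAt_nonneg (component_nonneg hξ _) J y
    have hg1 : ∀ i : Fin s, ∑ y : Fin q → Bool, jointAt (component ξ (a i)) J y = 1 := by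
      intro i
      rw [sum_jointAt]
      exact sum_component hξ (hwa i)
    have hpi := dTV_pi (fun i (r : Fin q → Bool) => ∏ j, bern (typeOf ξ (J j) (a i)) (r j))
      (fun i => jointAt (component ξ (a i)) J)
      hf0 (fun i => hfsum _) hg0 hg1
    refine le_trans hpi (Finset.sum_le_sum fun i _ => ?_)
    show dTV (fun r : Fin q → Bool => ∏ j, bern (typeOf ξ (J j) (a i)) (r j))
      (jointAt (component ξ (a i)) J) ≤ b (a i) J
    by_cases hind : EpsIndep ε' (component ξ (a i)) J
    · have heq : (fun r : Fin q → Bool => ∏ j, bern (typeOf ξ (J j) (a i)) (r j))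
          = fun r : Fin q → Bool => ∏ ℓ, margAt (component ξ (a i)) (J ℓ) (r ℓ) := by
        funext r
        refine Finset.prod_congr rfl fun ℓ _ => ?_
        cases hrl : r ℓ
        · show bern (typeOf ξ (J ℓ) (a i)) false = _
          have : bern (typeOf ξ (J ℓ) (a i)) false = 1 - typeOf ξ (J ℓ) (a i) := rfl
          rw [this, margAt_false, sum_component hξ (hwa i), margAt_comp_true hξ]
        · show bern (typeOf ξ (J ℓ) (a i)) true = _
          have : bern (typeOf ξ (J ℓ) (a i)) true = typeOf ξ (J ℓ) (a i) := rfl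
          rw [this, margAt_comp_true hξ]
      rw [heq, dTV_comm, hbdef]
      simp only [if_pos hind]
      exact hind
    · simp only [hbdef]
      simp only [if_neg hind]
      exact dTV_le_one (hf0 i) (hg0 i) (hfsum _) (hg1 i)
  -- assemble
  rw [repA, repB]
  -- flatten the two mixtures over pairs (J, a)
  set w : ((Fin q → Fin n) × (Fin s → A)) → ℝ :=
    fun c => (∏ _j : Fin q, (1/(n:ℝ))) * ∏ i, η (c.2 i) with hwdef
  have hw0 : ∀ c, 0 ≤ w c := by
    intro c
    simp only [hwdef]
    exact mul_nonneg (Finset.prod_nonneg fun _ _ => by positivity)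
      (Finset.prod_nonneg fun i _ => hηpos _)
  have flat1 : (fun M : Fin s → Fin q → Bool => ∑ J : Fin q → Fin n,
        (∏ _j : Fin q, (1/(n:ℝ))) * gfun s q η (fun ℓ => typeOf ξ (J ℓ)) M)
      = fun M => ∑ c ∈ (Finset.univ : Finset ((Fin q → Fin n) × (Fin s → A))), w c *
          ∏ i, ∏ j, bern (typeOf ξ (c.1 j) (c.2 i)) (M i j) := by
    funext M
    rw [Fintype.sum_prod_type]
    refine Finset.sum_congr rfl fun J _ => ?_
    unfold gfun
    rw [Finset.mul_sum]
    refine Finset.sum_congr rfl fun a _ => ?_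
    simp only [hwdef]
    ring
  have flat2 : (fun M : Fin s → Fin q → Bool => ∑ J : Fin q → Fin n,
        (∏ _j : Fin q, (1/(n:ℝ))) * ∑ a : Fin s → A, (∏ i, η (a i)) *
          ∏ i, jointAt (component ξ (a i)) J (M i))
      = fun M => ∑ c ∈ (Finset.univ : Finset ((Fin q → Fin n) × (Fin s → A))), w c *
          ∏ i, jointAt (component ξ (c.2 i)) c.1 (M i) := by
    funext M
    rw [Fintype.sum_prod_type]
    refine Finset.sum_congr rfl fun J _ => ?_
    rw [Finset.mul_sum]
    refine Finset.sum_congr rfl fun a _ => ?_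
    simp only [hwdef]
    ring
  rw [flat1, flat2]
  refine le_trans (dTV_mixture _ _ (fun c _ => hw0 c) _ _) ?_
  have hperc : ∀ c : (Fin q → Fin n) × (Fin s → A),
      w c * dTV (fun M : Fin s → Fin q → Bool => ∏ i, ∏ j, bern (typeOf ξ (c.1 j) (c.2 i)) (M i j))
        (fun M : Fin s → Fin q → Bool => ∏ i, jointAt (component ξ (c.2 i)) c.1 (M i))
      ≤ w c * ∑ i, b (c.2 i) c.1 := by
    intro c
    by_cases hz : (∏ i, η (c.2 i)) = 0
    · have hwz : w c = 0 := by simp only [hwdef]; rw [hz, mul_zero]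
      rw [hwz, zero_mul, zero_mul]
    · exact mul_le_mul_of_nonneg_left (key c.1 c.2 hz) (hw0 c)
  refine le_trans (Finset.sum_le_sum fun c _ => hperc c) ?_
  -- rearrange the bounding sum
  have hswap : ∑ c : (Fin q → Fin n) × (Fin s → A), w c * ∑ i, b (c.2 i) c.1
      = ∑ i : Fin s, ∑ v : A, η v * ∑ J : Fin q → Fin n, (∏ _j : Fin q, (1/(n:ℝ))) * b v J := by
    calc ∑ c : (Fin q → Fin n) × (Fin s → A), w c * ∑ i, b (c.2 i) c.1
        = ∑ c : (Fin q → Fin n) × (Fin s → A), ∑ i, w c * b (c.2 i) c.1 :=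
          Finset.sum_congr rfl fun c _ => Finset.mul_sum _ _ _
      _ = ∑ i : Fin s, ∑ c : (Fin q → Fin n) × (Fin s → A), w c * b (c.2 i) c.1 :=
          Finset.sum_comm
      _ = ∑ i : Fin s, ∑ v : A, η v * ∑ J : Fin q → Fin n, (∏ _j : Fin q, (1/(n:ℝ))) * b v J := by
          refine Finset.sum_congr rfl fun i _ => ?_
          rw [Fintype.sum_prod_type]
          calc ∑ J : Fin q → Fin n, ∑ a : Fin s → A, w (J, a) * b (a i) J
              = ∑ J : Fin q → Fin n, (∏ _j : Fin q, (1/(n:ℝ))) *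
                  ∑ a : Fin s → A, (∏ k, η (a k)) * b (a i) J := by
                refine Finset.sum_congr rfl fun J _ => ?_
                rw [Finset.mul_sum]
                refine Finset.sum_congr rfl fun a _ => ?_
                simp only [hwdef]
                ring
            _ = ∑ J : Fin q → Fin n, (∏ _j : Fin q, (1/(n:ℝ))) * ∑ v : A, η v * b v J := by
                refine Finset.sum_congr rfl fun J _ => ?_
                congr 1
                have := sum_pi_weight_eval (Finset.univ : Finset A) η (fun v => b v J) hη1 i
                rw [Fintype.piFinset_univ] at this
                exact this
            _ = ∑ v : A, η v * ∑ J : Fin q → Fin n, (∏ _j : Fin q, (1/(n:ℝ))) * b v J := by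
                calc ∑ J : Fin q → Fin n, (∏ _j : Fin q, (1/(n:ℝ))) * ∑ v : A, η v * b v J
                    = ∑ J : Fin q → Fin n, ∑ v : A,
                        (∏ _j : Fin q, (1/(n:ℝ))) * (η v * b v J) := by
                      refine Finset.sum_congr rfl fun J _ => ?_
                      rw [Finset.mul_sum]
                  _ = ∑ v : A, ∑ J : Fin q → Fin n,
                        (∏ _j : Fin q, (1/(n:ℝ))) * (η v * b v J) := Finset.sum_comm
                  _ = ∑ v : A, η v * ∑ J : Fin q → Fin n,
                        (∏ _j : Fin q, (1/(n:ℝ))) * b v J := by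
                      refine Finset.sum_congr rfl fun v _ => ?_
                      rw [Finset.mul_sum]
                      exact Finset.sum_congr rfl fun J _ => by ring
  rw [hswap]
  -- per-component average over J
  have hprodc : (∏ _j : Fin q, (1/(n:ℝ))) = ((n:ℝ)^q)⁻¹ := by
    rw [Finset.prod_const, Finset.card_univ, Fintype.card_fin, div_pow, one_pow, one_div]
  have hnq : (0:ℝ) < (n:ℝ)^q := by
    have : (0:ℝ) < (n:ℝ) := by
      have := Nat.pos_of_ne_zero hn0
      exact_mod_cast this
    positivity
  have hcardJ : ((Finset.univ : Finset (Fin q → Fin n)).card : ℝ) = (n:ℝ)^q := by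
    rw [show (Finset.univ : Finset (Fin q → Fin n)).card = n ^ q by simp [Finset.card_univ]]
    push_cast
    rfl
  have hBfac : ∀ v : A, ∑ J : Fin q → Fin n, (∏ _j : Fin q, (1/(n:ℝ))) * b v J
      = ((n:ℝ)^q)⁻¹ * ∑ J : Fin q → Fin n, b v J := by
    intro v
    rw [hprodc, ← Finset.mul_sum]
  have hBle1 : ∀ v : A, ∑ J : Fin q → Fin n, (∏ _j : Fin q, (1/(n:ℝ))) * b v J ≤ 1 := by
    intro v
    rw [hBfac v]
    have h1 : ∑ J : Fin q → Fin n, b v J ≤ ∑ _J : Fin q → Fin n, (1:ℝ) :=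
      Finset.sum_le_sum fun J _ => hb1 v J
    have h2 : ∑ _J : Fin q → Fin n, (1:ℝ) = (n:ℝ)^q := by
      rw [Finset.sum_const, nsmul_eq_mul, mul_one, hcardJ]
    calc ((n:ℝ)^q)⁻¹ * ∑ J : Fin q → Fin n, b v J
        ≤ ((n:ℝ)^q)⁻¹ * (n:ℝ)^q := by
          refine mul_le_mul_of_nonneg_left ?_ (by positivity)
          rw [← h2]
          exact h1
      _ = 1 := inv_mul_cancel₀ (ne_of_gt hnq)
  have hBgood : ∀ v ∈ Jg, ∑ J : Fin q → Fin n, (∏ _j : Fin q, (1/(n:ℝ))) * b v J ≤ 2 * ε' := by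
    intro v hv
    rw [hBfac v]
    set N := (Finset.univ.filter (fun J : Fin q → Fin n =>
      EpsIndep ε' (component ξ v) J)).card with hN
    set Mc := (Finset.univ.filter (fun J : Fin q → Fin n =>
      ¬ EpsIndep ε' (component ξ v) J)).card with hMc
    have hNM : (N:ℝ) + (Mc:ℝ) = (n:ℝ)^q := by
      have := Finset.card_filter_add_card_filter_not
        (s := (Finset.univ : Finset (Fin q → Fin n)))
        (fun J => EpsIndep ε' (component ξ v) J)
      rw [← hN, ← hMc] at this
      rw [← hcardJ]
      exact_mod_cast this
    have hNlow : (1 - ε') * (n:ℝ)^q ≤ (N:ℝ) := by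
      have := card_indep (hJg2 v hv)
      rw [← hN] at this
      exact this
    have hsplit : ∑ J : Fin q → Fin n, b v J = (N:ℝ) * ε' + (Mc:ℝ) := by
      simp only [hbdef]
      rw [Finset.sum_ite (fun _ => ε') (fun _ => (1:ℝ))]
      rw [Finset.sum_const, Finset.sum_const, nsmul_eq_mul, nsmul_eq_mul, mul_one]
    have hNle : (N:ℝ) ≤ (n:ℝ)^q := by
      have : (0:ℝ) ≤ (Mc:ℝ) := Nat.cast_nonneg Mc
      linarith
    have hMle : (Mc:ℝ) ≤ ε' * (n:ℝ)^q := by nlinarith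
    calc ((n:ℝ)^q)⁻¹ * ∑ J : Fin q → Fin n, b v J
        = ((n:ℝ)^q)⁻¹ * ((N:ℝ) * ε' + (Mc:ℝ)) := by rw [hsplit]
      _ ≤ ((n:ℝ)^q)⁻¹ * ((n:ℝ)^q * ε' + ε' * (n:ℝ)^q) := by
          refine mul_le_mul_of_nonneg_left ?_ (by positivity)
          have : (N:ℝ) * ε' ≤ (n:ℝ)^q * ε' := mul_le_mul_of_nonneg_right hNle hε'0
          linarith
      _ = 2 * ε' := by
          field_simp
          ring
  -- sum over v, splitting good and bad components
  have hJgsub : Jg ⊆ Finset.univ := Finset.subset_univ Jg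
  have hsumJg : ∑ v ∈ Jg, η v ≤ 1 := by
    rw [← hη1]
    exact Finset.sum_le_sum_of_subset_of_nonneg hJgsub fun v _ _ => hηpos v
  have hsdiff : ∑ v ∈ Finset.univ \ Jg, η v = 1 - ∑ v ∈ Jg, η v := by
    have := Finset.sum_sdiff (f := η) hJgsub
    rw [hη1] at this
    linarith
  have hperV : ∑ v : A, η v * ∑ J : Fin q → Fin n, (∏ _j : Fin q, (1/(n:ℝ))) * b v J
      ≤ 3 * ε' := by
    have hsplitV := (Finset.sum_sdiff (s₁ := Jg) (s₂ := Finset.univ)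
      (f := fun v => η v * ∑ J : Fin q → Fin n, (∏ _j : Fin q, (1/(n:ℝ))) * b v J) hJgsub).symm
    rw [hsplitV]
    have h1 : ∑ v ∈ Finset.univ \ Jg,
        η v * ∑ J : Fin q → Fin n, (∏ _j : Fin q, (1/(n:ℝ))) * b v J
        ≤ ∑ v ∈ Finset.univ \ Jg, η v := by
      refine Finset.sum_le_sum fun v _ => ?_
      calc η v * ∑ J : Fin q → Fin n, (∏ _j : Fin q, (1/(n:ℝ))) * b v J
          ≤ η v * 1 := mul_le_mul_of_nonneg_left (hBle1 v) (hηpos v)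
        _ = η v := mul_one _
    have h2 : ∑ v ∈ Jg, η v * ∑ J : Fin q → Fin n, (∏ _j : Fin q, (1/(n:ℝ))) * b v J
        ≤ ∑ v ∈ Jg, η v * (2 * ε') :=
      Finset.sum_le_sum fun v hv => mul_le_mul_of_nonneg_left (hBgood v hv) (hηpos v)
    have h3 : ∑ v ∈ Jg, η v * (2 * ε') ≤ 2 * ε' := by
      rw [← Finset.sum_mul]
      calc (∑ v ∈ Jg, η v) * (2 * ε') ≤ 1 * (2 * ε') :=
          mul_le_mul_of_nonneg_right hsumJg (by positivity)
        _ = 2 * ε' := one_mul _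
    have h4 : ∑ v ∈ Finset.univ \ Jg, η v ≤ ε' := by
      rw [hsdiff]
      linarith
    linarith
  calc ∑ i : Fin s, ∑ v : A, η v * ∑ J : Fin q → Fin n, (∏ _j : Fin q, (1/(n:ℝ))) * b v J
      ≤ ∑ _i : Fin s, 3 * ε' := Finset.sum_le_sum fun i _ => hperV
    _ = 3 * s * ε' := by
        rw [Finset.sum_const, Finset.card_univ, Fintype.card_fin, nsmul_eq_mul]
        ring

end StepGood
section Final
open scoped Classical

variable {A : Type*} [Fintype A]

lemma prod_coupling {B C : Type*} {f : B → ℝ} {g : C → ℝ} (hf : IsDist f) (hg : IsDist g) :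
    IsCoupling (fun p : B × C => f p.1 * g p.2) f g := by
  have hsupp : Function.support (fun p : B × C => f p.1 * g p.2)
      ⊆ (Function.support f) ×ˢ (Function.support g) := by
    intro p hp
    have h := mul_ne_zero_iff.1 hp
    exact ⟨h.1, h.2⟩
  refine ⟨⟨fun p => mul_nonneg (hf.1 _) (hg.1 _), Set.Finite.subset (hf.2.1.prod hg.2.1) hsupp, ?_⟩, ?_, ?_⟩
  · have hsub : Function.support (fun p : B × C => f p.1 * g p.2)
        ⊆ ↑(hf.2.1.toFinset ×ˢ hg.2.1.toFinset) := by
      intro p hp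
      have h := mul_ne_zero_iff.1 hp
      rw [Finset.coe_product]
      exact ⟨by simpa using h.1, by simpa using h.2⟩
    rw [finsum_eq_finset_sum_of_support_subset _ hsub, Finset.sum_product]
    calc ∑ x ∈ hf.2.1.toFinset, ∑ y ∈ hg.2.1.toFinset, f x * g y
        = ∑ x ∈ hf.2.1.toFinset, f x := by
          refine Finset.sum_congr rfl fun x _ => ?_
          rw [← Finset.mul_sum, isDist_sum_toFinset hg, mul_one]
      _ = 1 := isDist_sum_toFinset hf
  · intro a
    show (∑ᶠ b : C, f a * g b) = f a
    rw [← mul_finsum' _ _ hg.2.1, hg.2.2, mul_one]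
  · intro b
    show (∑ᶠ a : B, f a * g b) = g b
    rw [← finsum_mul' _ _ hf.2.1, hf.2.2, one_mul]

lemma case_q0 {n s : ℕ} (μ : (Fin n → Bool) → ℝ) (hμ : IsDist μ) (η' : A → ℝ)
    (hη' : IsDist η') (Λ' : (A → ℝ) → ℝ) (hΛ' : IsDist Λ') :
    dTV (Dsim s 0 η' Λ') (Dtest s 0 n μ) = 0 := by
  have h1 : ∀ M : Fin s → Fin 0 → Bool, Dsim s 0 η' Λ' M = 1 := by
    intro M
    rw [Dsim_eq_sum s 0 η' Λ' hΛ'.2.1.toFinset (by simp) M]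
    have hg : ∀ T : Fin 0 → (A → ℝ), gfun s 0 η' T M = 1 := by
      intro T
      unfold gfun
      have hz : ∀ a : Fin s → A, (∏ i : Fin s, ∏ j : Fin 0, bern (T j (a i)) (M i j)) = 1 := by
        intro a
        refine Finset.prod_eq_one fun i _ => ?_
        exact Finset.prod_of_isEmpty _
      calc ∑ a : Fin s → A, (∏ i, η' (a i)) * ∏ i, ∏ j, bern (T j (a i)) (M i j)
          = ∑ a : Fin s → A, ∏ i, η' (a i) := by
            refine Finset.sum_congr rfl fun a _ => ?_
            rw [hz a, mul_one]
        _ = ∏ _i : Fin s, ∑ v : A, η' v := sum_prod_eval _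
        _ = 1 := by
            rw [Finset.prod_congr rfl fun i _ => isDist_sum_eq_one hη', Finset.prod_const_one]
    calc ∑ T ∈ Fintype.piFinset (fun _ : Fin 0 => hΛ'.2.1.toFinset),
          (∏ j, Λ' (T j)) * gfun s 0 η' T M
        = ∑ _T ∈ Fintype.piFinset (fun _ : Fin 0 => hΛ'.2.1.toFinset), (1:ℝ) := by
          refine Finset.sum_congr rfl fun T _ => ?_
          rw [hg T, Finset.prod_of_isEmpty, one_mul]
      _ = 1 := by
          rw [Finset.sum_const, Fintype.card_piFinset]
          simp
  have h2 : ∀ M : Fin s → Fin 0 → Bool, Dtest s 0 n μ M = 1 := by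
    intro M
    unfold Dtest
    have hx : ∀ J : Fin 0 → Fin n, ∑ x : Fin s → Fin n → Bool,
        (∏ i, μ (x i)) * (if ∀ (i : Fin s) (ℓ : Fin 0), x i (J ℓ) = M i ℓ then (1:ℝ) else 0) = 1 := by
      intro J
      calc ∑ x : Fin s → Fin n → Bool,
            (∏ i, μ (x i)) * (if ∀ (i : Fin s) (ℓ : Fin 0), x i (J ℓ) = M i ℓ then (1:ℝ) else 0)
          = ∑ x : Fin s → Fin n → Bool, ∏ i, μ (x i) := by
            refine Finset.sum_congr rfl fun x _ => ?_
            rw [if_pos (fun i ℓ => ℓ.elim0), mul_one]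
        _ = ∏ _i : Fin s, ∑ y : Fin n → Bool, μ y := sum_prod_eval _
        _ = 1 := by
            rw [Finset.prod_congr rfl fun i _ => isDist_sum_eq_one hμ, Finset.prod_const_one]
    rw [Finset.sum_congr rfl fun J _ => hx J]
    rw [Finset.sum_const]
    simp
  rw [dTV_fin]
  rw [Finset.sum_congr rfl fun M _ => by rw [h1 M, h2 M, sub_self, abs_zero]]
  rw [Finset.sum_const]
  simp

end Final
end HOAux
end Aux2
open HOAux in
/-- approximate versions of the weight and type distributions of a
good detailing still yield a simulated distribution ε-close to the canonical
(s,q)-distribution of μ. -/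
theorem dsim_approx_close_to_dtest {A : Type*} [Fintype A] (n s q : ℕ) (ε : ℝ)
    (hε : ε ∈ Set.Ioo (0 : ℝ) 1)
    (μ : (Fin n → Bool) → ℝ) (hμ : IsDist μ)
    (ξ : (Fin n → Bool) × A → ℝ) (hξ : IsDetailing ξ μ)
    (η' : A → ℝ) (hη' : IsDist η') (hdη : dTV (weight ξ) η' ≤ ε / (3 * s))
    (Λ' : (A → ℝ) → ℝ) (hΛ' : IsDist Λ') (hΛ'01 : SuppIn01 Λ')
    (hdΛ : dEM (wl1 (weight ξ)) (typeDist ξ) Λ' ≤ ε / (3 * s * q))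
    (hn : 18 * q ^ 2 * (s + 1) / ε ≤ (n : ℝ))
    (hgood : IsGoodDetailing (ε / (9 * (s + 1))) q ξ) :
    dTV (Dsim s q η' Λ') (Dtest s q n μ) ≤ ε := by
  classical
  obtain ⟨hε0, hε1⟩ := hε
  rcases Nat.eq_zero_or_pos q with hq0 | hqpos
  · subst hq0
    rw [case_q0 μ hμ η' hη' Λ' hΛ']
    exact hε0.le
  have hn0 : n ≠ 0 := by
    intro h0
    have hq1 : (1:ℝ) ≤ (q:ℝ) := by exact_mod_cast hqpos
    have hpos : (0:ℝ) < 18 * (q:ℝ)^2 * ((s:ℝ)+1) / ε := by positivity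
    rw [h0] at hn
    norm_num at hn
    linarith
  have hscast : (0:ℝ) ≤ (s:ℝ) := Nat.cast_nonneg s
  -- Step 1 : replace η' by the true weight distribution
  have hstep1 : dTV (Dsim s q η' Λ') (Dsim s q (weight ξ) Λ') ≤ ε/3 := by
    refine (step_eta ξ μ hμ hξ η' hη' Λ' hΛ' hΛ'01).trans ?_
    have h1 : (s:ℝ) * dTV (weight ξ) η' ≤ (s:ℝ) * (ε / (3 * s)) :=
      mul_le_mul_of_nonneg_left hdη hscast
    refine h1.trans ?_
    rcases Nat.eq_zero_or_pos s with hs0 | hs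
    · rw [hs0]
      norm_num
      positivity
    · have hs' : (0:ℝ) < s := by exact_mod_cast hs
      rw [show (s:ℝ) * (ε / (3 * s)) = ε/3 by field_simp]
  -- Step 2 : replace Λ' by the true type distribution
  have hstep2 : dTV (Dsim s q (weight ξ) (typeDist ξ)) (Dsim s q (weight ξ) Λ') ≤ ε/3 := by
    set C : Set ℝ := {c | ∃ T : ((A → ℝ) × (A → ℝ)) → ℝ,
        IsCoupling T (typeDist ξ) Λ' ∧
          c = ∑ᶠ p : (A → ℝ) × (A → ℝ), T p * wl1 (weight ξ) p.1 p.2} with hC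
    have hdEM : dEM (wl1 (weight ξ)) (typeDist ξ) Λ' = sInf C := rfl
    have hne : C.Nonempty :=
      ⟨_, fun p => typeDist ξ p.1 * Λ' p.2, prod_coupling (isDist_typeDist hn0 ξ) hΛ', rfl⟩
    have hb : ∀ c ∈ C, dTV (Dsim s q (weight ξ) (typeDist ξ)) (Dsim s q (weight ξ) Λ')
        ≤ (s:ℝ) * (q:ℝ) * c := by
      rintro c ⟨T0, hT0, rfl⟩
      exact step_EM ξ μ hμ hξ Λ' hΛ' hΛ'01 T0 hT0
    rcases Nat.eq_zero_or_pos s with hs0 | hs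
    · subst hs0
      obtain ⟨c, hc⟩ := hne
      have h := hb c hc
      norm_num at h
      exact h.trans (by linarith)
    · have hsq : (0:ℝ) < (s:ℝ) * (q:ℝ) := by
        have h1 : (0:ℝ) < s := by exact_mod_cast hs
        have h2 : (0:ℝ) < q := by exact_mod_cast hqpos
        positivity
      have hlow : dTV (Dsim s q (weight ξ) (typeDist ξ)) (Dsim s q (weight ξ) Λ')
          / ((s:ℝ)*(q:ℝ)) ≤ sInf C :=
        le_csInf hne fun c hc => by
          rw [div_le_iff₀ hsq]
          exact (hb c hc).trans_eq (by ring)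
      have h2 : dTV (Dsim s q (weight ξ) (typeDist ξ)) (Dsim s q (weight ξ) Λ')
          ≤ sInf C * ((s:ℝ)*(q:ℝ)) := (div_le_iff₀ hsq).1 hlow
      have h3 : sInf C ≤ ε / (3 * (s:ℝ) * (q:ℝ)) := by
        rw [← hdEM]
        exact hdΛ
      have h4 : sInf C * ((s:ℝ)*(q:ℝ)) ≤ (ε / (3*(s:ℝ)*(q:ℝ))) * ((s:ℝ)*(q:ℝ)) :=
        mul_le_mul_of_nonneg_right h3 hsq.le
      have h5 : (ε / (3*(s:ℝ)*(q:ℝ))) * ((s:ℝ)*(q:ℝ)) = ε/3 := by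
        field_simp
      linarith
  -- Step 3 : goodness
  have hε'0 : 0 ≤ ε / (9 * ((s:ℝ)+1)) := by positivity
  have hε'1 : ε / (9 * ((s:ℝ)+1)) ≤ 1 := by
    rw [div_le_one (by positivity)]
    nlinarith [hscast]
  have hstep3 : dTV (Dsim s q (weight ξ) (typeDist ξ)) (Dtest s q n μ) ≤ ε/3 := by
    have h := step_good (s := s) hn0 (ε / (9 * ((s:ℝ)+1))) hε'0 hε'1 ξ μ hμ hξ hgood
    refine h.trans ?_
    have h9 : (0:ℝ) < 9*((s:ℝ)+1) := by positivity
    rw [show 3*(s:ℝ)*(ε/(9*((s:ℝ)+1))) = (3*(s:ℝ)*ε)/(9*((s:ℝ)+1)) by ring]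
    rw [div_le_div_iff₀ h9 (by norm_num : (0:ℝ) < 3)]
    nlinarith [hε0.le, hscast]
  -- combine via the triangle inequality
  have t1 := dTV_tri (Dsim s q η' Λ') (Dsim s q (weight ξ) Λ') (Dtest s q n μ)
  have t2 := dTV_tri (Dsim s q (weight ξ) Λ') (Dsim s q (weight ξ) (typeDist ξ))
    (Dtest s q n μ)
  have hcomm := dTV_comm (Dsim s q (weight ξ) (typeDist ξ)) (Dsim s q (weight ξ) Λ')
  linarith
end

section
/- Fix s, q ∈ ℕ and ε ∈ (0,1). Let μ be a distribution on {0,1}^n and let ξ be a detailing of μ with respect to a finite set A, with weight distribution η and type distribution Λ. Suppose η̃ is a distribution on A with dTV(η, η̃) ≤ ε/(3s), Λ̃ is a finitely supported distribution on [0,1]^A with d_EM^η(Λ, Λ̃) ≤ ε/(3sq), n ≥ 18q²(s+1)/ε, and ξ is (ε/(9(s+1)), q)-good. Then for every function α: {0,1}^{s×q} → [0,1], |E_{M~D_sim(η̃,Λ̃)}[α(M)] − E_{M~D_test}[α(M)]| ≤ ε, where D_test is the canonical (s,q)-distribution for μ. -/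
open scoped BigOperators

open HugeObject

set_option linter.unusedSectionVars false
set_option linter.unusedVariables false
set_option maxHeartbeats 1000000
namespace AuxHO
open Finset Function

lemma sum_piFinset_prod {ι κ : Type*} [Fintype ι] [DecidableEq ι] (t : ι → Finset κ)
    (f : ι → κ → ℝ) :
    ∑ y ∈ Fintype.piFinset t, ∏ i, f i (y i) = ∏ i, ∑ x ∈ t i, f i x :=
  (Finset.prod_univ_sum t f).symm

lemma sum_fn_prod {ι κ : Type*} [Fintype ι] [DecidableEq ι] [Fintype κ] (f : ι → κ → ℝ) :
    ∑ y : ι → κ, ∏ i, f i (y i) = ∏ i, ∑ x, f i x := by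
  rw [← Fintype.piFinset_univ]
  exact sum_piFinset_prod _ f

lemma finsum_fn_prod {ι V : Type*} [Fintype ι] [DecidableEq ι] (f : ι → V → ℝ)
    (hf : ∀ i, (support (f i)).Finite) :
    ∑ᶠ y : ι → V, ∏ i, f i (y i) = ∏ i, ∑ᶠ v, f i v := by
  classical
  rw [finsum_eq_finset_sum_of_support_subset _
      (s := Fintype.piFinset fun i => (hf i).toFinset) ?_]
  · rw [sum_piFinset_prod]
    refine Finset.prod_congr rfl fun i _ => ?_
    exact (finsum_eq_finset_sum_of_support_subset _ (by simp)).symm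
  · intro y hy
    simp only [mem_support] at hy
    rw [mem_coe, Fintype.mem_piFinset]
    intro i
    rw [Set.Finite.mem_toFinset, mem_support]
    exact fun h => hy (Finset.prod_eq_zero (mem_univ i) h)

lemma sum_piFinset_prod_single {ι κ : Type*} [Fintype ι] [DecidableEq ι] (t : Finset κ)
    (g : κ → ℝ) (hg : ∑ x ∈ t, g x = 1) (i₀ : ι) (f : κ → ℝ) :
    ∑ y ∈ Fintype.piFinset (fun _ : ι => t), (∏ i, g (y i)) * f (y i₀)
      = ∑ x ∈ t, g x * f x := by
  classical
  have key : ∀ y : ι → κ, (∏ i, g (y i)) * f (y i₀)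
      = ∏ i, (g (y i) * if i = i₀ then f (y i) else 1) := by
    intro y
    rw [Finset.prod_mul_distrib, Finset.prod_ite_eq' univ i₀ (fun i => f (y i))]
    simp
  rw [Finset.sum_congr rfl fun y _ => key y,
    sum_piFinset_prod (fun _ : ι => t) (fun i x => g x * if i = i₀ then f x else 1)]
  have h2 : ∀ i : ι, (∑ x ∈ t, g x * if i = i₀ then f x else 1)
      = if i = i₀ then ∑ x ∈ t, g x * f x else 1 := by
    intro i; by_cases h : i = i₀ <;> simp [h, hg]
  rw [Finset.prod_congr rfl fun i _ => h2 i, Finset.prod_ite_eq' univ i₀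
    (fun _ => ∑ x ∈ t, g x * f x)]
  simp

lemma sum_piFinset_proj {P V : Type*} [DecidableEq P] [DecidableEq V] (q : ℕ)
    (G : Finset P) (κ : P → ℝ) (π : P → V) (H : (Fin q → V) → ℝ) :
    ∑ S ∈ Fintype.piFinset (fun _ : Fin q => G), (∏ j, κ (S j)) * H (fun j => π (S j))
    = ∑ T ∈ Fintype.piFinset (fun _ : Fin q => G.image π),
        (∏ j, ∑ p ∈ G.filter (fun p => π p = T j), κ p) * H T := by
  classical
  have hmaps : ∀ S ∈ Fintype.piFinset (fun _ : Fin q => G),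
      (fun j => π (S j)) ∈ Fintype.piFinset (fun _ : Fin q => G.image π) := by
    intro S hS
    rw [Fintype.mem_piFinset] at hS ⊢
    exact fun j => Finset.mem_image_of_mem π (hS j)
  rw [← Finset.sum_fiberwise_of_maps_to hmaps]
  refine Finset.sum_congr rfl fun T hT => ?_
  have hfil : (Fintype.piFinset (fun _ : Fin q => G)).filter
      (fun S => (fun j => π (S j)) = T) = Fintype.piFinset (fun j => G.filter (fun p => π p = T j)) := by
    ext S
    simp only [Finset.mem_filter, Fintype.mem_piFinset, funext_iff, Finset.mem_filter]
    aesop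
  rw [hfil, Finset.prod_univ_sum (fun j => G.filter (fun p => π p = T j)) (fun _ p => κ p),
    Finset.sum_mul]
  refine Finset.sum_congr rfl fun S hS => ?_
  rw [Fintype.mem_piFinset] at hS
  have hTS : (fun j => π (S j)) = T := funext fun j => (Finset.mem_filter.mp (hS j)).2
  rw [hTS]

lemma sum_fn_prod' {ι κ : Type*} [Fintype ι] [DecidableEq ι] [Fintype κ] (f : ι → κ → ℝ) :
    ∑ y : ι → κ, ∏ i, f i (y i) = ∏ i, ∑ x, f i x := by
  rw [← Fintype.piFinset_univ]
  exact (Finset.prod_univ_sum _ f).symm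

lemma hybrid_fin {κ : Type*} [Fintype κ] : ∀ (m : ℕ) (P Q : Fin m → κ → ℝ),
    (∀ i x, 0 ≤ P i x) → (∀ i, ∑ x, P i x = 1) →
    (∀ i x, 0 ≤ Q i x) → (∀ i, ∑ x, Q i x = 1) →
    ∑ y : Fin m → κ, |(∏ i, P i (y i)) - ∏ i, Q i (y i)| ≤ ∑ i, ∑ x, |P i x - Q i x| := by
  intro m
  induction m with
  | zero =>
    intro P Q _ _ _ _
    simp
  | succ m ih =>
    intro P Q hP0 hP1 hQ0 hQ1
    classical
    let e : κ × (Fin m → κ) ≃ (Fin (m + 1) → κ) := Fin.consEquiv (fun _ => κ)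
    rw [← Equiv.sum_comp e (fun y => |(∏ i, P i (y i)) - ∏ i, Q i (y i)|),
      Fintype.sum_prod_type]
    simp only [e, Fin.consEquiv_apply]
    have hsplit : ∀ (c : κ) (y' : Fin m → κ),
        |(∏ i, P i (Fin.cons (α := fun _ => κ) c y' i))
            - ∏ i, Q i (Fin.cons (α := fun _ => κ) c y' i)|
          ≤ P 0 c * |(∏ i : Fin m, P i.succ (y' i)) - ∏ i : Fin m, Q i.succ (y' i)|
            + |P 0 c - Q 0 c| * ∏ i : Fin m, Q i.succ (y' i) := by
      intro c y'
      rw [Fin.prod_univ_succ (fun i => P i (Fin.cons (α := fun _ => κ) c y' i)),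
        Fin.prod_univ_succ (fun i => Q i (Fin.cons (α := fun _ => κ) c y' i))]
      simp only [Fin.cons_zero, Fin.cons_succ]
      set a := P 0 c; set b := Q 0 c
      set Am := ∏ i : Fin m, P i.succ (y' i); set Bm := ∏ i : Fin m, Q i.succ (y' i)
      have h1 : a * Am - b * Bm = a * (Am - Bm) + (a - b) * Bm := by ring
      rw [h1]
      refine (abs_add_le _ _).trans ?_
      rw [abs_mul, abs_mul, abs_of_nonneg (hP0 0 c),
        abs_of_nonneg (Finset.prod_nonneg fun i _ => hQ0 i.succ (y' i))]
    have hQsum : ∑ y' : Fin m → κ, ∏ i : Fin m, Q i.succ (y' i) = 1 := by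
      rw [sum_fn_prod' (fun (i : Fin m) (x : κ) => Q i.succ x)]
      exact Finset.prod_eq_one fun i _ => hQ1 i.succ
    calc ∑ c : κ, ∑ y' : Fin m → κ,
          |(∏ i, P i (Fin.cons (α := fun _ => κ) c y' i))
            - ∏ i, Q i (Fin.cons (α := fun _ => κ) c y' i)|
        ≤ ∑ c : κ, ∑ y' : Fin m → κ,
            (P 0 c * |(∏ i : Fin m, P i.succ (y' i)) - ∏ i : Fin m, Q i.succ (y' i)|
              + |P 0 c - Q 0 c| * ∏ i : Fin m, Q i.succ (y' i)) :=
          Finset.sum_le_sum fun c _ => Finset.sum_le_sum fun y' _ => hsplit c y'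
      _ = (∑ c : κ, P 0 c) * (∑ y' : Fin m → κ,
              |(∏ i : Fin m, P i.succ (y' i)) - ∏ i : Fin m, Q i.succ (y' i)|)
            + (∑ c : κ, |P 0 c - Q 0 c|) * (∑ y' : Fin m → κ, ∏ i : Fin m, Q i.succ (y' i)) := by
          simp only [Finset.sum_add_distrib, ← Finset.mul_sum, Finset.sum_mul]
      _ ≤ 1 * (∑ i : Fin m, ∑ x, |P i.succ x - Q i.succ x|) + (∑ c : κ, |P 0 c - Q 0 c|) * 1 := by
          rw [hP1 0, hQsum]
          have h2 := ih (fun i => P i.succ) (fun i => Q i.succ) (fun i x => hP0 i.succ x)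
            (fun i => hP1 i.succ) (fun i x => hQ0 i.succ x) (fun i => hQ1 i.succ)
          nlinarith [Finset.sum_nonneg (fun c (_ : c ∈ (univ : Finset κ)) =>
            abs_nonneg (P 0 c - Q 0 c))]
      _ = ∑ i : Fin (m + 1), ∑ x, |P i x - Q i x| := by
          rw [Fin.sum_univ_succ (fun i => ∑ x, |P i x - Q i x|)]
          ring

lemma hybrid {ι κ : Type*} [Fintype ι] [DecidableEq ι] [Fintype κ] (P Q : ι → κ → ℝ)
    (hP0 : ∀ i x, 0 ≤ P i x) (hP1 : ∀ i, ∑ x, P i x = 1)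
    (hQ0 : ∀ i x, 0 ≤ Q i x) (hQ1 : ∀ i, ∑ x, Q i x = 1) :
    ∑ y : ι → κ, |(∏ i, P i (y i)) - ∏ i, Q i (y i)| ≤ ∑ i, ∑ x, |P i x - Q i x| := by
  classical
  obtain ⟨e⟩ : Nonempty (ι ≃ Fin (Fintype.card ι)) := ⟨Fintype.equivFin ι⟩
  have key := hybrid_fin (Fintype.card ι) (fun k => P (e.symm k)) (fun k => Q (e.symm k))
    (fun k x => hP0 _ x) (fun k => hP1 _) (fun k x => hQ0 _ x) (fun k => hQ1 _)
  have hL : ∑ y : ι → κ, |(∏ i, P i (y i)) - ∏ i, Q i (y i)|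
      = ∑ z : Fin (Fintype.card ι) → κ,
          |(∏ k, P (e.symm k) (z k)) - ∏ k, Q (e.symm k) (z k)| := by
    refine Fintype.sum_equiv (Equiv.arrowCongr e (Equiv.refl κ)) _ _ fun y => ?_
    have h1 : ∏ i : ι, P i (y i)
        = ∏ k, P (e.symm k) ((Equiv.arrowCongr e (Equiv.refl κ)) y k) :=
      Fintype.prod_equiv e _ _ fun i => by simp
    have h2 : ∏ i : ι, Q i (y i)
        = ∏ k, Q (e.symm k) ((Equiv.arrowCongr e (Equiv.refl κ)) y k) :=
      Fintype.prod_equiv e _ _ fun i => by simp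
    rw [h1, h2]
  have hR : ∑ i : ι, ∑ x, |P i x - Q i x|
      = ∑ k : Fin (Fintype.card ι), ∑ x, |P (e.symm k) x - Q (e.symm k) x| :=
    Fintype.sum_equiv e _ _ fun i => by simp
  rw [hL, hR]; exact key


noncomputable section DomainAux

/-- Bernoulli mass function. -/
def bern (t : ℝ) (b : Bool) : ℝ := if b then t else 1 - t

lemma bern_true (t : ℝ) : bern t true = t := by simp [bern]

lemma bern_false (t : ℝ) : bern t false = 1 - t := by simp [bern]

lemma bern_sum (t : ℝ) : ∑ b : Bool, bern t b = 1 := by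
  rw [Fintype.sum_bool, bern_true, bern_false]; ring

lemma bern_nonneg {t : ℝ} (h : t ∈ Set.Icc (0:ℝ) 1) (b : Bool) : 0 ≤ bern t b := by
  obtain ⟨h0, h1⟩ := h
  cases b
  · rw [bern_false]; linarith
  · rw [bern_true]; linarith

lemma bern_abs_sum (t t' : ℝ) : ∑ b : Bool, |bern t b - bern t' b| = 2 * |t - t'| := by
  rw [Fintype.sum_bool, bern_true, bern_true, bern_false, bern_false,
    show (1 - t) - (1 - t') = -(t - t') by ring, abs_neg]
  ring

section Xi

variable {n : ℕ} {A : Type*} [Fintype A] (ξ : (Fin n → Bool) × A → ℝ)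

lemma weight_nonneg (hd : IsDist ξ) (v : A) : 0 ≤ weight ξ v :=
  Finset.sum_nonneg fun x _ => hd.1 (x, v)

lemma weight_sum (hd : IsDist ξ) : ∑ v : A, weight ξ v = 1 := by
  calc ∑ v : A, weight ξ v = ∑ v : A, ∑ x, ξ (x, v) := rfl
    _ = ∑ x, ∑ v : A, ξ (x, v) := Finset.sum_comm
    _ = ∑ p : (Fin n → Bool) × A, ξ p := (Fintype.sum_prod_type ξ).symm
    _ = 1 := by rw [← finsum_eq_sum_of_fintype]; exact hd.2.2

lemma xi_zero (hd : IsDist ξ) {v : A} (hw : weight ξ v = 0) (x : Fin n → Bool) :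
    ξ (x, v) = 0 :=
  (Finset.sum_eq_zero_iff_of_nonneg fun x _ => hd.1 (x, v)).mp hw x (Finset.mem_univ x)

lemma comp_nonneg (hd : IsDist ξ) (v : A) (x : Fin n → Bool) : 0 ≤ component ξ v x :=
  div_nonneg (hd.1 (x, v)) (weight_nonneg ξ hd v)

lemma comp_sum (hw : weight ξ v ≠ 0) : ∑ x, component ξ v x = 1 := by
  unfold component
  rw [← Finset.sum_div]
  exact div_self hw

lemma typeOf_mem (hd : IsDist ξ) (i : Fin n) (v : A) : typeOf ξ i v ∈ Set.Icc (0:ℝ) 1 := by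
  unfold typeOf
  have h0 : (0:ℝ) ≤ ∑ x, if x i then ξ (x, v) else 0 :=
    Finset.sum_nonneg fun x _ => by split_ifs; exacts [hd.1 (x, v), le_refl 0]
  have h1 : (∑ x, if x i then ξ (x, v) else 0) ≤ weight ξ v :=
    Finset.sum_le_sum fun x _ => by split_ifs; exacts [le_refl _, hd.1 (x, v)]
  rcases eq_or_ne (weight ξ v) 0 with hw | hw
  · rw [hw, div_zero]; exact ⟨le_refl 0, zero_le_one⟩
  · have hwpos : 0 < weight ξ v := lt_of_le_of_ne (weight_nonneg ξ hd v) (Ne.symm hw)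
    exact ⟨div_nonneg h0 hwpos.le, (div_le_one hwpos).mpr h1⟩

lemma margAt_comp (hd : IsDist ξ) {v : A} (hw : weight ξ v ≠ 0) (j : Fin n) (b : Bool) :
    margAt (component ξ v) j b = bern (typeOf ξ j v) b := by
  have htrue : (∑ x, if x j then component ξ v x else 0) = typeOf ξ j v := by
    unfold component typeOf
    rw [eq_div_iff hw, Finset.sum_mul]
    refine Finset.sum_congr rfl fun x _ => ?_
    split_ifs
    · exact div_mul_cancel₀ _ hw
    · exact zero_mul _
  cases b
  · -- false
    rw [bern_false]
    have key : ∀ x : Fin n → Bool, (if x j = false then component ξ v x else 0)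
        = component ξ v x - (if x j then component ξ v x else 0) := by
      intro x; cases hxj : x j <;> simp [hxj]
    unfold margAt
    rw [Finset.sum_congr rfl fun x _ => key x, Finset.sum_sub_distrib, comp_sum ξ hw, htrue]
  · -- true
    rw [bern_true]
    unfold margAt
    exact htrue

lemma jointAt_nonneg {q : ℕ} (ν : (Fin n → Bool) → ℝ) (hν : ∀ x, 0 ≤ ν x)
    (J : Fin q → Fin n) (y : Fin q → Bool) : 0 ≤ jointAt ν J y := by
  unfold jointAt
  exact Finset.sum_nonneg fun x _ => by split_ifs; exacts [hν x, le_refl 0]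

lemma jointAt_sum {q : ℕ} (ν : (Fin n → Bool) → ℝ) (J : Fin q → Fin n) :
    ∑ y : Fin q → Bool, jointAt ν J y = ∑ x, ν x := by
  unfold jointAt
  rw [Finset.sum_comm]
  refine Finset.sum_congr rfl fun x _ => ?_
  have key : ∀ y : Fin q → Bool, (if ∀ ℓ, x (J ℓ) = y ℓ then ν x else 0)
      = if (fun ℓ => x (J ℓ)) = y then ν x else 0 := by
    intro y; exact if_congr funext_iff.symm rfl rfl
  rw [Finset.sum_congr rfl fun y _ => key y, Finset.sum_ite_eq]
  simp

lemma sum_xi_cond (hd : IsDist ξ) {q : ℕ} (v : A) (J : Fin q → Fin n) (y : Fin q → Bool) :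
    (∑ x, if ∀ ℓ, x (J ℓ) = y ℓ then ξ (x, v) else 0)
      = weight ξ v * jointAt (component ξ v) J y := by
  rcases eq_or_ne (weight ξ v) 0 with hw | hw
  · rw [hw, zero_mul]
    refine Finset.sum_eq_zero fun x _ => ?_
    rw [xi_zero ξ hd hw x, ite_self]
  · unfold jointAt component
    rw [Finset.mul_sum]
    refine Finset.sum_congr rfl fun x _ => ?_
    split_ifs
    · rw [mul_div_cancel₀ _ hw]
    · exact (mul_zero _).symm

end Xi

end DomainAux

section TypeDistAux

variable {n : ℕ} {A : Type*} [Fintype A] (ξ : (Fin n → Bool) × A → ℝ)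

lemma typeDist_apply (u : A → ℝ) :
    typeDist ξ u = ((Finset.univ.filter fun i : Fin n => typeOf ξ i = u).card : ℝ) / n := by
  classical
  unfold typeDist empDist
  congr 2
  rw [Nat.card_eq_fintype_card]
  exact Fintype.card_subtype _

lemma typeDist_nonneg (u : A → ℝ) : 0 ≤ typeDist ξ u := by
  rw [typeDist_apply]; positivity

lemma typeDist_exists {u : A → ℝ} (h : typeDist ξ u ≠ 0) : ∃ i : Fin n, typeOf ξ i = u := by
  unfold typeDist empDist at h
  have hc : Nat.card {i : Fin n // typeOf ξ i = u} ≠ 0 := by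
    intro h0; rw [h0] at h; simp at h
  obtain ⟨⟨i, hi⟩⟩ := (Nat.card_ne_zero.mp hc).1
  exact ⟨i, hi⟩

lemma typeDist_support_subset :
    Function.support (typeDist ξ) ⊆ ↑(Finset.univ.image (fun i : Fin n => typeOf ξ i)) := by
  intro u hu
  obtain ⟨i, hi⟩ := typeDist_exists ξ hu
  exact Finset.mem_coe.mpr (Finset.mem_image.mpr ⟨i, Finset.mem_univ i, hi⟩)

lemma typeDist_sum (hn : n ≠ 0) :
    ∑ u ∈ Finset.univ.image (fun i : Fin n => typeOf ξ i), typeDist ξ u = 1 := by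
  classical
  rw [Finset.sum_congr rfl fun u _ => typeDist_apply ξ u, ← Finset.sum_div, ← Nat.cast_sum,
    ← Finset.card_eq_sum_card_fiberwise
      (fun x (_ : x ∈ Finset.univ) => Finset.mem_image_of_mem _ (Finset.mem_univ x)),
    Finset.card_univ, Fintype.card_fin]
  exact div_self (by exact_mod_cast hn)

lemma typeDist_isDist (hn : n ≠ 0) : IsDist (typeDist ξ) := by
  refine ⟨typeDist_nonneg ξ,
    Set.Finite.subset (Finset.univ.image _).finite_toSet (typeDist_support_subset ξ), ?_⟩
  rw [finsum_eq_finset_sum_of_support_subset _ (typeDist_support_subset ξ)]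
  exact typeDist_sum ξ hn

end TypeDistAux

section CsumAux

variable {A : Type*} [Fintype A]

/-- The conditional matrix sum. -/
def Csum (s q : ℕ) (lam : A → ℝ) (T : Fin q → A → ℝ) (M : Fin s → Fin q → Bool) : ℝ :=
  ∑ a : Fin s → A, (∏ i, lam (a i)) * ∏ i, ∏ j, bern (T j (a i)) (M i j)

lemma sum_fn_prod_single {ι : Type*} [Fintype ι] [DecidableEq ι]
    (g : A → ℝ) (hg : ∑ x, g x = 1) (i₀ : ι) (f : A → ℝ) :
    ∑ y : ι → A, (∏ i, g (y i)) * f (y i₀) = ∑ x, g x * f x := by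
  rw [← Fintype.piFinset_univ]
  exact sum_piFinset_prod_single Finset.univ g hg i₀ f

lemma Dsim_eq (s q : ℕ) (lam : A → ℝ) (Λ : (A → ℝ) → ℝ)
    (F : Finset (A → ℝ)) (hF : Function.support Λ ⊆ ↑F) (M : Fin s → Fin q → Bool) :
    Dsim s q lam Λ M = ∑ T ∈ Fintype.piFinset (fun _ : Fin q => F),
      (∏ j, Λ (T j)) * Csum s q lam T M := by
  unfold Dsim Csum bern
  refine finsum_eq_finset_sum_of_support_subset _ ?_
  intro T hT
  rw [Finset.mem_coe, Fintype.mem_piFinset]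
  intro j
  refine hF ?_
  rw [Function.mem_support] at hT ⊢
  intro h
  exact hT (by rw [Finset.prod_eq_zero (Finset.mem_univ j) h, zero_mul])

lemma bernMat_sum (s q : ℕ) (T : Fin q → A → ℝ) (a : Fin s → A) :
    ∑ M : Fin s → Fin q → Bool, ∏ i, ∏ j, bern (T j (a i)) (M i j) = 1 := by
  rw [sum_fn_prod (fun (i : Fin s) (row : Fin q → Bool) => ∏ j, bern (T j (a i)) (row j))]
  refine Finset.prod_eq_one fun i _ => ?_
  rw [sum_fn_prod (fun (j : Fin q) (b : Bool) => bern (T j (a i)) b)]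
  exact Finset.prod_eq_one fun j _ => bern_sum _

lemma bernMat_nonneg (s q : ℕ) (T : Fin q → A → ℝ)
    (hT : ∀ j v, T j v ∈ Set.Icc (0:ℝ) 1) (a : Fin s → A) (M : Fin s → Fin q → Bool) :
    0 ≤ ∏ i, ∏ j, bern (T j (a i)) (M i j) :=
  Finset.prod_nonneg fun i _ => Finset.prod_nonneg fun j _ => bern_nonneg (hT j (a i)) _

lemma Csum_sum_M (s q : ℕ) (lam : A → ℝ) (hlam : ∑ v, lam v = 1) (T : Fin q → A → ℝ) :
    ∑ M : Fin s → Fin q → Bool, Csum s q lam T M = 1 := by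
  unfold Csum
  rw [Finset.sum_comm]
  have key : ∀ a : Fin s → A,
      ∑ M : Fin s → Fin q → Bool, (∏ i, lam (a i)) * ∏ i, ∏ j, bern (T j (a i)) (M i j)
        = ∏ i, lam (a i) := by
    intro a
    rw [← Finset.mul_sum, bernMat_sum s q T a, mul_one]
  rw [Finset.sum_congr rfl fun a _ => key a, sum_fn_prod (fun (_ : Fin s) (v : A) => lam v)]
  exact Finset.prod_eq_one fun i _ => hlam

lemma Csum_pair (s q : ℕ) (lam : A → ℝ) (T : Fin q → A → ℝ) (h : (Fin s → Fin q → Bool) → ℝ) :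
    ∑ M : Fin s → Fin q → Bool, Csum s q lam T M * h M
      = ∑ a : Fin s → A, (∏ i, lam (a i)) *
          ∑ M : Fin s → Fin q → Bool, (∏ i, ∏ j, bern (T j (a i)) (M i j)) * h M := by
  unfold Csum
  simp_rw [Finset.sum_mul]
  rw [Finset.sum_comm]
  refine Finset.sum_congr rfl fun a _ => ?_
  rw [Finset.mul_sum]
  exact Finset.sum_congr rfl fun M _ => by ring

lemma Csum_pair_bound (s q : ℕ) (T : Fin q → A → ℝ) (hT : ∀ j v, T j v ∈ Set.Icc (0:ℝ) 1)
    (h : (Fin s → Fin q → Bool) → ℝ) (hh : ∀ M, |h M| ≤ 1/2) (a : Fin s → A) :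
    |∑ M : Fin s → Fin q → Bool, (∏ i, ∏ j, bern (T j (a i)) (M i j)) * h M| ≤ 1/2 := by
  calc |∑ M : Fin s → Fin q → Bool, (∏ i, ∏ j, bern (T j (a i)) (M i j)) * h M|
      ≤ ∑ M : Fin s → Fin q → Bool, |(∏ i, ∏ j, bern (T j (a i)) (M i j)) * h M| :=
        Finset.abs_sum_le_sum_abs _ _
    _ ≤ ∑ M : Fin s → Fin q → Bool, (∏ i, ∏ j, bern (T j (a i)) (M i j)) * (1/2) := by
        refine Finset.sum_le_sum fun M _ => ?_
        rw [abs_mul, abs_of_nonneg (bernMat_nonneg s q T hT a M)]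
        exact mul_le_mul_of_nonneg_left (hh M) (bernMat_nonneg s q T hT a M)
    _ = 1/2 := by rw [← Finset.sum_mul, bernMat_sum s q T a, one_mul]

end CsumAux

section DiffAux

variable {A : Type*} [Fintype A]

lemma Csum_diff_lam (s q : ℕ) (lam lam' : A → ℝ)
    (hl0 : ∀ v, 0 ≤ lam v) (hl1 : ∑ v, lam v = 1)
    (hl0' : ∀ v, 0 ≤ lam' v) (hl1' : ∑ v, lam' v = 1)
    (T : Fin q → A → ℝ) (hT : ∀ j v, T j v ∈ Set.Icc (0:ℝ) 1)
    (h : (Fin s → Fin q → Bool) → ℝ) (hh : ∀ M, |h M| ≤ 1/2) :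
    |∑ M : Fin s → Fin q → Bool, Csum s q lam' T M * h M
      - ∑ M : Fin s → Fin q → Bool, Csum s q lam T M * h M|
      ≤ (s : ℝ) / 2 * ∑ v, |lam' v - lam v| := by
  classical
  rw [Csum_pair, Csum_pair, ← Finset.sum_sub_distrib]
  set g : (Fin s → A) → ℝ := fun a =>
    ∑ M : Fin s → Fin q → Bool, (∏ i, ∏ j, bern (T j (a i)) (M i j)) * h M with hg
  calc |∑ a : Fin s → A, ((∏ i, lam' (a i)) * g a - (∏ i, lam (a i)) * g a)|
      = |∑ a : Fin s → A, ((∏ i, lam' (a i)) - (∏ i, lam (a i))) * g a| := by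
        congr 1; exact Finset.sum_congr rfl fun a _ => by ring
    _ ≤ ∑ a : Fin s → A, |(∏ i, lam' (a i)) - (∏ i, lam (a i))| * |g a| :=
        (Finset.abs_sum_le_sum_abs _ _).trans
          (le_of_eq (Finset.sum_congr rfl fun a _ => abs_mul _ _))
    _ ≤ ∑ a : Fin s → A, |(∏ i, lam' (a i)) - (∏ i, lam (a i))| * (1/2) :=
        Finset.sum_le_sum fun a _ =>
          mul_le_mul_of_nonneg_left (Csum_pair_bound s q T hT h hh a) (abs_nonneg _)
    _ = (1/2) * ∑ a : Fin s → A, |(∏ i, lam' (a i)) - (∏ i, lam (a i))| := by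
        rw [← Finset.sum_mul]; ring
    _ ≤ (1/2) * ∑ _i : Fin s, ∑ v, |lam' v - lam v| := by
        refine mul_le_mul_of_nonneg_left ?_ (by norm_num)
        exact hybrid (fun _ v => lam' v) (fun _ v => lam v)
          (fun _ => hl0') (fun _ => hl1') (fun _ => hl0) (fun _ => hl1)
    _ = (s : ℝ)/2 * ∑ v, |lam' v - lam v| := by
        rw [Finset.sum_const, Finset.card_univ, Fintype.card_fin, nsmul_eq_mul]; ring

lemma bernMat_diff (s q : ℕ) (T T' : Fin q → A → ℝ)
    (hT : ∀ j v, T j v ∈ Set.Icc (0:ℝ) 1) (hT' : ∀ j v, T' j v ∈ Set.Icc (0:ℝ) 1)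
    (a : Fin s → A) (h : (Fin s → Fin q → Bool) → ℝ) (hh : ∀ M, |h M| ≤ 1/2) :
    |(∑ M : Fin s → Fin q → Bool, (∏ i, ∏ j, bern (T' j (a i)) (M i j)) * h M)
      - ∑ M : Fin s → Fin q → Bool, (∏ i, ∏ j, bern (T j (a i)) (M i j)) * h M|
    ≤ ∑ i : Fin s, ∑ j : Fin q, |T' j (a i) - T j (a i)| := by
  classical
  rw [← Finset.sum_sub_distrib]
  have habs : ∀ M : Fin s → Fin q → Bool,
      |(∏ i, ∏ j, bern (T' j (a i)) (M i j)) * h M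
        - (∏ i, ∏ j, bern (T j (a i)) (M i j)) * h M|
      ≤ |(∏ i, ∏ j, bern (T' j (a i)) (M i j)) - ∏ i, ∏ j, bern (T j (a i)) (M i j)| * (1/2) := by
    intro M
    rw [show (∏ i, ∏ j, bern (T' j (a i)) (M i j)) * h M
        - (∏ i, ∏ j, bern (T j (a i)) (M i j)) * h M
      = ((∏ i, ∏ j, bern (T' j (a i)) (M i j)) - ∏ i, ∏ j, bern (T j (a i)) (M i j)) * h M
      by ring, abs_mul]
    exact mul_le_mul_of_nonneg_left (hh M) (abs_nonneg _)
  calc |∑ M : Fin s → Fin q → Bool, ((∏ i, ∏ j, bern (T' j (a i)) (M i j)) * h M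
          - (∏ i, ∏ j, bern (T j (a i)) (M i j)) * h M)|
      ≤ ∑ M : Fin s → Fin q → Bool,
          |(∏ i, ∏ j, bern (T' j (a i)) (M i j)) - ∏ i, ∏ j, bern (T j (a i)) (M i j)| * (1/2) :=
        (Finset.abs_sum_le_sum_abs _ _).trans (Finset.sum_le_sum fun M _ => habs M)
    _ = (1/2) * ∑ M : Fin s → Fin q → Bool,
          |(∏ i, ∏ j, bern (T' j (a i)) (M i j)) - ∏ i, ∏ j, bern (T j (a i)) (M i j)| := by
        rw [← Finset.sum_mul]; ring
    _ ≤ (1/2) * ∑ i : Fin s, ∑ row : Fin q → Bool,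
          |(∏ j, bern (T' j (a i)) (row j)) - ∏ j, bern (T j (a i)) (row j)| := by
        refine mul_le_mul_of_nonneg_left ?_ (by norm_num)
        have H := hybrid (ι := Fin s) (κ := Fin q → Bool)
          (fun i row => ∏ j, bern (T' j (a i)) (row j))
          (fun i row => ∏ j, bern (T j (a i)) (row j))
          (fun i row => Finset.prod_nonneg fun j _ => bern_nonneg (hT' j (a i)) _)
          (fun i => by
            rw [sum_fn_prod (fun (j : Fin q) (b : Bool) => bern (T' j (a i)) b)]
            exact Finset.prod_eq_one fun j _ => bern_sum _)
          (fun i row => Finset.prod_nonneg fun j _ => bern_nonneg (hT j (a i)) _)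
          (fun i => by
            rw [sum_fn_prod (fun (j : Fin q) (b : Bool) => bern (T j (a i)) b)]
            exact Finset.prod_eq_one fun j _ => bern_sum _)
        simpa using H
    _ ≤ (1/2) * ∑ i : Fin s, ∑ j : Fin q, ∑ b : Bool,
          |bern (T' j (a i)) b - bern (T j (a i)) b| := by
        refine mul_le_mul_of_nonneg_left (Finset.sum_le_sum fun i _ => ?_) (by norm_num)
        have H := hybrid (ι := Fin q) (κ := Bool)
          (fun j b => bern (T' j (a i)) b) (fun j b => bern (T j (a i)) b)
          (fun j b => bern_nonneg (hT' j (a i)) b) (fun j => bern_sum _)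
          (fun j b => bern_nonneg (hT j (a i)) b) (fun j => bern_sum _)
        simpa using H
    _ = ∑ i : Fin s, ∑ j : Fin q, |T' j (a i) - T j (a i)| := by
        simp_rw [bern_abs_sum, ← Finset.mul_sum]
        ring

lemma Csum_diff_T (s q : ℕ) (lam : A → ℝ) (hl0 : ∀ v, 0 ≤ lam v) (hl1 : ∑ v, lam v = 1)
    (T T' : Fin q → A → ℝ) (hT : ∀ j v, T j v ∈ Set.Icc (0:ℝ) 1)
    (hT' : ∀ j v, T' j v ∈ Set.Icc (0:ℝ) 1)
    (h : (Fin s → Fin q → Bool) → ℝ) (hh : ∀ M, |h M| ≤ 1/2) :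
    |∑ M : Fin s → Fin q → Bool, Csum s q lam T' M * h M
      - ∑ M : Fin s → Fin q → Bool, Csum s q lam T M * h M|
      ≤ (s : ℝ) * ∑ j : Fin q, ∑ v, lam v * |T' j v - T j v| := by
  classical
  rw [Csum_pair, Csum_pair, ← Finset.sum_sub_distrib]
  calc |∑ a : Fin s → A, ((∏ i, lam (a i)) *
          (∑ M : Fin s → Fin q → Bool, (∏ i, ∏ j, bern (T' j (a i)) (M i j)) * h M)
        - (∏ i, lam (a i)) *
          (∑ M : Fin s → Fin q → Bool, (∏ i, ∏ j, bern (T j (a i)) (M i j)) * h M))|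
      ≤ ∑ a : Fin s → A, (∏ i, lam (a i)) *
          |(∑ M : Fin s → Fin q → Bool, (∏ i, ∏ j, bern (T' j (a i)) (M i j)) * h M)
            - ∑ M : Fin s → Fin q → Bool, (∏ i, ∏ j, bern (T j (a i)) (M i j)) * h M| := by
        refine (Finset.abs_sum_le_sum_abs _ _).trans
          (le_of_eq (Finset.sum_congr rfl fun a _ => ?_))
        rw [← mul_sub, abs_mul,
          abs_of_nonneg (Finset.prod_nonneg fun i _ => hl0 (a i))]
    _ ≤ ∑ a : Fin s → A, (∏ i, lam (a i)) *
          ∑ i : Fin s, ∑ j : Fin q, |T' j (a i) - T j (a i)| :=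
        Finset.sum_le_sum fun a _ => mul_le_mul_of_nonneg_left
          (bernMat_diff s q T T' hT hT' a h hh)
          (Finset.prod_nonneg fun i _ => hl0 (a i))
    _ = ∑ i : Fin s, ∑ j : Fin q, ∑ a : Fin s → A,
          (∏ i', lam (a i')) * |T' j (a i) - T j (a i)| := by
        simp_rw [Finset.mul_sum]
        rw [Finset.sum_comm]
        exact Finset.sum_congr rfl fun i _ => Finset.sum_comm
    _ = ∑ _i : Fin s, ∑ j : Fin q, ∑ v, lam v * |T' j v - T j v| := by
        refine Finset.sum_congr rfl fun i _ => Finset.sum_congr rfl fun j _ => ?_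
        exact sum_fn_prod_single lam hl1 i (fun v => |T' j v - T j v|)
    _ = (s : ℝ) * ∑ j : Fin q, ∑ v, lam v * |T' j v - T j v| := by
        rw [Finset.sum_const, Finset.card_univ, Fintype.card_fin, nsmul_eq_mul]

end DiffAux

section NormAux

variable {A : Type*} [Fintype A]

lemma Dsim_sum_one (s q : ℕ) (lam : A → ℝ) (hlam : ∑ v, lam v = 1)
    (Λ : (A → ℝ) → ℝ) (F : Finset (A → ℝ)) (hF : Function.support Λ ⊆ ↑F)
    (hΛ1 : ∑ᶠ u, Λ u = 1) :
    ∑ M : Fin s → Fin q → Bool, Dsim s q lam Λ M = 1 := by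
  classical
  rw [Finset.sum_congr rfl fun M _ => Dsim_eq s q lam Λ F hF M, Finset.sum_comm]
  have key : ∀ T : Fin q → A → ℝ,
      ∑ M : Fin s → Fin q → Bool, (∏ j, Λ (T j)) * Csum s q lam T M = ∏ j, Λ (T j) := by
    intro T; rw [← Finset.mul_sum, Csum_sum_M s q lam hlam T, mul_one]
  rw [Finset.sum_congr rfl fun T _ => key T,
    sum_piFinset_prod (fun _ : Fin q => F) (fun _ u => Λ u)]
  have hFΛ : ∑ u ∈ F, Λ u = 1 := by
    rw [← finsum_eq_finset_sum_of_support_subset _ hF]; exact hΛ1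
  rw [Finset.prod_congr rfl fun j _ => hFΛ]
  exact Finset.prod_const_one

lemma sum_typeDist_pair {n : ℕ} (ξ : (Fin n → Bool) × A → ℝ) (q : ℕ)
    (H : (Fin q → (A → ℝ)) → ℝ) :
    ∑ T ∈ Fintype.piFinset
        (fun _ : Fin q => Finset.univ.image (fun i : Fin n => typeOf ξ i)),
        (∏ j, typeDist ξ (T j)) * H T
      = (∑ J : Fin q → Fin n, H (fun j => typeOf ξ (J j))) / (n : ℝ) ^ q := by
  classical
  have himg : Finset.image (fun J : Fin q → Fin n => fun j => typeOf ξ (J j)) Finset.univ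
      = Fintype.piFinset (fun _ : Fin q => Finset.univ.image (fun i : Fin n => typeOf ξ i)) := by
    ext T
    simp only [Finset.mem_image, Fintype.mem_piFinset, Finset.mem_univ, true_and]
    constructor
    · rintro ⟨J, rfl⟩
      exact fun j => ⟨J j, rfl⟩
    · intro hT
      choose Jf hJf using hT
      exact ⟨Jf, funext fun j => hJf j⟩
  have hcard : ∀ T : Fin q → A → ℝ,
      (Finset.univ.filter fun J : Fin q → Fin n => (fun j => typeOf ξ (J j)) = T).card
      = ∏ j, (Finset.univ.filter fun i : Fin n => typeOf ξ i = T j).card := by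
    intro T
    rw [← Fintype.card_piFinset]
    congr 1
    ext J
    simp only [Finset.mem_filter, Finset.mem_univ, true_and, Fintype.mem_piFinset, funext_iff]
  rw [Finset.sum_comp (fun T : Fin q → A → ℝ => H T)
    (fun J : Fin q → Fin n => fun j => typeOf ξ (J j)), himg, Finset.sum_div]
  refine Finset.sum_congr rfl fun T _ => ?_
  rw [hcard T, Finset.prod_congr rfl fun j (_ : j ∈ Finset.univ) => typeDist_apply ξ (T j),
    Finset.prod_div_distrib, Finset.prod_const, Finset.card_univ, Fintype.card_fin,
    nsmul_eq_mul, Nat.cast_prod, div_mul_eq_mul_div]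

lemma Dtest_eq {n : ℕ} (s q : ℕ) (μ : (Fin n → Bool) → ℝ) (ξ : (Fin n → Bool) × A → ℝ)
    (hd : IsDist ξ) (hmarg : ∀ x, ∑ v : A, ξ (x, v) = μ x) (M : Fin s → Fin q → Bool) :
    Dtest s q n μ M = (∑ J : Fin q → Fin n, ∑ a : Fin s → A,
      (∏ i, weight ξ (a i)) * ∏ i, jointAt (component ξ (a i)) J (M i)) / (n : ℝ) ^ q := by
  unfold Dtest
  congr 1
  refine Finset.sum_congr rfl fun J _ => ?_
  have h1 : ∀ x : Fin s → (Fin n → Bool),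
      (∏ i, μ (x i)) * (if ∀ i ℓ, x i (J ℓ) = M i ℓ then (1:ℝ) else 0)
        = ∏ i, (if ∀ ℓ, x i (J ℓ) = M i ℓ then μ (x i) else 0) := by
    intro x
    by_cases hC : ∀ i ℓ, x i (J ℓ) = M i ℓ
    · rw [if_pos hC, mul_one]
      exact Finset.prod_congr rfl fun i _ => (if_pos (hC i)).symm
    · rw [if_neg hC, mul_zero]
      obtain ⟨i, hi⟩ := not_forall.mp hC
      exact (Finset.prod_eq_zero (Finset.mem_univ i)
        (show (if ∀ ℓ, x i (J ℓ) = M i ℓ then μ (x i) else 0) = 0 from if_neg hi)).symm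
  rw [Finset.sum_congr rfl fun x _ => h1 x,
    sum_fn_prod (fun (i : Fin s) (x₁ : Fin n → Bool) =>
      if ∀ ℓ, x₁ (J ℓ) = M i ℓ then μ x₁ else 0)]
  have h2 : ∀ i : Fin s, (∑ x₁ : Fin n → Bool, if ∀ ℓ, x₁ (J ℓ) = M i ℓ then μ x₁ else 0)
      = ∑ v : A, weight ξ v * jointAt (component ξ v) J (M i) := by
    intro i
    have : ∀ x₁ : Fin n → Bool, (if ∀ ℓ, x₁ (J ℓ) = M i ℓ then μ x₁ else 0)
        = ∑ v : A, (if ∀ ℓ, x₁ (J ℓ) = M i ℓ then ξ (x₁, v) else 0) := by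
      intro x₁
      split_ifs with hC
      · exact (hmarg x₁).symm
      · exact Finset.sum_const_zero.symm
    rw [Finset.sum_congr rfl fun x₁ _ => this x₁, Finset.sum_comm]
    exact Finset.sum_congr rfl fun v _ => sum_xi_cond ξ hd v J (M i)
  rw [Finset.prod_congr rfl fun i (_ : i ∈ Finset.univ) => h2 i,
    Finset.prod_univ_sum (fun _ : Fin s => (Finset.univ : Finset A))
      (fun i v => weight ξ v * jointAt (component ξ v) J (M i))]
  rw [← Fintype.piFinset_univ]
  refine Finset.sum_congr rfl fun a _ => ?_
  rw [Finset.prod_mul_distrib]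

lemma Dtest_sum_one {n : ℕ} (s q : ℕ) (hn : n ≠ 0) (μ : (Fin n → Bool) → ℝ)
    (hμ1 : ∑ x, μ x = 1) :
    ∑ M : Fin s → Fin q → Bool, Dtest s q n μ M = 1 := by
  classical
  unfold Dtest
  rw [← Finset.sum_div, Finset.sum_comm]
  have key : ∀ J : Fin q → Fin n,
      ∑ M : Fin s → Fin q → Bool, ∑ x : Fin s → Fin n → Bool,
        (∏ i, μ (x i)) * (if ∀ i ℓ, x i (J ℓ) = M i ℓ then (1:ℝ) else 0) = 1 := by
    intro J
    rw [Finset.sum_comm]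
    have inner : ∀ x : Fin s → Fin n → Bool,
        ∑ M : Fin s → Fin q → Bool,
          (∏ i, μ (x i)) * (if ∀ i ℓ, x i (J ℓ) = M i ℓ then (1:ℝ) else 0) = ∏ i, μ (x i) := by
      intro x
      rw [← Finset.mul_sum]
      have hone : ∑ M : Fin s → Fin q → Bool,
          (if ∀ i ℓ, x i (J ℓ) = M i ℓ then (1:ℝ) else 0) = 1 := by
        have hcong : ∀ M : Fin s → Fin q → Bool,
            (if ∀ i ℓ, x i (J ℓ) = M i ℓ then (1:ℝ) else 0)
              = if (fun i ℓ => x i (J ℓ)) = M then (1:ℝ) else 0 := by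
          intro M
          refine if_congr ?_ rfl rfl
          simp [funext_iff]
        rw [Finset.sum_congr rfl fun M _ => hcong M, Finset.sum_ite_eq]
        simp
      rw [hone, mul_one]
    rw [Finset.sum_congr rfl fun x _ => inner x,
      sum_fn_prod (fun (_ : Fin s) (x₁ : Fin n → Bool) => μ x₁)]
    exact Finset.prod_eq_one fun i _ => hμ1
  rw [Finset.sum_congr rfl fun J _ => key J, Finset.sum_const, Finset.card_univ,
    Fintype.card_fun, Fintype.card_fin, Fintype.card_fin, nsmul_eq_mul, mul_one]
  rw [Nat.cast_pow, div_self (pow_ne_zero q (Nat.cast_ne_zero.mpr hn))]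

end NormAux

section RowAux

open scoped Classical

variable {A : Type*} [Fintype A]

lemma dTV_fintype {κ : Type*} [Fintype κ] (P Q : κ → ℝ) :
    dTV P Q = (1/2) * ∑ y, |P y - Q y| := by
  unfold dTV
  rw [finsum_eq_sum_of_fintype]

lemma half_abs_sum_le_one {κ : Type*} [Fintype κ] (P Q : κ → ℝ)
    (hP0 : ∀ y, 0 ≤ P y) (hP1 : ∑ y, P y = 1)
    (hQ0 : ∀ y, 0 ≤ Q y) (hQ1 : ∑ y, Q y = 1) :
    (1/2) * ∑ y, |P y - Q y| ≤ 1 := by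
  have : ∑ y, |P y - Q y| ≤ ∑ y, (P y + Q y) :=
    Finset.sum_le_sum fun y _ => (abs_sub _ _).trans
      (by rw [abs_of_nonneg (hP0 y), abs_of_nonneg (hQ0 y)])
  rw [Finset.sum_add_distrib, hP1, hQ1] at this
  linarith

lemma row_bound {n : ℕ} (ξ : (Fin n → Bool) × A → ℝ) (hd : IsDist ξ) (s q : ℕ)
    (ε' : ℝ) (hε0 : 0 ≤ ε') (J : Fin q → Fin n) (a : Fin s → A)
    (hw : ∀ i, weight ξ (a i) ≠ 0)
    (h : (Fin s → Fin q → Bool) → ℝ) (hh : ∀ M, |h M| ≤ 1/2) :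
    |(∑ M : Fin s → Fin q → Bool, (∏ i, ∏ j, bern (typeOf ξ (J j) (a i)) (M i j)) * h M)
      - ∑ M : Fin s → Fin q → Bool, (∏ i, jointAt (component ξ (a i)) J (M i)) * h M|
    ≤ ∑ i : Fin s, (if EpsIndep ε' (component ξ (a i)) J then ε' else 1) := by
  have hbern_marg : ∀ (i : Fin s) (row : Fin q → Bool),
      (∏ j, bern (typeOf ξ (J j) (a i)) (row j))
        = ∏ j, margAt (component ξ (a i)) (J j) (row j) :=
    fun i row => Finset.prod_congr rfl fun j _ => (margAt_comp ξ hd (hw i) (J j) (row j)).symm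
  have hP0 : ∀ (i : Fin s) (row : Fin q → Bool),
      0 ≤ ∏ j, bern (typeOf ξ (J j) (a i)) (row j) :=
    fun i row => Finset.prod_nonneg fun j _ => bern_nonneg (typeOf_mem ξ hd (J j) (a i)) _
  have hP1 : ∀ i : Fin s,
      ∑ row : Fin q → Bool, ∏ j, bern (typeOf ξ (J j) (a i)) (row j) = 1 := by
    intro i
    rw [sum_fn_prod (fun (j : Fin q) (b : Bool) => bern (typeOf ξ (J j) (a i)) b)]
    exact Finset.prod_eq_one fun j _ => bern_sum _
  have hQ0 : ∀ (i : Fin s) (row : Fin q → Bool),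
      0 ≤ jointAt (component ξ (a i)) J row :=
    fun i row => jointAt_nonneg _ (comp_nonneg ξ hd (a i)) J row
  have hQ1 : ∀ i : Fin s, ∑ row : Fin q → Bool, jointAt (component ξ (a i)) J row = 1 := by
    intro i
    rw [jointAt_sum]
    exact comp_sum ξ (hw i)
  have hrow : ∀ i : Fin s,
      (1/2) * ∑ row : Fin q → Bool,
          |(∏ j, bern (typeOf ξ (J j) (a i)) (row j)) - jointAt (component ξ (a i)) J row|
        ≤ (if EpsIndep ε' (component ξ (a i)) J then ε' else 1) := by
    intro i
    split_ifs with hI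
    · unfold EpsIndep at hI
      rw [dTV_fintype] at hI
      calc (1/2) * ∑ row : Fin q → Bool,
            |(∏ j, bern (typeOf ξ (J j) (a i)) (row j)) - jointAt (component ξ (a i)) J row|
          = (1/2) * ∑ row : Fin q → Bool,
            |jointAt (component ξ (a i)) J row - ∏ ℓ, margAt (component ξ (a i)) (J ℓ) (row ℓ)| := by
            congr 1
            refine Finset.sum_congr rfl fun row _ => ?_
            rw [hbern_marg i row, abs_sub_comm]
        _ ≤ ε' := hI
    · refine half_abs_sum_le_one _ _ (hP0 i) (hP1 i) (hQ0 i) (hQ1 i)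
  calc |(∑ M : Fin s → Fin q → Bool, (∏ i, ∏ j, bern (typeOf ξ (J j) (a i)) (M i j)) * h M)
      - ∑ M : Fin s → Fin q → Bool, (∏ i, jointAt (component ξ (a i)) J (M i)) * h M|
      = |∑ M : Fin s → Fin q → Bool, ((∏ i, ∏ j, bern (typeOf ξ (J j) (a i)) (M i j))
          - ∏ i, jointAt (component ξ (a i)) J (M i)) * h M| := by
        rw [← Finset.sum_sub_distrib]
        congr 1
        exact Finset.sum_congr rfl fun M _ => by ring
    _ ≤ ∑ M : Fin s → Fin q → Bool, |(∏ i, ∏ j, bern (typeOf ξ (J j) (a i)) (M i j))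
          - ∏ i, jointAt (component ξ (a i)) J (M i)| * (1/2) := by
        refine (Finset.abs_sum_le_sum_abs _ _).trans (Finset.sum_le_sum fun M _ => ?_)
        rw [abs_mul]
        exact mul_le_mul_of_nonneg_left (hh M) (abs_nonneg _)
    _ = (1/2) * ∑ M : Fin s → Fin q → Bool, |(∏ i, ∏ j, bern (typeOf ξ (J j) (a i)) (M i j))
          - ∏ i, jointAt (component ξ (a i)) J (M i)| := by
        rw [← Finset.sum_mul]; ring
    _ ≤ (1/2) * ∑ i : Fin s, ∑ row : Fin q → Bool,
          |(∏ j, bern (typeOf ξ (J j) (a i)) (row j)) - jointAt (component ξ (a i)) J row| := by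
        refine mul_le_mul_of_nonneg_left ?_ (by norm_num)
        have H := hybrid (ι := Fin s) (κ := Fin q → Bool)
          (fun i row => ∏ j, bern (typeOf ξ (J j) (a i)) (row j))
          (fun i row => jointAt (component ξ (a i)) J row)
          hP0 hP1 hQ0 hQ1
        simpa using H
    _ = ∑ i : Fin s, ((1/2) * ∑ row : Fin q → Bool,
          |(∏ j, bern (typeOf ξ (J j) (a i)) (row j)) - jointAt (component ξ (a i)) J row|) := by
        rw [Finset.mul_sum]
    _ ≤ ∑ i : Fin s, (if EpsIndep ε' (component ξ (a i)) J then ε' else 1) :=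
        Finset.sum_le_sum fun i _ => hrow i

lemma good_count {n q : ℕ} (ν : (Fin n → Bool) → ℝ) (ε' : ℝ) (hε0 : 0 ≤ ε') (hε1 : ε' ≤ 1)
    (hgood : IsGoodDist ε' q ν) :
    (∑ J : Fin q → Fin n, (if EpsIndep ε' ν J then ε' else 1)) ≤ 2 * ε' * (n:ℝ)^q := by
  have hcard : (1 - ε') * (n:ℝ)^q
      ≤ ((Finset.univ.filter fun J : Fin q → Fin n => EpsIndep ε' ν J).card : ℝ) := by
    have hg := hgood
    unfold IsGoodDist at hg
    rwa [Nat.card_eq_fintype_card, Fintype.card_subtype] at hg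
  have htot : ((Finset.univ.filter fun J : Fin q → Fin n => EpsIndep ε' ν J).card : ℝ)
      + ((Finset.univ.filter fun J : Fin q → Fin n => ¬ EpsIndep ε' ν J).card : ℝ)
      = (n:ℝ)^q := by
    rw [← Nat.cast_add, Finset.card_filter_add_card_filter_not,
      Finset.card_univ, Fintype.card_fun, Fintype.card_fin, Fintype.card_fin, Nat.cast_pow]
  have hsplit : (∑ J : Fin q → Fin n, (if EpsIndep ε' ν J then ε' else 1))
      = ε' * ((Finset.univ.filter fun J : Fin q → Fin n => EpsIndep ε' ν J).card : ℝ)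
        + ((Finset.univ.filter fun J : Fin q → Fin n => ¬ EpsIndep ε' ν J).card : ℝ) := by
    rw [Finset.sum_ite, Finset.sum_const, Finset.sum_const, nsmul_eq_mul, nsmul_eq_mul,
      mul_one, mul_comm]
  have hle : ((Finset.univ.filter fun J : Fin q → Fin n => EpsIndep ε' ν J).card : ℝ)
      ≤ (n:ℝ)^q := by
    have h0 : (0:ℝ) ≤ ((Finset.univ.filter
        fun J : Fin q → Fin n => ¬ EpsIndep ε' ν J).card : ℝ) := Nat.cast_nonneg _
    linarith
  rw [hsplit]
  nlinarith [(by positivity : (0:ℝ) ≤ (n:ℝ)^q)]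

end RowAux

section CouplingAux

variable {V : Type*} [DecidableEq V]

lemma prod_coupling (Λ Λ' : V → ℝ) (h1 : IsDist Λ) (h2 : IsDist Λ') :
    IsCoupling (fun p : V × V => Λ p.1 * Λ' p.2) Λ Λ' := by
  classical
  have hsub : Function.support (fun p : V × V => Λ p.1 * Λ' p.2)
      ⊆ ↑(h1.2.1.toFinset ×ˢ h2.2.1.toFinset) := by
    intro p hp
    rw [Function.mem_support] at hp
    rw [Finset.mem_coe, Finset.mem_product, Set.Finite.mem_toFinset, Set.Finite.mem_toFinset]
    exact ⟨fun h => hp (by rw [h, zero_mul]), fun h => hp (by rw [h, mul_zero])⟩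
  have hΛsum : ∑ x ∈ h1.2.1.toFinset, Λ x = 1 := by
    rw [← finsum_eq_finset_sum_of_support_subset _ (by simp)]
    exact h1.2.2
  have hΛ'sum : ∑ y ∈ h2.2.1.toFinset, Λ' y = 1 := by
    rw [← finsum_eq_finset_sum_of_support_subset _ (by simp)]
    exact h2.2.2
  refine ⟨⟨fun p => mul_nonneg (h1.1 p.1) (h2.1 p.2),
    Set.Finite.subset (h1.2.1.toFinset ×ˢ h2.2.1.toFinset).finite_toSet hsub, ?_⟩, ?_, ?_⟩
  · rw [finsum_eq_finset_sum_of_support_subset _ hsub, Finset.sum_product]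
    simp_rw [← Finset.mul_sum]
    rw [← Finset.sum_mul, hΛsum, hΛ'sum, one_mul]
  · intro a
    have hs : Function.support (fun b => Λ a * Λ' b) ⊆ ↑h2.2.1.toFinset := by
      intro b hb
      rw [Function.mem_support] at hb
      rw [Finset.mem_coe, Set.Finite.mem_toFinset]
      exact fun h => hb (by rw [h, mul_zero])
    rw [finsum_eq_finset_sum_of_support_subset _ hs, ← Finset.mul_sum, hΛ'sum, mul_one]
  · intro b
    have hs : Function.support (fun a => Λ a * Λ' b) ⊆ ↑h1.2.1.toFinset := by
      intro a ha
      rw [Function.mem_support] at ha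
      rw [Finset.mem_coe, Set.Finite.mem_toFinset]
      exact fun h => ha (by rw [h, zero_mul])
    rw [finsum_eq_finset_sum_of_support_subset _ hs, ← Finset.sum_mul, hΛsum, one_mul]

lemma coupling_marg_fst (κ : V × V → ℝ) (Λ Λ' : V → ℝ)
    (hc : IsCoupling κ Λ Λ') (x : V) :
    ∑ p ∈ (hc.1.2.1.toFinset.filter fun p => p.1 = x), κ p = Λ x := by
  classical
  rw [← hc.2.1 x]
  rw [finsum_eq_finset_sum_of_support_subset (fun b => κ (x, b))
    (s := (hc.1.2.1.toFinset.filter fun p => p.1 = x).image Prod.snd) ?_]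
  · rw [Finset.sum_image ?_]
    · refine Finset.sum_congr rfl fun p hp => ?_
      obtain ⟨-, h1⟩ := Finset.mem_filter.mp hp
      rw [show (x, p.2) = p by rw [← h1]]
    · intro p hp p' hp' hsnd
      obtain ⟨-, h1⟩ := Finset.mem_filter.mp hp
      obtain ⟨-, h1'⟩ := Finset.mem_filter.mp hp'
      exact Prod.ext (h1.trans h1'.symm) hsnd
  · intro b hb
    rw [Function.mem_support] at hb
    refine Finset.mem_coe.mpr (Finset.mem_image.mpr ⟨(x, b), ?_, rfl⟩)
    exact Finset.mem_filter.mpr ⟨hc.1.2.1.mem_toFinset.mpr hb, rfl⟩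

lemma coupling_marg_snd (κ : V × V → ℝ) (Λ Λ' : V → ℝ)
    (hc : IsCoupling κ Λ Λ') (y : V) :
    ∑ p ∈ (hc.1.2.1.toFinset.filter fun p => p.2 = y), κ p = Λ' y := by
  classical
  rw [← hc.2.2 y]
  rw [finsum_eq_finset_sum_of_support_subset (fun a => κ (a, y))
    (s := (hc.1.2.1.toFinset.filter fun p => p.2 = y).image Prod.fst) ?_]
  · rw [Finset.sum_image ?_]
    · refine Finset.sum_congr rfl fun p hp => ?_
      obtain ⟨-, h1⟩ := Finset.mem_filter.mp hp
      rw [show (p.1, y) = p by rw [← h1]]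
    · intro p hp p' hp' hfst
      obtain ⟨-, h1⟩ := Finset.mem_filter.mp hp
      obtain ⟨-, h1'⟩ := Finset.mem_filter.mp hp'
      exact Prod.ext hfst (h1.trans h1'.symm)
  · intro a ha
    rw [Function.mem_support] at ha
    refine Finset.mem_coe.mpr (Finset.mem_image.mpr ⟨(a, y), ?_, rfl⟩)
    exact Finset.mem_filter.mpr ⟨hc.1.2.1.mem_toFinset.mpr ha, rfl⟩

lemma coupling_supp_fst (κ : V × V → ℝ) (Λ Λ' : V → ℝ) (hc : IsCoupling κ Λ Λ') :
    Function.support Λ ⊆ ↑(hc.1.2.1.toFinset.image Prod.fst) := by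
  intro x hx
  rw [Function.mem_support, ← hc.2.1 x] at hx
  have : ∃ b, κ (x, b) ≠ 0 := by
    by_contra hall
    push_neg at hall
    exact hx (finsum_eq_zero_of_forall_eq_zero hall)
  obtain ⟨b, hb⟩ := this
  exact Finset.mem_coe.mpr (Finset.mem_image.mpr
    ⟨(x, b), hc.1.2.1.mem_toFinset.mpr hb, rfl⟩)

lemma coupling_supp_snd (κ : V × V → ℝ) (Λ Λ' : V → ℝ) (hc : IsCoupling κ Λ Λ') :
    Function.support Λ' ⊆ ↑(hc.1.2.1.toFinset.image Prod.snd) := by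
  intro y hy
  rw [Function.mem_support, ← hc.2.2 y] at hy
  have : ∃ a, κ (a, y) ≠ 0 := by
    by_contra hall
    push_neg at hall
    exact hy (finsum_eq_zero_of_forall_eq_zero hall)
  obtain ⟨a, ha⟩ := this
  exact Finset.mem_coe.mpr (Finset.mem_image.mpr
    ⟨(a, y), hc.1.2.1.mem_toFinset.mpr ha, rfl⟩)

lemma coupling_fst_pos (κ : V × V → ℝ) (Λ Λ' : V → ℝ) (hc : IsCoupling κ Λ Λ')
    {x : V} (hx : x ∈ hc.1.2.1.toFinset.image Prod.fst) : Λ x ≠ 0 := by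
  obtain ⟨p, hp, hpx⟩ := Finset.mem_image.mp hx
  have hpκ : κ p ≠ 0 := (hc.1.2.1.mem_toFinset.mp hp)
  have hppos : 0 < κ p := lt_of_le_of_ne (hc.1.1 p) (Ne.symm hpκ)
  have hmem : p ∈ hc.1.2.1.toFinset.filter fun p' => p'.1 = x :=
    Finset.mem_filter.mpr ⟨hp, hpx⟩
  have := Finset.single_le_sum (f := κ) (fun p' _ => hc.1.1 p') hmem
  rw [coupling_marg_fst κ Λ Λ' hc x] at this
  linarith

lemma coupling_snd_pos (κ : V × V → ℝ) (Λ Λ' : V → ℝ) (hc : IsCoupling κ Λ Λ')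
    {y : V} (hy : y ∈ hc.1.2.1.toFinset.image Prod.snd) : Λ' y ≠ 0 := by
  obtain ⟨p, hp, hpy⟩ := Finset.mem_image.mp hy
  have hpκ : κ p ≠ 0 := (hc.1.2.1.mem_toFinset.mp hp)
  have hppos : 0 < κ p := lt_of_le_of_ne (hc.1.1 p) (Ne.symm hpκ)
  have hmem : p ∈ hc.1.2.1.toFinset.filter fun p' => p'.2 = y :=
    Finset.mem_filter.mpr ⟨hp, hpy⟩
  have := Finset.single_le_sum (f := κ) (fun p' _ => hc.1.1 p') hmem
  rw [coupling_marg_snd κ Λ Λ' hc y] at this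
  linarith

lemma coupling_piFinset_fst (q : ℕ) (κ : V × V → ℝ) (Λ Λ' : V → ℝ)
    (hc : IsCoupling κ Λ Λ') (H : (Fin q → V) → ℝ) :
    ∑ S ∈ Fintype.piFinset (fun _ : Fin q => hc.1.2.1.toFinset),
        (∏ j, κ (S j)) * H (fun j => (S j).1)
      = ∑ T ∈ Fintype.piFinset (fun _ : Fin q => hc.1.2.1.toFinset.image Prod.fst),
        (∏ j, Λ (T j)) * H T := by
  rw [sum_piFinset_proj q hc.1.2.1.toFinset κ Prod.fst H]
  refine Finset.sum_congr rfl fun T _ => ?_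
  rw [Finset.prod_congr rfl fun j (_ : j ∈ Finset.univ) => coupling_marg_fst κ Λ Λ' hc (T j)]

lemma coupling_piFinset_snd (q : ℕ) (κ : V × V → ℝ) (Λ Λ' : V → ℝ)
    (hc : IsCoupling κ Λ Λ') (H : (Fin q → V) → ℝ) :
    ∑ S ∈ Fintype.piFinset (fun _ : Fin q => hc.1.2.1.toFinset),
        (∏ j, κ (S j)) * H (fun j => (S j).2)
      = ∑ T ∈ Fintype.piFinset (fun _ : Fin q => hc.1.2.1.toFinset.image Prod.snd),
        (∏ j, Λ' (T j)) * H T := by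
  rw [sum_piFinset_proj q hc.1.2.1.toFinset κ Prod.snd H]
  refine Finset.sum_congr rfl fun T _ => ?_
  rw [Finset.prod_congr rfl fun j (_ : j ∈ Finset.univ) => coupling_marg_snd κ Λ Λ' hc (T j)]

lemma coupling_sum_one (κ : V × V → ℝ) (Λ Λ' : V → ℝ) (hc : IsCoupling κ Λ Λ') :
    ∑ p ∈ hc.1.2.1.toFinset, κ p = 1 := by
  rw [← finsum_eq_finset_sum_of_support_subset _ (by simp)]
  exact hc.1.2.2

end CouplingAux

section StepsAux

open scoped Classical

variable {A : Type*} [Fintype A]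

lemma Dsim_pair (s q : ℕ) (lam : A → ℝ) (Λ : (A → ℝ) → ℝ)
    (F : Finset (A → ℝ)) (hF : Function.support Λ ⊆ ↑F)
    (h : (Fin s → Fin q → Bool) → ℝ) :
    ∑ M : Fin s → Fin q → Bool, Dsim s q lam Λ M * h M
      = ∑ T ∈ Fintype.piFinset (fun _ : Fin q => F),
          (∏ j, Λ (T j)) * ∑ M : Fin s → Fin q → Bool, Csum s q lam T M * h M := by
  calc ∑ M : Fin s → Fin q → Bool, Dsim s q lam Λ M * h M
      = ∑ M : Fin s → Fin q → Bool, (∑ T ∈ Fintype.piFinset (fun _ : Fin q => F),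
          (∏ j, Λ (T j)) * Csum s q lam T M) * h M :=
        Finset.sum_congr rfl fun M _ => by rw [Dsim_eq s q lam Λ F hF M]
    _ = ∑ T ∈ Fintype.piFinset (fun _ : Fin q => F), ∑ M : Fin s → Fin q → Bool,
          ((∏ j, Λ (T j)) * Csum s q lam T M) * h M := by
        simp_rw [Finset.sum_mul]
        rw [Finset.sum_comm]
    _ = ∑ T ∈ Fintype.piFinset (fun _ : Fin q => F),
          (∏ j, Λ (T j)) * ∑ M : Fin s → Fin q → Bool, Csum s q lam T M * h M := by
        refine Finset.sum_congr rfl fun T _ => ?_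
        rw [Finset.mul_sum]
        exact Finset.sum_congr rfl fun M _ => by ring

lemma piFinset_prod_sum_one (q : ℕ) (Λ : (A → ℝ) → ℝ) (F : Finset (A → ℝ))
    (hF : Function.support Λ ⊆ ↑F) (hΛ1 : ∑ᶠ u, Λ u = 1) :
    ∑ T ∈ Fintype.piFinset (fun _ : Fin q => F), ∏ j, Λ (T j) = 1 := by
  rw [sum_piFinset_prod (fun _ : Fin q => F) (fun _ u => Λ u)]
  have hFΛ : ∑ u ∈ F, Λ u = 1 := by
    rw [← finsum_eq_finset_sum_of_support_subset _ hF]; exact hΛ1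
  rw [Finset.prod_congr rfl fun j _ => hFΛ]
  exact Finset.prod_const_one

lemma stepA {n : ℕ} (s q : ℕ) (ξ : (Fin n → Bool) × A → ℝ) (hd : IsDist ξ)
    (η' : A → ℝ) (hη' : IsDist η')
    (Λ' : (A → ℝ) → ℝ) (hΛ' : IsDist Λ') (hΛ'01 : SuppIn01 Λ')
    (h : (Fin s → Fin q → Bool) → ℝ) (hh : ∀ M, |h M| ≤ 1/2) :
    |(∑ M : Fin s → Fin q → Bool, Dsim s q η' Λ' M * h M)
      - ∑ M : Fin s → Fin q → Bool, Dsim s q (weight ξ) Λ' M * h M|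
      ≤ (s : ℝ) * dTV (weight ξ) η' := by
  have hη'sum : ∑ v, η' v = 1 := by
    rw [← finsum_eq_sum_of_fintype]; exact hη'.2.2
  set F : Finset (A → ℝ) := hΛ'.2.1.toFinset with hFdef
  have hF : Function.support Λ' ⊆ ↑F := by simp [hFdef]
  have hT01 : ∀ T ∈ Fintype.piFinset (fun _ : Fin q => F), ∀ j v, T j v ∈ Set.Icc (0:ℝ) 1 := by
    intro T hT j v
    rw [Fintype.mem_piFinset] at hT
    exact hΛ'01 (T j) (by simpa [hFdef, Set.Finite.mem_toFinset] using hT j) v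
  rw [Dsim_pair s q η' Λ' F hF h, Dsim_pair s q (weight ξ) Λ' F hF h,
    ← Finset.sum_sub_distrib]
  calc |∑ T ∈ Fintype.piFinset (fun _ : Fin q => F),
        ((∏ j, Λ' (T j)) * (∑ M : Fin s → Fin q → Bool, Csum s q η' T M * h M)
          - (∏ j, Λ' (T j)) * ∑ M : Fin s → Fin q → Bool, Csum s q (weight ξ) T M * h M)|
      ≤ ∑ T ∈ Fintype.piFinset (fun _ : Fin q => F), (∏ j, Λ' (T j)) *
          |(∑ M : Fin s → Fin q → Bool, Csum s q η' T M * h M)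
            - ∑ M : Fin s → Fin q → Bool, Csum s q (weight ξ) T M * h M| := by
        refine (Finset.abs_sum_le_sum_abs _ _).trans
          (le_of_eq (Finset.sum_congr rfl fun T _ => ?_))
        rw [← mul_sub, abs_mul,
          abs_of_nonneg (Finset.prod_nonneg fun j _ => hΛ'.1 (T j))]
    _ ≤ ∑ T ∈ Fintype.piFinset (fun _ : Fin q => F), (∏ j, Λ' (T j)) *
          ((s : ℝ)/2 * ∑ v, |η' v - weight ξ v|) := by
        refine Finset.sum_le_sum fun T hT => mul_le_mul_of_nonneg_left ?_
          (Finset.prod_nonneg fun j _ => hΛ'.1 (T j))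
        exact Csum_diff_lam s q (weight ξ) η' (weight_nonneg ξ hd) (weight_sum ξ hd)
          hη'.1 hη'sum T (hT01 T hT) h hh
    _ = (s : ℝ)/2 * ∑ v, |η' v - weight ξ v| := by
        rw [← Finset.sum_mul, piFinset_prod_sum_one q Λ' F hF hΛ'.2.2, one_mul]
    _ = (s : ℝ) * dTV (weight ξ) η' := by
        rw [dTV_fintype]
        rw [Finset.sum_congr rfl fun v (_ : v ∈ Finset.univ) => abs_sub_comm (η' v) (weight ξ v)]
        ring

lemma stepB {n : ℕ} (s q : ℕ) (ξ : (Fin n → Bool) × A → ℝ) (hd : IsDist ξ)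
    (Λ' : (A → ℝ) → ℝ) (hΛ' : IsDist Λ') (hΛ'01 : SuppIn01 Λ')
    (κ : ((A → ℝ) × (A → ℝ)) → ℝ) (hc : IsCoupling κ (typeDist ξ) Λ')
    (h : (Fin s → Fin q → Bool) → ℝ) (hh : ∀ M, |h M| ≤ 1/2) :
    |(∑ M : Fin s → Fin q → Bool, Dsim s q (weight ξ) Λ' M * h M)
      - ∑ M : Fin s → Fin q → Bool, Dsim s q (weight ξ) (typeDist ξ) M * h M|
      ≤ (s : ℝ) * (q : ℝ) * ∑ᶠ p : (A → ℝ) × (A → ℝ), κ p * wl1 (weight ξ) p.1 p.2 := by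
  set Fκ : Finset ((A → ℝ) × (A → ℝ)) := hc.1.2.1.toFinset with hFκdef
  set D : (Fin q → A → ℝ) → ℝ :=
    fun T => ∑ M : Fin s → Fin q → Bool, Csum s q (weight ξ) T M * h M with hDdef
  have hE2 : ∑ M : Fin s → Fin q → Bool, Dsim s q (weight ξ) Λ' M * h M
      = ∑ S ∈ Fintype.piFinset (fun _ : Fin q => Fκ),
          (∏ j, κ (S j)) * D (fun j => (S j).2) := by
    rw [Dsim_pair s q (weight ξ) Λ' (Fκ.image Prod.snd)
      (coupling_supp_snd κ _ _ hc) h]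
    exact (coupling_piFinset_snd q κ _ _ hc D).symm
  have hE3 : ∑ M : Fin s → Fin q → Bool, Dsim s q (weight ξ) (typeDist ξ) M * h M
      = ∑ S ∈ Fintype.piFinset (fun _ : Fin q => Fκ),
          (∏ j, κ (S j)) * D (fun j => (S j).1) := by
    rw [Dsim_pair s q (weight ξ) (typeDist ξ) (Fκ.image Prod.fst)
      (coupling_supp_fst κ _ _ hc) h]
    exact (coupling_piFinset_fst q κ _ _ hc D).symm
  rw [hE2, hE3, ← Finset.sum_sub_distrib]
  have hmemT : ∀ S ∈ Fintype.piFinset (fun _ : Fin q => Fκ),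
      ∀ j v, (S j).1 v ∈ Set.Icc (0:ℝ) 1 := by
    intro S hS j v
    rw [Fintype.mem_piFinset] at hS
    have h1 : (S j).1 ∈ Fκ.image Prod.fst := Finset.mem_image_of_mem _ (hS j)
    obtain ⟨i, hi⟩ := typeDist_exists ξ (coupling_fst_pos κ _ _ hc h1)
    rw [← hi]
    exact typeOf_mem ξ hd i v
  have hmemT' : ∀ S ∈ Fintype.piFinset (fun _ : Fin q => Fκ),
      ∀ j v, (S j).2 v ∈ Set.Icc (0:ℝ) 1 := by
    intro S hS j v
    rw [Fintype.mem_piFinset] at hS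
    have h1 : (S j).2 ∈ Fκ.image Prod.snd := Finset.mem_image_of_mem _ (hS j)
    exact hΛ'01 _ (coupling_snd_pos κ _ _ hc h1) v
  have hwleq : ∀ p : (A → ℝ) × (A → ℝ),
      (∑ v, weight ξ v * |p.2 v - p.1 v|) = wl1 (weight ξ) p.1 p.2 := by
    intro p
    unfold wl1
    rw [finsum_eq_sum_of_fintype]
    exact Finset.sum_congr rfl fun v _ => by rw [abs_sub_comm]
  have hcost : ∑ᶠ p : (A → ℝ) × (A → ℝ), κ p * wl1 (weight ξ) p.1 p.2
      = ∑ p ∈ Fκ, κ p * wl1 (weight ξ) p.1 p.2 := by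
    refine finsum_eq_finset_sum_of_support_subset _ ?_
    intro p hp
    rw [Function.mem_support] at hp
    have : κ p ≠ 0 := fun h0 => hp (by rw [h0, zero_mul])
    simpa [hFκdef, Set.Finite.mem_toFinset] using this
  calc |∑ S ∈ Fintype.piFinset (fun _ : Fin q => Fκ),
        ((∏ j, κ (S j)) * D (fun j => (S j).2) - (∏ j, κ (S j)) * D (fun j => (S j).1))|
      ≤ ∑ S ∈ Fintype.piFinset (fun _ : Fin q => Fκ), (∏ j, κ (S j)) *
          |D (fun j => (S j).2) - D (fun j => (S j).1)| := by
        refine (Finset.abs_sum_le_sum_abs _ _).trans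
          (le_of_eq (Finset.sum_congr rfl fun S _ => ?_))
        rw [← mul_sub, abs_mul,
          abs_of_nonneg (Finset.prod_nonneg fun j _ => hc.1.1 (S j))]
    _ ≤ ∑ S ∈ Fintype.piFinset (fun _ : Fin q => Fκ), (∏ j, κ (S j)) *
          ((s : ℝ) * ∑ j : Fin q, ∑ v, weight ξ v * |(S j).2 v - (S j).1 v|) := by
        refine Finset.sum_le_sum fun S hS => mul_le_mul_of_nonneg_left ?_
          (Finset.prod_nonneg fun j _ => hc.1.1 (S j))
        exact Csum_diff_T s q (weight ξ) (weight_nonneg ξ hd) (weight_sum ξ hd)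
          (fun j => (S j).1) (fun j => (S j).2) (hmemT S hS) (hmemT' S hS) h hh
    _ = (s : ℝ) * ∑ j : Fin q, ∑ S ∈ Fintype.piFinset (fun _ : Fin q => Fκ),
          (∏ j', κ (S j')) * ∑ v, weight ξ v * |(S j).2 v - (S j).1 v| := by
        simp_rw [Finset.mul_sum]
        rw [Finset.sum_comm]
        refine Finset.sum_congr rfl fun j _ => Finset.sum_congr rfl fun S _ =>
          Finset.sum_congr rfl fun v _ => by ring
    _ = (s : ℝ) * ∑ j : Fin q, ∑ p ∈ Fκ, κ p * ∑ v, weight ξ v * |p.2 v - p.1 v| := by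
        congr 1
        refine Finset.sum_congr rfl fun j _ => ?_
        exact sum_piFinset_prod_single Fκ κ (coupling_sum_one κ _ _ hc) j
          (fun p => ∑ v, weight ξ v * |p.2 v - p.1 v|)
    _ = (s : ℝ) * (q : ℝ) * ∑ᶠ p : (A → ℝ) × (A → ℝ), κ p * wl1 (weight ξ) p.1 p.2 := by
        rw [hcost]
        rw [Finset.sum_congr rfl fun j (_ : j ∈ Finset.univ) =>
          Finset.sum_congr rfl fun p (_ : p ∈ Fκ) => by rw [hwleq p]]
        rw [Finset.sum_const, Finset.card_univ, Fintype.card_fin, nsmul_eq_mul]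
        ring

lemma stepC {n : ℕ} (s q : ℕ) (hn : n ≠ 0) (μ : (Fin n → Bool) → ℝ)
    (ξ : (Fin n → Bool) × A → ℝ) (hd : IsDist ξ) (hmarg : ∀ x, ∑ v : A, ξ (x, v) = μ x)
    (ε' : ℝ) (hε0 : 0 ≤ ε') (hε1 : ε' ≤ 1) (hgood : IsGoodDetailing ε' q ξ)
    (h : (Fin s → Fin q → Bool) → ℝ) (hh : ∀ M, |h M| ≤ 1/2) :
    |(∑ M : Fin s → Fin q → Bool, Dsim s q (weight ξ) (typeDist ξ) M * h M)
      - ∑ M : Fin s → Fin q → Bool, Dtest s q n μ M * h M|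
      ≤ (s : ℝ) * (3 * ε') := by
  classical
  set bnd : (Fin q → Fin n) → A → ℝ :=
    fun J v => if EpsIndep ε' (component ξ v) J then ε' else 1 with hbnd
  set D1 : (Fin q → Fin n) → (Fin s → A) → ℝ := fun J a =>
    ∑ M : Fin s → Fin q → Bool, (∏ i, ∏ j, bern (typeOf ξ (J j) (a i)) (M i j)) * h M
    with hD1
  set D2 : (Fin q → Fin n) → (Fin s → A) → ℝ := fun J a =>
    ∑ M : Fin s → Fin q → Bool, (∏ i, jointAt (component ξ (a i)) J (M i)) * h M
    with hD2
  have hE3 : ∑ M : Fin s → Fin q → Bool, Dsim s q (weight ξ) (typeDist ξ) M * h M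
      = (∑ J : Fin q → Fin n, ∑ a : Fin s → A, (∏ i, weight ξ (a i)) * D1 J a) / (n:ℝ)^q := by
    rw [Dsim_pair s q (weight ξ) (typeDist ξ)
      (Finset.univ.image (fun i : Fin n => typeOf ξ i)) (typeDist_support_subset ξ) h,
      sum_typeDist_pair ξ q]
    congr 1
    refine Finset.sum_congr rfl fun J _ => ?_
    rw [Csum_pair]
  have hE4 : ∑ M : Fin s → Fin q → Bool, Dtest s q n μ M * h M
      = (∑ J : Fin q → Fin n, ∑ a : Fin s → A, (∏ i, weight ξ (a i)) * D2 J a) / (n:ℝ)^q := by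
    rw [Finset.sum_congr rfl fun M (_ : M ∈ Finset.univ) => by
      rw [Dtest_eq s q μ ξ hd hmarg M]]
    simp_rw [div_mul_eq_mul_div]
    rw [← Finset.sum_div]
    congr 1
    simp_rw [Finset.sum_mul]
    rw [Finset.sum_comm]
    refine Finset.sum_congr rfl fun J _ => ?_
    rw [Finset.sum_comm]
    refine Finset.sum_congr rfl fun a _ => ?_
    rw [hD2, Finset.mul_sum]
    exact Finset.sum_congr rfl fun M _ => by ring
  have hterm : ∀ (J : Fin q → Fin n) (a : Fin s → A),
      (∏ i, weight ξ (a i)) * |D1 J a - D2 J a|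
        ≤ (∏ i, weight ξ (a i)) * ∑ i, bnd J (a i) := by
    intro J a
    by_cases hw : ∀ i, weight ξ (a i) ≠ 0
    · exact mul_le_mul_of_nonneg_left (row_bound ξ hd s q ε' hε0 J a hw h hh)
        (Finset.prod_nonneg fun i _ => weight_nonneg ξ hd (a i))
    · push_neg at hw
      obtain ⟨i, hi⟩ := hw
      rw [Finset.prod_eq_zero (Finset.mem_univ i) hi, zero_mul, zero_mul]
  have hmargsum : ∀ J : Fin q → Fin n,
      ∑ a : Fin s → A, (∏ i, weight ξ (a i)) * ∑ i, bnd J (a i)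
        = ∑ _i : Fin s, ∑ v, weight ξ v * bnd J v := by
    intro J
    calc ∑ a : Fin s → A, (∏ i, weight ξ (a i)) * ∑ i, bnd J (a i)
        = ∑ i : Fin s, ∑ a : Fin s → A, (∏ i', weight ξ (a i')) * bnd J (a i) := by
          simp_rw [Finset.mul_sum]
          rw [Finset.sum_comm]
      _ = ∑ _i : Fin s, ∑ v, weight ξ v * bnd J v := by
          refine Finset.sum_congr rfl fun i _ => ?_
          exact sum_fn_prod_single (weight ξ) (weight_sum ξ hd) i (bnd J)
  obtain ⟨G, hG1, hG2⟩ := hgood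
  have hvbound : ∀ v : A, (∑ J : Fin q → Fin n, weight ξ v * bnd J v)
      ≤ weight ξ v * (if v ∈ G then 2 * ε' else 1) * (n:ℝ)^q := by
    intro v
    rw [← Finset.mul_sum]
    split_ifs with hvG
    · rw [mul_assoc]
      refine mul_le_mul_of_nonneg_left ?_ (weight_nonneg ξ hd v)
      exact good_count (component ξ v) ε' hε0 hε1 (hG2 v hvG)
    · rw [mul_assoc, one_mul]
      refine mul_le_mul_of_nonneg_left ?_ (weight_nonneg ξ hd v)
      calc ∑ J : Fin q → Fin n, bnd J v ≤ ∑ _J : Fin q → Fin n, (1:ℝ) := by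
            refine Finset.sum_le_sum fun J _ => ?_
            have hb : bnd J v = if EpsIndep ε' (component ξ v) J then ε' else 1 := rfl
            rw [hb]
            split_ifs
            exacts [hε1, le_refl 1]
        _ = (n:ℝ)^q := by
            rw [Finset.sum_const, Finset.card_univ, Fintype.card_fun, Fintype.card_fin,
              Fintype.card_fin, nsmul_eq_mul, mul_one, Nat.cast_pow]
  have hGsum : ∑ v ∈ G, weight ξ v ≤ 1 := by
    rw [← weight_sum ξ hd]
    exact Finset.sum_le_sum_of_subset_of_nonneg (Finset.subset_univ G)
      (fun v _ _ => weight_nonneg ξ hd v)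
  have hGout : ∑ v ∈ Finset.univ \ G, weight ξ v ≤ ε' := by
    have : ∑ v ∈ Finset.univ \ G, weight ξ v = 1 - ∑ v ∈ G, weight ξ v := by
      rw [eq_sub_iff_add_eq, Finset.sum_sdiff_eq_sub (Finset.subset_univ G)]
      rw [weight_sum ξ hd]
      ring
    linarith
  have hsplitv : ∑ v : A, weight ξ v * (if v ∈ G then 2 * ε' else 1) ≤ 3 * ε' := by
    rw [← Finset.sum_sdiff (Finset.subset_univ G)]
    have e1 : ∑ v ∈ G, weight ξ v * (if v ∈ G then 2 * ε' else 1)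
        = 2 * ε' * ∑ v ∈ G, weight ξ v := by
      rw [Finset.mul_sum]
      exact Finset.sum_congr rfl fun v hv => by rw [if_pos hv]; ring
    have e2 : ∑ v ∈ Finset.univ \ G, weight ξ v * (if v ∈ G then 2 * ε' else 1)
        ≤ ∑ v ∈ Finset.univ \ G, weight ξ v := by
      refine Finset.sum_le_sum fun v hv => ?_
      rw [if_neg (Finset.mem_sdiff.mp hv).2, mul_one]
    have e3 : 2 * ε' * ∑ v ∈ G, weight ξ v ≤ 2 * ε' := by
      nlinarith
    linarith
  have hn0 : (n:ℝ) ≠ 0 := Nat.cast_ne_zero.mpr hn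
  have hnq : (0:ℝ) < (n:ℝ)^q := by
    have : (0:ℝ) < (n:ℝ) := lt_of_le_of_ne (Nat.cast_nonneg n) (Ne.symm hn0)
    positivity
  rw [hE3, hE4, div_sub_div_same, abs_div, abs_of_pos hnq, div_le_iff₀ hnq]
  calc |∑ J : Fin q → Fin n, ∑ a : Fin s → A, (∏ i, weight ξ (a i)) * D1 J a
        - ∑ J : Fin q → Fin n, ∑ a : Fin s → A, (∏ i, weight ξ (a i)) * D2 J a|
      ≤ ∑ J : Fin q → Fin n, ∑ a : Fin s → A,
          (∏ i, weight ξ (a i)) * |D1 J a - D2 J a| := by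
        rw [← Finset.sum_sub_distrib]
        refine (Finset.abs_sum_le_sum_abs _ _).trans (Finset.sum_le_sum fun J _ => ?_)
        rw [← Finset.sum_sub_distrib]
        refine (Finset.abs_sum_le_sum_abs _ _).trans
          (le_of_eq (Finset.sum_congr rfl fun a _ => ?_))
        rw [← mul_sub, abs_mul,
          abs_of_nonneg (Finset.prod_nonneg fun i _ => weight_nonneg ξ hd (a i))]
    _ ≤ ∑ J : Fin q → Fin n, ∑ a : Fin s → A,
          (∏ i, weight ξ (a i)) * ∑ i, bnd J (a i) :=
        Finset.sum_le_sum fun J _ => Finset.sum_le_sum fun a _ => hterm J a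
    _ = ∑ J : Fin q → Fin n, ∑ _i : Fin s, ∑ v, weight ξ v * bnd J v :=
        Finset.sum_congr rfl fun J _ => hmargsum J
    _ = ∑ _i : Fin s, ∑ v : A, ∑ J : Fin q → Fin n, weight ξ v * bnd J v := by
        rw [Finset.sum_comm]
        refine Finset.sum_congr rfl fun i _ => Finset.sum_comm
    _ ≤ ∑ _i : Fin s, ∑ v : A, weight ξ v * (if v ∈ G then 2 * ε' else 1) * (n:ℝ)^q :=
        Finset.sum_le_sum fun i _ => Finset.sum_le_sum fun v _ => hvbound v
    _ = ∑ _i : Fin s, (∑ v : A, weight ξ v * (if v ∈ G then 2 * ε' else 1)) * (n:ℝ)^q := by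
        refine Finset.sum_congr rfl fun i _ => ?_
        rw [Finset.sum_mul]
    _ ≤ ∑ _i : Fin s, (3 * ε') * (n:ℝ)^q :=
        Finset.sum_le_sum fun i _ => mul_le_mul_of_nonneg_right hsplitv hnq.le
    _ = (s : ℝ) * (3 * ε') * (n:ℝ)^q := by
        rw [Finset.sum_const, Finset.card_univ, Fintype.card_fin, nsmul_eq_mul]
        ring

end StepsAux

section Degenerate

variable {A : Type*} [Fintype A]

lemma Dsim_q_zero (s : ℕ) (lam : A → ℝ) (hlam : ∑ v, lam v = 1)
    (Λ : (A → ℝ) → ℝ) (M : Fin s → Fin 0 → Bool) : Dsim s 0 lam Λ M = 1 := by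
  unfold Dsim
  rw [finsum_unique]
  simp only [Finset.univ_eq_empty, Finset.prod_empty, Finset.prod_const_one, one_mul, mul_one]
  rw [sum_fn_prod (fun (_ : Fin s) (v : A) => lam v)]
  exact Finset.prod_eq_one fun i _ => hlam

lemma Dtest_q_zero (s n : ℕ) (μ : (Fin n → Bool) → ℝ) (hμ1 : ∑ x, μ x = 1)
    (M : Fin s → Fin 0 → Bool) : Dtest s 0 n μ M = 1 := by
  unfold Dtest
  rw [pow_zero, div_one]
  have hval : ∀ J : Fin 0 → Fin n,
      (∑ x : Fin s → Fin n → Bool, (∏ i, μ (x i)) *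
        (if ∀ i (ℓ : Fin 0), x i (J ℓ) = M i ℓ then (1:ℝ) else 0)) = 1 := by
    intro J
    have : ∀ x : Fin s → Fin n → Bool,
        (if ∀ i (ℓ : Fin 0), x i (J ℓ) = M i ℓ then (1:ℝ) else 0) = 1 :=
      fun x => if_pos (fun i ℓ => ℓ.elim0)
    rw [Finset.sum_congr rfl fun x _ => by rw [this x, mul_one],
      sum_fn_prod (fun (_ : Fin s) (x₁ : Fin n → Bool) => μ x₁)]
    exact Finset.prod_eq_one fun i _ => hμ1
  rw [Finset.sum_congr rfl fun J _ => hval J, Finset.sum_const, Finset.card_univ]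
  simp

lemma Dsim_s_zero (q : ℕ) (lam : A → ℝ) (Λ : (A → ℝ) → ℝ) (hΛ : IsDist Λ)
    (M : Fin 0 → Fin q → Bool) : Dsim 0 q lam Λ M = 1 := by
  unfold Dsim
  have hbody : ∀ T : Fin q → (A → ℝ), (∑ a : Fin 0 → A, (∏ i, lam (a i)) *
      ∏ i : Fin 0, ∏ j : Fin q, (if M i j then T j (a i) else 1 - T j (a i))) = 1 := by
    intro T
    simp
  rw [finsum_congr (fun T => by rw [hbody T, mul_one]),
    finsum_fn_prod (fun (_ : Fin q) (u : A → ℝ) => Λ u) (fun _ => hΛ.2.1)]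
  exact Finset.prod_eq_one fun j _ => hΛ.2.2

lemma Dtest_s_zero (q n : ℕ) (hn : n ≠ 0) (μ : (Fin n → Bool) → ℝ)
    (M : Fin 0 → Fin q → Bool) : Dtest 0 q n μ M = 1 := by
  unfold Dtest
  have hval : ∀ J : Fin q → Fin n,
      (∑ x : Fin 0 → Fin n → Bool, (∏ i, μ (x i)) *
        (if ∀ (i : Fin 0) ℓ, x i (J ℓ) = M i ℓ then (1:ℝ) else 0)) = 1 := by
    intro J
    simp
  rw [Finset.sum_congr rfl fun J _ => hval J, Finset.sum_const, Finset.card_univ,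
    Fintype.card_fun, Fintype.card_fin, Fintype.card_fin, nsmul_eq_mul, mul_one, Nat.cast_pow,
    div_self (pow_ne_zero q (Nat.cast_ne_zero.mpr hn))]

end Degenerate

end AuxHO

/-- under the hypotheses of Statement 12, the expected value of any
[0,1]-valued function of the query matrix differs by at most ε between the
simulated distribution and the canonical (s,q)-distribution of μ. -/
theorem dsim_predicts_acceptance {A : Type*} [Fintype A] (n s q : ℕ) (ε : ℝ)
    (hε : ε ∈ Set.Ioo (0 : ℝ) 1)
    (μ : (Fin n → Bool) → ℝ) (hμ : IsDist μ)
    (ξ : (Fin n → Bool) × A → ℝ) (hξ : IsDetailing ξ μ)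
    (η' : A → ℝ) (hη' : IsDist η') (hdη : dTV (weight ξ) η' ≤ ε / (3 * s))
    (Λ' : (A → ℝ) → ℝ) (hΛ' : IsDist Λ') (hΛ'01 : SuppIn01 Λ')
    (hdΛ : dEM (wl1 (weight ξ)) (typeDist ξ) Λ' ≤ ε / (3 * s * q))
    (hn : 18 * q ^ 2 * (s + 1) / ε ≤ (n : ℝ))
    (hgood : IsGoodDetailing (ε / (9 * (s + 1))) q ξ) :
    ∀ α : (Fin s → Fin q → Bool) → ℝ, (∀ M, α M ∈ Set.Icc (0 : ℝ) 1) →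
      |(∑ M : Fin s → Fin q → Bool, Dsim s q η' Λ' M * α M) -
        (∑ M : Fin s → Fin q → Bool, Dtest s q n μ M * α M)| ≤ ε := by
  classical
  intro α hα
  obtain ⟨hε0, hε1⟩ := hε
  have hμ1 : ∑ x, μ x = 1 := by rw [← finsum_eq_sum_of_fintype]; exact hμ.2.2
  have hη'1 : ∑ v, η' v = 1 := by rw [← finsum_eq_sum_of_fintype]; exact hη'.2.2
  have hd : IsDist ξ := hξ.1
  -- dispatch q = 0
  rcases Nat.eq_zero_or_pos q with hq0 | hqpos
  · subst hq0
    have heq : ∑ M : Fin s → Fin 0 → Bool, Dsim s 0 η' Λ' M * α M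
        = ∑ M : Fin s → Fin 0 → Bool, Dtest s 0 n μ M * α M :=
      Finset.sum_congr rfl fun M _ => by
        rw [AuxHO.Dsim_q_zero s η' hη'1 Λ' M, AuxHO.Dtest_q_zero s n μ hμ1 M]
    rw [heq, sub_self, abs_zero]
    exact hε0.le
  have hqR : (0:ℝ) < (q:ℝ) := by exact_mod_cast hqpos
  have hsplus : (0:ℝ) < (s:ℝ) + 1 := by positivity
  have hnR : (0:ℝ) < (n:ℝ) := by
    have hnum : (0:ℝ) < 18 * (q:ℝ)^2 * ((s:ℝ)+1) :=
      mul_pos (mul_pos (by norm_num) (pow_pos hqR 2)) hsplus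
    exact lt_of_lt_of_le (div_pos hnum hε0) hn
  have hn0 : n ≠ 0 := by
    intro hcon
    rw [hcon] at hnR
    norm_num at hnR
  -- dispatch s = 0
  rcases Nat.eq_zero_or_pos s with hs0 | hspos
  · subst hs0
    have heq : ∑ M : Fin 0 → Fin q → Bool, Dsim 0 q η' Λ' M * α M
        = ∑ M : Fin 0 → Fin q → Bool, Dtest 0 q n μ M * α M :=
      Finset.sum_congr rfl fun M _ => by
        rw [AuxHO.Dsim_s_zero q η' Λ' hΛ' M, AuxHO.Dtest_s_zero q n hn0 μ M]
    rw [heq, sub_self, abs_zero]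
    exact hε0.le
  have hsR : (0:ℝ) < (s:ℝ) := by exact_mod_cast hspos
  -- shifted test function
  set h : (Fin s → Fin q → Bool) → ℝ := fun M => α M - 1/2 with hhdef
  have hh : ∀ M, |h M| ≤ 1/2 := by
    intro M
    have h1 := (hα M).1
    have h2 := (hα M).2
    have hM : h M = α M - 1/2 := rfl
    rw [hM, abs_le]
    constructor <;> linarith
  -- normalizations
  have hΛ'suppF : Function.support Λ' ⊆ ↑hΛ'.2.1.toFinset := by simp
  have htd : IsDist (typeDist ξ) := AuxHO.typeDist_isDist ξ hn0
  have N1 : ∑ M : Fin s → Fin q → Bool, Dsim s q η' Λ' M = 1 :=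
    AuxHO.Dsim_sum_one s q η' hη'1 Λ' _ hΛ'suppF hΛ'.2.2
  have N4 : ∑ M : Fin s → Fin q → Bool, Dtest s q n μ M = 1 :=
    AuxHO.Dtest_sum_one s q hn0 μ hμ1
  have shift : ∀ D : (Fin s → Fin q → Bool) → ℝ, (∑ M, D M) = 1 →
      ∑ M, D M * α M = (∑ M, D M * h M) + 1/2 := by
    intro D hD
    have hDm : ∀ M, D M * α M = D M * h M + D M * (1/2) := by
      intro M
      have hM : h M = α M - 1/2 := rfl
      rw [hM]; ring
    rw [Finset.sum_congr rfl fun M _ => hDm M, Finset.sum_add_distrib,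
      ← Finset.sum_mul, hD, one_mul]
  set F1 := ∑ M : Fin s → Fin q → Bool, Dsim s q η' Λ' M * h M with hF1
  set F2 := ∑ M : Fin s → Fin q → Bool, Dsim s q (weight ξ) Λ' M * h M with hF2
  set F3 := ∑ M : Fin s → Fin q → Bool, Dsim s q (weight ξ) (typeDist ξ) M * h M with hF3
  set F4 := ∑ M : Fin s → Fin q → Bool, Dtest s q n μ M * h M with hF4
  rw [shift _ N1, shift _ N4]
  -- step A bound
  have boundA : |F1 - F2| ≤ ε/3 := by
    have hA := AuxHO.stepA s q ξ hd η' hη' Λ' hΛ' hΛ'01 h hh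
    have hsne : (s:ℝ) ≠ 0 := ne_of_gt hsR
    calc |F1 - F2| ≤ (s:ℝ) * dTV (weight ξ) η' := hA
      _ ≤ (s:ℝ) * (ε / (3*(s:ℝ))) := mul_le_mul_of_nonneg_left hdη hsR.le
      _ = ε/3 := by field_simp
  -- step B bound
  have boundB : |F2 - F3| ≤ ε/3 := by
    have hsq : (0:ℝ) < (s:ℝ)*(q:ℝ) := mul_pos hsR hqR
    have hEM_le : |F2 - F3| ≤ (s:ℝ)*(q:ℝ) * dEM (wl1 (weight ξ)) (typeDist ξ) Λ' := by
      have hSne : {c | ∃ T : ((A → ℝ) × (A → ℝ)) → ℝ, IsCoupling T (typeDist ξ) Λ'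
          ∧ c = ∑ᶠ p : (A → ℝ) × (A → ℝ), T p * wl1 (weight ξ) p.1 p.2}.Nonempty :=
        ⟨_, ⟨fun p => typeDist ξ p.1 * Λ' p.2, AuxHO.prod_coupling _ _ htd hΛ', rfl⟩⟩
      refine le_of_forall_pos_le_add ?_
      intro δ hδ
      obtain ⟨c, hcS, hclt⟩ := Real.lt_sInf_add_pos hSne (div_pos hδ hsq)
      obtain ⟨κ, hκ, hceq⟩ := hcS
      have hB := AuxHO.stepB s q ξ hd Λ' hΛ' hΛ'01 κ hκ h hh
      rw [← hceq] at hB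
      have hdEM : dEM (wl1 (weight ξ)) (typeDist ξ) Λ'
          = sInf {c | ∃ T : ((A → ℝ) × (A → ℝ)) → ℝ, IsCoupling T (typeDist ξ) Λ'
            ∧ c = ∑ᶠ p : (A → ℝ) × (A → ℝ), T p * wl1 (weight ξ) p.1 p.2} := rfl
      calc |F2 - F3| ≤ (s:ℝ)*(q:ℝ)*c := hB
        _ ≤ (s:ℝ)*(q:ℝ)*(dEM (wl1 (weight ξ)) (typeDist ξ) Λ' + δ/((s:ℝ)*(q:ℝ))) := by
            refine mul_le_mul_of_nonneg_left ?_ hsq.le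
            rw [hdEM]
            exact hclt.le
        _ = (s:ℝ)*(q:ℝ)*dEM (wl1 (weight ξ)) (typeDist ξ) Λ' + δ := by
            field_simp
    calc |F2 - F3| ≤ (s:ℝ)*(q:ℝ) * dEM (wl1 (weight ξ)) (typeDist ξ) Λ' := hEM_le
      _ ≤ (s:ℝ)*(q:ℝ) * (ε / (3*(s:ℝ)*(q:ℝ))) := by
          refine mul_le_mul_of_nonneg_left hdΛ hsq.le
      _ = ε/3 := by
          field_simp
  -- step C bound
  have boundC : |F3 - F4| ≤ ε/3 := by
    have hε'0 : 0 ≤ ε/(9*((s:ℝ)+1)) := by positivity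
    have hε'1 : ε/(9*((s:ℝ)+1)) ≤ 1 := by
      rw [div_le_one (by positivity)]
      have hs0' : (0:ℝ) ≤ (s:ℝ) := Nat.cast_nonneg s
      nlinarith
    have hC := AuxHO.stepC s q hn0 μ ξ hd hξ.2 (ε/(9*((s:ℝ)+1))) hε'0 hε'1 hgood h hh
    calc |F3 - F4| ≤ (s:ℝ) * (3 * (ε/(9*((s:ℝ)+1)))) := hC
      _ ≤ ε/3 := by
          rw [show (s:ℝ) * (3 * (ε/(9*((s:ℝ)+1)))) = (3*(s:ℝ)*ε)/(9*((s:ℝ)+1)) by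
            field_simp]
          rw [div_le_div_iff₀ (by positivity) (by norm_num : (0:ℝ) < 3)]
          nlinarith [mul_nonneg (Nat.cast_nonneg s : (0:ℝ) ≤ (s:ℝ)) hε0.le]
  -- combine
  have hsplit : F1 + 1/2 - (F4 + 1/2) = (F1 - F2) + ((F2 - F3) + (F3 - F4)) := by ring
  rw [hsplit]
  calc |(F1 - F2) + ((F2 - F3) + (F3 - F4))|
      ≤ |F1 - F2| + |(F2 - F3) + (F3 - F4)| := abs_add_le _ _
    _ ≤ |F1 - F2| + (|F2 - F3| + |F3 - F4|) := by
        exact add_le_add (le_refl _) (abs_add_le _ _)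
    _ ≤ ε/3 + (ε/3 + ε/3) := by
        exact add_le_add boundA (add_le_add boundB boundC)
    _ = ε := by ring
end

section
/- Let δ ∈ (0,1), let μ be a distribution on {0,1}^n, let ξ be a detailing of μ with respect to a finite set A, and let ξ' be a refinement of ξ with respect to a finite set B such that Ind(ξ') − Ind(ξ) ≤ δ. Let η = ξ'|_{2,3} (the marginal of ξ' on A×B), let ξ_⟨η⟩ be the flat refinement of ξ with respect to η, and let Λ' and Λ_⟨B⟩ be the type distributions of ξ' and ξ_⟨η⟩ respectively. Then d_EM^η(Λ', Λ_⟨B⟩) ≤ √δ. -/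
open scoped BigOperators

open HugeObject

/-! Because `ξ'` refines `ξ`, the type `t_i(a)` is the `η`-weighted mean of the types
`t'_i(a, ·)`, so `Ind ξ' - Ind ξ = 𝔼_i 𝔼_{(a,b) ~ η} (t'_i(a,b) - t_i(a))²`. On the support of
`η` the flat refinement has type `t_i(a)` at `(a, b)`, hence pairing index `i` of `ξ'` with
index `i` of `ξ_⟨η⟩` is a coupling of cost `𝔼_i 𝔼_η |t'_i(a,b) - t_i(a)|`, and by
Cauchy–Schwarz this is at most the square root of the index increment. -/

lemma Finset.sum_mul_abs_le_sqrt_sum_mul_sq {ι : Type*} (s : Finset ι) {w x : ι → ℝ}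
    (hw : ∀ i ∈ s, 0 ≤ w i) (hw1 : ∑ i ∈ s, w i = 1) :
    ∑ i ∈ s, w i * |x i| ≤ √(∑ i ∈ s, w i * x i ^ 2) := by
  refine (le_abs_self _).trans (Real.abs_le_sqrt ?_)
  have hCS := Finset.sum_sq_le_sum_mul_sum_of_sq_le_mul s (r := fun i => w i * |x i|) hw
    (fun i hi => mul_nonneg (hw i hi) (sq_nonneg (x i))) fun i _ => by
      rw [mul_pow, sq_abs, sq, mul_assoc]
  rwa [hw1, one_mul] at hCS

namespace HugeObject

section EmpDist

variable {n : ℕ} {α β : Type*}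

lemma support_empDist_subset (f : Fin n → α) : Function.support (empDist f) ⊆ Set.range f := by
  intro u hu
  by_contra h
  have : IsEmpty {i : Fin n // f i = u} := ⟨fun i => h ⟨i.1, i.2⟩⟩
  simp [empDist, Nat.card_of_isEmpty] at hu

lemma finsum_empDist_mul (f : Fin n → α) (φ : α → ℝ) :
    ∑ᶠ u, empDist f u * φ u = (∑ i, φ (f i)) / n := by
  classical
  have hsupp : Function.support (fun u => empDist f u * φ u) ⊆ ↑(Finset.univ.image f) := by
    intro u hu
    simpa using support_empDist_subset f (left_ne_zero_of_mul hu)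
  rw [finsum_eq_sum_of_support_subset _ hsupp, Finset.sum_comp, Finset.sum_div]
  refine Finset.sum_congr rfl fun u _ => ?_
  rw [empDist, Nat.card_eq_fintype_card, Fintype.card_subtype, nsmul_eq_mul]
  ring

lemma isDist_empDist (hn : 0 < n) (f : Fin n → α) : IsDist (empDist f) := by
  refine ⟨fun u => by unfold empDist; positivity,
    (Set.finite_range f).subset (support_empDist_subset f), ?_⟩
  have hn' : (n : ℝ) ≠ 0 := by positivity
  simpa [div_self hn'] using finsum_empDist_mul f fun _ => 1

lemma finsum_empDist_prodMk_left (f : Fin n → α) (g : Fin n → β) (u : α) :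
    ∑ᶠ v, empDist (fun i => (f i, g i)) (u, v) = empDist f u := by
  classical
  have hsupp : Function.support (fun v => empDist (fun i => (f i, g i)) (u, v)) ⊆
      ↑(Finset.univ.image g) := by
    intro v hv
    obtain ⟨i, hi⟩ := support_empDist_subset (fun i => (f i, g i))
      (show (u, v) ∈ Function.support _ from hv)
    exact Finset.mem_coe.2 (Finset.mem_image.2 ⟨i, Finset.mem_univ i, congrArg Prod.snd hi⟩)
  rw [finsum_eq_sum_of_support_subset _ hsupp]
  simp only [empDist, Nat.card_eq_fintype_card, Fintype.card_subtype, ← Finset.sum_div,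
    ← Nat.cast_sum]
  rw [Finset.card_eq_sum_card_fiberwise (s := Finset.univ.filter fun i => f i = u)
    fun i _ => Finset.mem_image_of_mem g (Finset.mem_univ i)]
  simp only [Finset.filter_filter, Prod.mk.injEq]

lemma finsum_empDist_prodMk_right (f : Fin n → α) (g : Fin n → β) (v : β) :
    ∑ᶠ u, empDist (fun i => (f i, g i)) (u, v) = empDist g v := by
  have hswap : ∀ u,
      empDist (fun i => (f i, g i)) (u, v) = empDist (fun i => (g i, f i)) (v, u) := fun u => by
    simp only [empDist, Prod.ext_iff, and_comm]
  simp only [hswap, finsum_empDist_prodMk_left]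

lemma isCoupling_empDist_prodMk (hn : 0 < n) (f : Fin n → α) (g : Fin n → β) :
    IsCoupling (empDist fun i => (f i, g i)) (empDist f) (empDist g) :=
  ⟨isDist_empDist hn _, finsum_empDist_prodMk_left f g, finsum_empDist_prodMk_right f g⟩

lemma dEM_empDist_le (hn : 0 < n) {d : α → α → ℝ} (hd : ∀ x y, 0 ≤ d x y) (f g : Fin n → α) :
    dEM d (empDist f) (empDist g) ≤ (∑ i, d (f i) (g i)) / n := by
  refine csInf_le ⟨0, ?_⟩ ⟨_, isCoupling_empDist_prodMk hn f g,
    (finsum_empDist_mul (fun i => (f i, g i)) fun p : α × α => d p.1 p.2).symm⟩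
  rintro _ ⟨T, hT, rfl⟩
  exact finsum_nonneg fun p => mul_nonneg (hT.1.1 p) (hd _ _)

end EmpDist

lemma wl1_nonneg {A : Type*} {η : A → ℝ} (hη : ∀ a, 0 ≤ η a) (x y : A → ℝ) : 0 ≤ wl1 η x y :=
  finsum_nonneg fun a => mul_nonneg (hη a) (abs_nonneg _)

section Detailing

variable {n : ℕ} {A B : Type*} {ξ : (Fin n → Bool) × A → ℝ}

lemma weight_nonneg (hξ : ∀ y, 0 ≤ ξ y) (a : A) : 0 ≤ weight ξ a :=
  Finset.sum_nonneg fun x _ => hξ (x, a)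

lemma sum_weight [Fintype A] (hξ : IsDist ξ) : ∑ a, weight ξ a = 1 := by
  rw [← hξ.2.2, finsum_eq_sum_of_fintype, Fintype.sum_prod_type, Finset.sum_comm]
  rfl

lemma weight_mul_typeOf (hξ : ∀ y, 0 ≤ ξ y) (i : Fin n) (a : A) :
    weight ξ a * typeOf ξ i a = ∑ x, if x i then ξ (x, a) else 0 := by
  by_cases ha : weight ξ a = 0
  · have hzero := (Finset.sum_eq_zero_iff_of_nonneg fun x _ => hξ (x, a)).1 ha
    simp [ha, hzero]
  · exact mul_div_cancel₀ _ ha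

lemma typeOf_flatRef [Fintype A] (η : A × B → ℝ) {p : A × B} (hp : η p ≠ 0) (i : Fin n) :
    typeOf (flatRef ξ η) i p = typeOf ξ i p.1 := by
  have hnum : (∑ x, if x i then flatRef ξ η (x, p) else 0) =
      η p * ((∑ x, if x i then ξ (x, p.1) else 0) / weight ξ p.1) := by
    simp only [flatRef, component, Finset.mul_sum, Finset.sum_div, mul_ite, ite_div, mul_zero,
      zero_div]
  have hweight : weight (flatRef ξ η) p = η p * (weight ξ p.1 / weight ξ p.1) := by
    simp only [weight, flatRef, component, Finset.mul_sum, Finset.sum_div]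
  rw [typeOf, hnum, hweight, mul_div_mul_left _ _ hp]
  by_cases hw : weight ξ p.1 = 0
  · simp [typeOf, hw]
  · rw [div_self hw, div_one, typeOf]

lemma wl1_typeOf_flatRef [Fintype A] [Fintype B] (η : A × B → ℝ) (t : A × B → ℝ) (i : Fin n) :
    wl1 η t (typeOf (flatRef ξ η) i) = ∑ p, η p * |t p - typeOf ξ i p.1| := by
  rw [wl1, finsum_eq_sum_of_fintype]
  refine Finset.sum_congr rfl fun p _ => ?_
  by_cases hp : η p = 0
  · simp [hp]
  · rw [typeOf_flatRef η hp]

section Refinement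

variable [Fintype B] {ξ' : (Fin n → Bool) × (A × B) → ℝ}

lemma sum_weight_of_refines (href : ∀ x a, ∑ b : B, ξ' (x, (a, b)) = ξ (x, a)) (a : A) :
    ∑ b, weight ξ' (a, b) = weight ξ a := by
  simp only [weight]
  rw [Finset.sum_comm]
  exact Finset.sum_congr rfl fun x _ => href x a

lemma sum_weight_mul_typeOf_of_refines (href : ∀ x a, ∑ b : B, ξ' (x, (a, b)) = ξ (x, a))
    (hξ' : ∀ y, 0 ≤ ξ' y) (i : Fin n) (a : A) :
    ∑ b, weight ξ' (a, b) * typeOf ξ' i (a, b) = weight ξ a * typeOf ξ i a := by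
  have hξ : ∀ y, 0 ≤ ξ y := fun y => href y.1 y.2 ▸ Finset.sum_nonneg fun b _ => hξ' _
  simp only [weight_mul_typeOf hξ', weight_mul_typeOf hξ]
  rw [Finset.sum_comm]
  refine Finset.sum_congr rfl fun x _ => ?_
  split_ifs
  · exact href x a
  · simp

lemma sum_weight_mul_sub_sq_of_refines (href : ∀ x a, ∑ b : B, ξ' (x, (a, b)) = ξ (x, a))
    (hξ' : ∀ y, 0 ≤ ξ' y) (i : Fin n) (a : A) :
    ∑ b, weight ξ' (a, b) * (typeOf ξ' i (a, b) - typeOf ξ i a) ^ 2 =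
      ∑ b, weight ξ' (a, b) * typeOf ξ' i (a, b) ^ 2 - weight ξ a * typeOf ξ i a ^ 2 := by
  have hexpand : ∀ b, weight ξ' (a, b) * (typeOf ξ' i (a, b) - typeOf ξ i a) ^ 2 =
      weight ξ' (a, b) * typeOf ξ' i (a, b) ^ 2 -
        2 * typeOf ξ i a * (weight ξ' (a, b) * typeOf ξ' i (a, b)) +
        typeOf ξ i a ^ 2 * weight ξ' (a, b) := fun b => by ring
  simp only [hexpand, Finset.sum_add_distrib, Finset.sum_sub_distrib, ← Finset.mul_sum,
    sum_weight_mul_typeOf_of_refines href hξ', sum_weight_of_refines href]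
  ring

lemma ind_sub_ind_eq_of_refines [Fintype A] (href : ∀ x a, ∑ b : B, ξ' (x, (a, b)) = ξ (x, a))
    (hξ' : ∀ y, 0 ≤ ξ' y) :
    ind ξ' - ind ξ = ∑ q : Fin n × (A × B),
      weight ξ' q.2 / n * (typeOf ξ' q.1 q.2 - typeOf ξ q.1 q.2.1) ^ 2 := by
  simp only [ind, ← sub_div, ← Finset.sum_sub_distrib,
    Fintype.sum_prod_type (f := fun p : A × B => _), ← sum_weight_mul_sub_sq_of_refines href hξ']
  simp only [Fintype.sum_prod_type, Finset.sum_div, div_mul_eq_mul_div]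

end Refinement

end Detailing

end HugeObject

theorem refinement_type_dist_close_general {A B : Type*} [Fintype A] [Fintype B]
    (n : ℕ) (hn : 0 < n) (δ : ℝ)
    (μ : (Fin n → Bool) → ℝ)
    (ξ : (Fin n → Bool) × A → ℝ)
    (ξ' : (Fin n → Bool) × (A × B) → ℝ) (hξ' : IsDetailing ξ' μ)
    (href : ∀ x a, ∑ b : B, ξ' (x, (a, b)) = ξ (x, a))
    (hind : ind ξ' - ind ξ ≤ δ) :
    dEM (wl1 (weight ξ')) (typeDist ξ') (typeDist (flatRef ξ (weight ξ'))) ≤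
      Real.sqrt δ := by
  have hw : ∀ p, 0 ≤ weight ξ' p := weight_nonneg hξ'.1.1
  have hw1 : ∑ q : Fin n × (A × B), weight ξ' q.2 / n = 1 := by
    simp only [Fintype.sum_prod_type, ← Finset.sum_div,
      sum_weight hξ'.1, Finset.sum_const, Finset.card_univ, Fintype.card_fin, nsmul_eq_mul]
    field_simp
  calc dEM (wl1 (weight ξ')) (typeDist ξ') (typeDist (flatRef ξ (weight ξ')))
      ≤ (∑ i, wl1 (weight ξ') (typeOf ξ' i) (typeOf (flatRef ξ (weight ξ')) i)) / n :=
        dEM_empDist_le hn (wl1_nonneg hw) _ _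
    _ = ∑ q : Fin n × (A × B), weight ξ' q.2 / n * |typeOf ξ' q.1 q.2 - typeOf ξ q.1 q.2.1| := by
        simp only [wl1_typeOf_flatRef, Fintype.sum_prod_type, Finset.sum_div, div_mul_eq_mul_div]
    _ ≤ √(∑ q : Fin n × (A × B),
          weight ξ' q.2 / n * (typeOf ξ' q.1 q.2 - typeOf ξ q.1 q.2.1) ^ 2) :=
        Finset.sum_mul_abs_le_sqrt_sum_mul_sq _ (fun q _ => div_nonneg (hw _) n.cast_nonneg) hw1
    _ = √(ind ξ' - ind ξ) := by rw [ind_sub_ind_eq_of_refines href hξ'.1.1]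
    _ ≤ √δ := Real.sqrt_le_sqrt hind

/-- if the refinement ξ' of ξ increases the index by at most δ,
then the type distribution of ξ' and the type distribution of the flat
refinement of ξ (with respect to the weight distribution of ξ') are √δ-close in
the weighted Earth Mover distance. -/
theorem refinement_type_dist_close {A B : Type*} [Fintype A] [Fintype B]
    (n : ℕ) (hn : 0 < n) (δ : ℝ) (hδ : δ ∈ Set.Ioo (0 : ℝ) 1)
    (μ : (Fin n → Bool) → ℝ) (hμ : IsDist μ)
    (ξ : (Fin n → Bool) × A → ℝ) (hξ : IsDetailing ξ μ)
    (ξ' : (Fin n → Bool) × (A × B) → ℝ) (hξ' : IsDetailing ξ' μ)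
    (href : ∀ x a, ∑ b : B, ξ' (x, (a, b)) = ξ (x, a))
    (hind : ind ξ' - ind ξ ≤ δ) :
    dEM (wl1 (weight ξ')) (typeDist ξ') (typeDist (flatRef ξ (weight ξ'))) ≤
      Real.sqrt δ :=
  refinement_type_dist_close_general n hn δ μ ξ ξ' hξ' href hind
end
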